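/- arXiv:1501.02028 — 9 statements merged into one kernel-verified Lean document; each statement's English description precedes it below -/
import Mathlib

section
/- Let n = 2m ≥ 6 be even and let 𝔫 be a real n-dimensional Lie algebra with a basis Y_1, ..., Y_n satisfying [Y_1, Y_i] = Y_{i+1} for 2 ≤ i ≤ n−1, [Y_i, Y_j] = K_{ij} Y_n for 2 ≤ i, j ≤ n−1, and [Y_i, Y_n] = 0 for all i, where K = (K_{ij})_{2 ≤ i,j ≤ n−1} is a nonsingular skew-symmetric real matrix. Then 𝔫 is isomorphic (as a real Lie algebra) to Q_n. -/
noncomputable section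

open scoped BigOperators RealInnerProductSpace

/-- `e 1, …, e n` is a basis of `V` over `K`. -/
def IsBasisSeq (K : Type*) [Field K] (n : ℕ) {V : Type*} [AddCommGroup V] [Module K V]
    (e : ℕ → V) : Prop :=
  ∃ b : Module.Basis (Fin n) K V, ∀ i : Fin n, e ((i : ℕ) + 1) = b i

/-- `e 1, …, e n` is a basis of `V` realizing the structure relations of the filiform
Lie algebra `Q_n`. -/
def IsQnBasis (K : Type*) [Field K] (n : ℕ) {V : Type*} [LieRing V] [Module K V]
    (e : ℕ → V) : Prop :=
  IsBasisSeq K n e ∧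
  (∀ i, 2 ≤ i → i ≤ n - 2 → ⁅e 1, e i⁆ = e (i + 1)) ∧
  (∀ j, 2 ≤ j → j ≤ n - 1 → ⁅e j, e (n - j + 1)⁆ = ((-1 : K) ^ (j + 1)) • e n) ∧
  (∀ i j, 1 ≤ i → i < j → j ≤ n → ¬(i = 1 ∧ j ≤ n - 2) → ¬(i + j = n + 1 ∧ 2 ≤ i) →
    ⁅e i, e j⁆ = 0)

/-- `e 1, …, e n` is a basis of `V` realizing the structure relations of the filiform
Lie algebra `L_n`. -/
def IsLnBasis (K : Type*) [Field K] (n : ℕ) {V : Type*} [LieRing V] [Module K V]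
    (e : ℕ → V) : Prop :=
  IsBasisSeq K n e ∧
  (∀ i, 2 ≤ i → i ≤ n - 1 → ⁅e 1, e i⁆ = e (i + 1)) ∧
  (∀ i j, 1 ≤ i → i < j → j ≤ n → ¬(i = 1 ∧ j ≤ n - 1) → ⁅e i, e j⁆ = 0)

/-- `nr` is the nilradical (the maximal nilpotent ideal) of the Lie algebra `g`. -/
def IsNilradical (g : Type*) [LieRing g] [LieAlgebra ℝ g] (nr : LieIdeal ℝ g) : Prop :=
  LieRing.IsNilpotent nr ∧ ∀ I : LieIdeal ℝ g, LieRing.IsNilpotent I → I ≤ nr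

/-- The Lie algebra `g` admits an inner product of negative Ricci curvature: there is a
positive definite symmetric bilinear form, an orthonormal basis `E`, and a mean curvature
vector `H` (defined by `⟨H, Z⟩ = Tr ad_Z`) such that the Ricci form
`ric(X) = −⟨[H,X],X⟩ − ½ B(X,X) − ½ Σ_i ‖[X,E_i]‖² + ¼ Σ_{i,j} ⟨[E_i,E_j],X⟩²`
is negative on every nonzero `X`. -/
def HasNegRicci (g : Type*) [LieRing g] [LieAlgebra ℝ g] : Prop :=
  ∃ ip : g →ₗ[ℝ] g →ₗ[ℝ] ℝ,
    (∀ x y, ip x y = ip y x) ∧ (∀ x, x ≠ 0 → 0 < ip x x) ∧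
    ∃ (N : ℕ) (E : Module.Basis (Fin N) ℝ g) (H : g),
      (∀ i j, ip (E i) (E j) = if i = j then (1 : ℝ) else 0) ∧
      (∀ Z : g, ip H Z = LinearMap.trace ℝ g (LieAlgebra.ad ℝ g Z)) ∧
      ∀ X : g, X ≠ 0 →
        - ip ⁅H, X⁆ X - (1 / 2) * killingForm ℝ g X X
          - (1 / 2) * ∑ i, ip ⁅X, E i⁆ ⁅X, E i⁆
          + (1 / 4) * ∑ i, ∑ j, (ip ⁅E i, E j⁆ X) ^ 2 < 0

namespace S4Aux

open Finset


def chainAux {L : Type*} [LieRing L] (x y : L) : ℕ → L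
  | 0 => y
  | k+1 => ⁅x, chainAux x y k⁆

lemma sum_range_two_mul (g : ℕ → ℝ) (N : ℕ) :
    ∑ a ∈ range (2*N), g a = ∑ p ∈ range N, (g (2*p) + g (2*p+1)) := by
  induction N with
  | zero => simp
  | succ N ih =>
    rw [show 2*(N+1) = (2*N+1)+1 from by ring, sum_range_succ, sum_range_succ,
      sum_range_succ, ← ih]
    ring_nf

lemma sum_even_aux (g : ℕ → ℝ) (M N : ℕ) (hM : M ≤ 2*N)
    (h0 : ∀ a, ¬ Even a → g a = 0) (hhi : ∀ a, M ≤ a → g a = 0) :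
    ∑ a ∈ range M, g a = ∑ p ∈ range N, g (2*p) := by
  have h1 : ∑ a ∈ range M, g a = ∑ a ∈ range (2*N), g a := by
    refine Finset.sum_subset (range_subset_range.mpr hM) ?_
    intro a _ ha
    exact hhi a (by simpa using ha)
  rw [h1, sum_range_two_mul]
  refine sum_congr rfl fun p _ => ?_
  have h2 : g (2*p+1) = 0 := h0 _ (by rintro ⟨r, hr⟩; omega)
  rw [h2, add_zero]

def TS (A : ℕ → ℝ) (n s : ℕ) (u : ℕ → ℝ) : ℝ :=
  ∑ p ∈ range n, ∑ q ∈ range n, u p * u q * A (s + 2*p + 2*q)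

lemma TS_update (A : ℕ → ℝ) (n s k : ℕ) (hk : k < n) (u : ℕ → ℝ) (hu : u k = 0) (x : ℝ) :
    TS A n s (Function.update u k x)
      = TS A n s u + x * (∑ q ∈ range n, u q * A (s + 2*k + 2*q))
        + x * (∑ p ∈ range n, u p * A (s + 2*p + 2*k)) + x * x * A (s + 2*k + 2*k) := by
  have hup : ∀ p, Function.update u k x p = u p + x * (if p = k then 1 else 0) := by
    intro p
    rcases eq_or_ne p k with rfl | h
    · simp [hu]
    · simp [Function.update_of_ne h, h]
  unfold TS
  have expand : ∀ p q : ℕ,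
      Function.update u k x p * Function.update u k x q * A (s+2*p+2*q)
      = u p * u q * A (s+2*p+2*q)
        + (if p = k then x * (u q * A (s+2*p+2*q)) else 0)
        + (if q = k then x * (u p * A (s+2*p+2*q)) else 0)
        + (if p = k then (if q = k then x * x * A (s+2*p+2*q) else 0) else 0) := by
    intro p q
    rw [hup, hup]
    by_cases hp : p = k <;> by_cases hq : q = k <;>
      simp only [hp, hq, if_pos rfl, if_neg, hu, if_true, if_false] <;>
      first
        | (subst hp; subst hq; simp [hu]; ring)
        | (simp [hp, hq, hu]; try ring)
  calc ∑ p ∈ range n, ∑ q ∈ range n,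
        Function.update u k x p * Function.update u k x q * A (s + 2*p + 2*q)
      = ∑ p ∈ range n, ∑ q ∈ range n, (u p * u q * A (s+2*p+2*q)
        + (if p = k then x * (u q * A (s+2*p+2*q)) else 0)
        + (if q = k then x * (u p * A (s+2*p+2*q)) else 0)
        + (if p = k then (if q = k then x * x * A (s+2*p+2*q) else 0) else 0)) := by
        exact sum_congr rfl fun p _ => sum_congr rfl fun q _ => expand p q
    _ = _ := by
        simp only [Finset.sum_add_distrib]
        have h2 : ∑ p ∈ range n, ∑ q ∈ range n, (if p = k then x * (u q * A (s+2*p+2*q)) else 0)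
            = x * (∑ q ∈ range n, u q * A (s + 2*k + 2*q)) := by
          have hh : ∀ p ∈ range n, ∑ q ∈ range n, (if p = k then x * (u q * A (s+2*p+2*q)) else 0)
              = if p = k then x * (∑ q ∈ range n, u q * A (s+2*p+2*q)) else 0 := by
            intro p _
            by_cases hp : p = k <;> simp [hp, Finset.mul_sum]
          rw [sum_congr rfl hh, Finset.sum_ite_eq' (range n) k]
          simp [mem_range.mpr hk]
        have h3 : ∑ p ∈ range n, ∑ q ∈ range n, (if q = k then x * (u p * A (s+2*p+2*q)) else 0)
            = x * (∑ p ∈ range n, u p * A (s + 2*p + 2*k)) := by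
          have hh : ∀ p ∈ range n, ∑ q ∈ range n, (if q = k then x * (u p * A (s+2*p+2*q)) else 0)
              = x * (u p * A (s+2*p+2*k)) := by
            intro p _
            rw [Finset.sum_ite_eq' (range n) k]
            simp [mem_range.mpr hk]
          rw [sum_congr rfl hh, Finset.mul_sum]
        have h4 : ∑ p ∈ range n, ∑ q ∈ range n,
            (if p = k then (if q = k then x * x * A (s+2*p+2*q) else 0) else 0)
            = x * x * A (s + 2*k + 2*k) := by
          have hh : ∀ p ∈ range n, ∑ q ∈ range n,
              (if p = k then (if q = k then x * x * A (s+2*p+2*q) else 0) else 0)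
              = (if p = k then x * x * A (s+2*p+2*k) else 0) := by
            intro p _
            by_cases hp : p = k <;> simp [hp, Finset.sum_ite_eq', mem_range.mpr hk]
          rw [sum_congr rfl hh, Finset.sum_ite_eq' (range n) k]
          simp [mem_range.mpr hk]
        rw [h2, h3, h4]


lemma u_exists (n m : ℕ) (hm : 3 ≤ m) (hn : n = 2*m) (A : ℕ → ℝ) (κ : ℝ) (hκ : κ ≠ 0)
    (hhi : ∀ s, n+1 < s → A s = 0) (htop : A (n+1) = κ) :
    ∃ u : ℕ → ℝ, u 0 = 1 ∧ ∀ j, 1 ≤ j → j ≤ m-2 → TS A n (n+1-2*j) u = 0 := by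
  suffices H : ∀ k, k ≤ m-2 → ∃ u : ℕ → ℝ, u 0 = 1 ∧ (∀ p, k+1 ≤ p → u p = 0) ∧
      ∀ j, 1 ≤ j → j ≤ k → TS A n (n+1-2*j) u = 0 by
    obtain ⟨u, h1, _, h3⟩ := H (m-2) le_rfl
    exact ⟨u, h1, h3⟩
  intro k
  induction k with
  | zero =>
    intro _
    refine ⟨fun p => if p = 0 then 1 else 0, by simp, fun p hp => by
      simp [show p ≠ 0 from by omega], fun j hj hj' => by omega⟩
  | succ k ih =>
    intro hk
    obtain ⟨u, hu1, hu2, hu3⟩ := ih (by omega)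
    set x := - TS A n (n+1-2*(k+1)) u / (2*κ) with hx
    refine ⟨Function.update u (k+1) x, ?_, ?_, ?_⟩
    · rw [Function.update_of_ne (by omega)]; exact hu1
    · intro p hp
      rcases eq_or_ne p (k+1) with rfl | hne
      · omega
      · rw [Function.update_of_ne hne]; exact hu2 p (by omega)
    · intro j hj hjk
      have hkm : k + 1 ≤ m - 2 := hk
      rw [TS_update A n _ (k+1) (by omega) u (hu2 _ le_rfl) x]
      rcases eq_or_lt_of_le hjk with rfl | hlt
      · -- j = k+1
        have harg : n+1-2*(k+1) + 2*(k+1) = n+1 := by omega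
        have e1 : ∑ q ∈ range n, u q * A (n+1-2*(k+1) + 2*(k+1) + 2*q) = κ := by
          simp only [harg]
          rw [Finset.sum_eq_single_of_mem 0 (mem_range.mpr (by omega))]
          · simp [hu1, htop]
          · intro q _ hq
            rw [hhi _ (by omega), mul_zero]
        have e2 : ∑ p ∈ range n, u p * A (n+1-2*(k+1) + 2*p + 2*(k+1)) = κ := by
          rw [Finset.sum_eq_single_of_mem 0 (mem_range.mpr (by omega))]
          · rw [show n+1-2*(k+1) + 2*0 + 2*(k+1) = n+1 from by omega, htop, hu1, one_mul]
          · intro p _ hp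
            rw [hhi _ (by omega), mul_zero]
        have e3 : A (n+1-2*(k+1) + 2*(k+1) + 2*(k+1)) = 0 := hhi _ (by omega)
        rw [e1, e2, e3, hx]
        field_simp
        ring
      · -- j ≤ k
        have hjk' : j ≤ k := by omega
        have e1 : ∑ q ∈ range n, u q * A (n+1-2*j + 2*(k+1) + 2*q) = 0 := by
          refine Finset.sum_eq_zero fun q _ => ?_
          rw [hhi _ (by omega), mul_zero]
        have e2 : ∑ p ∈ range n, u p * A (n+1-2*j + 2*p + 2*(k+1)) = 0 := by
          refine Finset.sum_eq_zero fun p _ => ?_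
          rw [hhi _ (by omega), mul_zero]
        have e3 : A (n+1-2*j + 2*(k+1) + 2*(k+1)) = 0 := hhi _ (by omega)
        rw [e1, e2, e3, hu3 j hj hjk']
        ring

def Pfun {V : Type*} [AddCommGroup V] [Module ℝ V] (Y : ℕ → V) (t : ℕ → ℝ) (n i : ℕ) : V :=
  ∑ a ∈ Finset.range (n - i), t (a+2) • Y (i+a)

variable {𝔫 : Type*} [LieRing 𝔫] [LieAlgebra ℝ 𝔫]

lemma lie_e1_P (Y : ℕ → 𝔫) (t : ℕ → ℝ) (K : ℕ → ℕ → ℝ) (n : ℕ) (c : ℝ)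
    (hrel1 : ∀ i, 2 ≤ i → i ≤ n - 1 → ⁅Y 1, Y i⁆ = Y (i + 1))
    (hrel2 : ∀ i j, 2 ≤ i → i ≤ n - 1 → 2 ≤ j → j ≤ n - 1 → ⁅Y i, Y j⁆ = K i j • Y n)
    (i : ℕ) (hi : 2 ≤ i) (hi' : i ≤ n-1) (hn : 2 ≤ n) :
    ⁅Y 1 + c • Y 2, Pfun Y t n i⁆
      = Pfun Y t n (i+1)
        + (t (n-i+1) + c * ∑ a ∈ range (n-i), t (a+2) * K 2 (i+a)) • Y n := by
  have step : ∀ a ∈ range (n-i), ⁅Y 1 + c • Y 2, t (a+2) • Y (i+a)⁆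
      = t (a+2) • Y (i+a+1) + (t (a+2) * (c * K 2 (i+a))) • Y n := by
    intro a ha
    have ha' : a < n - i := mem_range.mp ha
    rw [lie_smul, add_lie, smul_lie, hrel1 (i+a) (by omega) (by omega),
      hrel2 2 (i+a) (by omega) (by omega) (by omega) (by omega)]
    module
  have hls : ∀ (z : 𝔫) (N : ℕ) (f : ℕ → 𝔫), ⁅z, ∑ a ∈ range N, f a⁆ = ∑ a ∈ range N, ⁅z, f a⁆ := by
    intro z N f
    induction N with
    | zero => simp
    | succ N ih => rw [sum_range_succ, lie_add, ih, sum_range_succ]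
  rw [Pfun, hls, sum_congr rfl step, Finset.sum_add_distrib]
  have h1 : ∑ a ∈ range (n-i), t (a+2) • Y (i+a+1)
      = Pfun Y t n (i+1) + t (n-i+1) • Y n := by
    rw [show n - i = (n-(i+1)) + 1 from by omega, sum_range_succ, Pfun]
    congr 1
    · refine sum_congr rfl fun a ha => ?_
      congr 2
      omega
    · rw [show i + (n-(i+1)) + 1 = n from by omega, show n-(i+1)+2 = n-i+1 from by omega]
  have h2 : ∑ a ∈ range (n-i), (t (a+2) * (c * K 2 (i+a))) • Y n
      = (c * ∑ a ∈ range (n-i), t (a+2) * K 2 (i+a)) • Y n := by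
    rw [← Finset.sum_smul, Finset.mul_sum]
    congr 1
    exact sum_congr rfl fun a _ => by ring
  rw [h1, h2, add_smul]
  abel

lemma lie_P_P (Y : ℕ → 𝔫) (t : ℕ → ℝ) (K : ℕ → ℕ → ℝ) (n : ℕ)
    (hrel2 : ∀ i j, 2 ≤ i → i ≤ n - 1 → 2 ≤ j → j ≤ n - 1 → ⁅Y i, Y j⁆ = K i j • Y n)
    (i j : ℕ) (hi : 2 ≤ i) (hi' : i ≤ n-1) (hj : 2 ≤ j) (hj' : j ≤ n-1) :
    ⁅Pfun Y t n i, Pfun Y t n j⁆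
      = (∑ a ∈ range (n-i), ∑ b ∈ range (n-j), t (a+2) * t (b+2) * K (i+a) (j+b)) • Y n := by
  have hsl : ∀ (z : 𝔫) (N : ℕ) (f : ℕ → 𝔫), ⁅∑ a ∈ range N, f a, z⁆ = ∑ a ∈ range N, ⁅f a, z⁆ := by
    intro z N f
    induction N with
    | zero => simp
    | succ N ih => rw [sum_range_succ, add_lie, ih, sum_range_succ]
  have hls : ∀ (z : 𝔫) (N : ℕ) (f : ℕ → 𝔫), ⁅z, ∑ a ∈ range N, f a⁆ = ∑ a ∈ range N, ⁅z, f a⁆ := by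
    intro z N f
    induction N with
    | zero => simp
    | succ N ih => rw [sum_range_succ, lie_add, ih, sum_range_succ]
  rw [Pfun, Pfun, hsl, Finset.sum_smul]
  refine sum_congr rfl fun a ha => ?_
  rw [hls, Finset.sum_smul]
  refine sum_congr rfl fun b hb => ?_
  have ha' : a < n - i := mem_range.mp ha
  have hb' : b < n - j := mem_range.mp hb
  rw [smul_lie, lie_smul, hrel2 (i+a) (j+b) (by omega) (by omega) (by omega) (by omega)]
  module

end S4Aux


/-- **Lemma 2(1).** Let `n = 2m ≥ 6` and let `𝔫` be a real `n`-dimensional Lie algebra with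
a basis `Y 1, …, Y n` satisfying `[Y_1, Y_i] = Y_{i+1}` for `2 ≤ i ≤ n−1`,
`[Y_i, Y_j] = K_{ij} Y_n` for `2 ≤ i, j ≤ n−1` and `[Y_i, Y_n] = 0` for all `i`, where
`K = (K_{ij})_{2 ≤ i,j ≤ n−1}` is a nonsingular skew-symmetric real matrix. Then `𝔫` is
isomorphic to `Q_n`, i.e. `𝔫` has a basis realizing the `Q_n` relations. -/
theorem statement4 (m n : ℕ) (hm : 3 ≤ m) (hn : n = 2 * m)
    (𝔫 : Type) [LieRing 𝔫] [LieAlgebra ℝ 𝔫]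
    (Y : ℕ → 𝔫) (hbasis : IsBasisSeq ℝ n Y)
    (K : ℕ → ℕ → ℝ)
    (hskew : ∀ i j, 2 ≤ i → i ≤ n - 1 → 2 ≤ j → j ≤ n - 1 → K i j = - K j i)
    (hnonsing : (Matrix.of fun a b : Fin (n - 2) => K ((a : ℕ) + 2) ((b : ℕ) + 2)).det ≠ 0)
    (hrel1 : ∀ i, 2 ≤ i → i ≤ n - 1 → ⁅Y 1, Y i⁆ = Y (i + 1))
    (hrel2 : ∀ i j, 2 ≤ i → i ≤ n - 1 → 2 ≤ j → j ≤ n - 1 → ⁅Y i, Y j⁆ = K i j • Y n)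
    (hrel3 : ∀ i, 1 ≤ i → i ≤ n → ⁅Y i, Y n⁆ = 0) :
    ∃ e : ℕ → 𝔫, IsQnBasis ℝ n e := by
  classical
  obtain ⟨b, hb⟩ := hbasis
  have hn6 : 6 ≤ n := by omega
  -- Y n is central
  have hYnb : Y n = b ⟨n-1, by omega⟩ := by
    have := hb ⟨n-1, by omega⟩
    rwa [show (((⟨n-1, by omega⟩ : Fin n) : ℕ) + 1) = n from by simp; omega] at this
  have hYn0 : Y n ≠ 0 := by rw [hYnb]; exact b.ne_zero _
  have hsc : ∀ r : ℝ, r • Y n = 0 → r = 0 := by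
    intro r hr
    rcases smul_eq_zero.mp hr with h | h
    · exact h
    · exact absurd h hYn0
  have hcenl : ∀ x : 𝔫, ⁅Y n, x⁆ = 0 := by
    have had : LieAlgebra.ad ℝ 𝔫 (Y n) = 0 := by
      apply b.ext
      intro i
      have h1 : ⁅Y ((i:ℕ)+1), Y n⁆ = 0 := hrel3 _ (by omega) (by omega)
      have h2 : ⁅Y n, Y ((i:ℕ)+1)⁆ = 0 := by
        rw [← lie_skew, h1, neg_zero]
      rw [LieAlgebra.ad_apply, LinearMap.zero_apply, ← hb i]
      exact h2
    intro x
    have := LinearMap.congr_fun had x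
    rwa [LieAlgebra.ad_apply, LinearMap.zero_apply] at this
  have hcen : ∀ x : 𝔫, ⁅x, Y n⁆ = 0 := by
    intro x
    rw [← lie_skew, hcenl, neg_zero]
  -- Jacobi identities
  have hJ : ∀ i j, 2 ≤ i → i ≤ n-2 → 2 ≤ j → j ≤ n-2 → K (i+1) j + K i (j+1) = 0 := by
    intro i j hi hi' hj hj'
    have h := leibniz_lie (Y 1) (Y i) (Y j)
    rw [hrel2 i j (by omega) (by omega) (by omega) (by omega), lie_smul, hcen,
      hrel1 i (by omega) (by omega), hrel1 j (by omega) (by omega),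
      hrel2 (i+1) j (by omega) (by omega) (by omega) (by omega),
      hrel2 i (j+1) (by omega) (by omega) (by omega) (by omega), ← add_smul, smul_zero] at h
    exact hsc _ h.symm
  have hlast : ∀ k, 3 ≤ k → k ≤ n-1 → K (n-1) k = 0 := by
    intro k hk hk'
    have h := leibniz_lie (Y 1) (Y (n-1)) (Y (k-1))
    rw [hrel2 (n-1) (k-1) (by omega) (by omega) (by omega) (by omega), lie_smul, hcen,
      hrel1 (n-1) (by omega) (by omega), hrel1 (k-1) (by omega) (by omega),
      show n-1+1 = n from by omega, show k-1+1 = k from by omega, hcenl,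
      hrel2 (n-1) k (by omega) (by omega) (by omega) (by omega), zero_add, smul_zero] at h
    exact hsc _ h.symm
  have hup : ∀ i, 2 ≤ i → ∀ j, 2 ≤ j → i ≤ n-1 → j ≤ n-1 → i+j ≤ n+1 →
      K i j = (-1:ℝ)^(i-2) * K 2 (i+j-2) := by
    intro i hi
    induction i, hi using Nat.le_induction with
    | base => intro j hj _ _ _; simp
    | succ i hi ih =>
      intro j hj hi' hj' hij
      have h1 := hJ i j (by omega) (by omega) (by omega) (by omega)
      have h2 : K (i+1) j = - K i (j+1) := by linarith
      rw [h2, ih (j+1) (by omega) (by omega) (by omega) (by omega)]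
      rw [show i+(j+1)-2 = (i+1)+j-2 from by omega, show i+1-2 = (i-2)+1 from by omega,
        pow_succ]
      ring
  have hzero : ∀ k i j, 2 ≤ i → i ≤ n-1 → 2 ≤ j → j ≤ n-1 → n+2 ≤ i+j → n-1-k = i →
      K i j = 0 := by
    intro k
    induction k with
    | zero =>
      intro i j hi hi' hj hj' hij hik
      have : i = n-1 := by omega
      subst this
      exact hlast j (by omega) hj'
    | succ k ih =>
      intro i j hi hi' hj hj' hij hik
      rcases eq_or_ne i (n-1) with h | h
      · subst h; exact hlast j (by omega) hj'
      · have hi2 : i ≤ n-2 := by omega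
        have h1 := hJ i (j-1) (by omega) (by omega) (by omega) (by omega)
        rw [show j-1+1 = j from by omega] at h1
        have h2 := ih (i+1) (j-1) (by omega) (by omega) (by omega) (by omega)
          (by omega) (by omega)
        rw [h2, zero_add] at h1
        exact h1
  -- The anti-diagonal function A
  set A : ℕ → ℝ := fun s => if 4 ≤ s ∧ s ≤ n+1 ∧ ¬ Even s then K 2 (s-2) else 0 with hA
  have hAhigh : ∀ s, n+1 < s → A s = 0 := by
    intro s hs
    rw [hA]
    simp only
    rw [if_neg]
    rintro ⟨_, h2, _⟩
    omega
  have hAeven : ∀ s, Even s → A s = 0 := by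
    intro s hs
    rw [hA]
    simp only
    rw [if_neg]
    rintro ⟨_, _, h3⟩
    exact h3 hs
  have hAtop : A (n+1) = K 2 (n-1) := by
    rw [hA]
    simp only
    rw [if_pos ⟨by omega, le_rfl, by rintro ⟨r, hr⟩; omega⟩, show n+1-2 = n-1 from by omega]
  have heven : ∀ j, 2 ≤ j → j ≤ n-1 → Even j → K 2 j = 0 := by
    intro j hj hj' hje
    obtain ⟨r, hr⟩ := hje
    have hr2 : 1 ≤ r := by omega
    have hpp : K (r+1) (r+1) = 0 := by
      have := hskew (r+1) (r+1) (by omega) (by omega) (by omega) (by omega)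
      linarith
    have := hup (r+1) (by omega) (r+1) (by omega) (by omega) (by omega) (by omega)
    rw [hpp, show (r+1)+(r+1)-2 = j from by omega] at this
    have hne : ((-1:ℝ))^(r+1-2) ≠ 0 := pow_ne_zero _ (by norm_num)
    rcases mul_eq_zero.mp this.symm with h | h
    · exact absurd h hne
    · exact h
  have hK : ∀ i j, 2 ≤ i → i ≤ n-1 → 2 ≤ j → j ≤ n-1 → K i j = (-1:ℝ)^i * A (i+j) := by
    intro i j hi hi' hj hj'
    by_cases hs : i + j ≤ n+1
    · rw [hup i hi j hj hi' hj' hs]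
      have h2 : A (i+j) = K 2 (i+j-2) := by
        by_cases he : Even (i+j)
        · rw [hAeven _ he, heven (i+j-2) (by omega) (by omega)
            (by obtain ⟨r, hr⟩ := he; exact ⟨r-1, by omega⟩)]
        · rw [hA]
          simp only
          rw [if_pos ⟨by omega, by omega, he⟩]
      rw [h2]
      have hpow : (-1:ℝ)^i = (-1:ℝ)^(i-2) := by
        conv_lhs => rw [show i = (i-2)+2 from by omega]
        rw [pow_add]
        norm_num
      rw [hpow]
    · rw [hzero (n-1-i) i j hi hi' hj hj' (by omega) (by omega), hAhigh _ (by omega)]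
      ring
  -- κ ≠ 0
  set κ : ℝ := K 2 (n-1) with hκdef
  have hκ : κ ≠ 0 := by
    intro h0
    apply hnonsing
    apply Matrix.det_eq_zero_of_row_eq_zero ⟨n-3, by omega⟩
    intro bi
    show K (n-3+2) ((bi:ℕ)+2) = 0
    rw [show n-3+2 = n-1 from by omega]
    rcases Nat.eq_zero_or_pos (bi:ℕ) with h | h
    · rw [h]
      have h2 := hskew (n-1) 2 (by omega) (by omega) (by omega) (by omega)
      rw [show (0:ℕ)+2 = 2 from rfl, h2, ← hκdef, h0, neg_zero]
    · have hbi : (bi:ℕ) ≤ n-3 := by omega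
      exact hlast ((bi:ℕ)+2) (by omega) (by omega)
  have hAtopκ : A (n+1) = κ := hAtop
  -- choose u
  obtain ⟨u, hu0, humid⟩ := S4Aux.u_exists n m hm hn A κ hκ hAhigh hAtopκ
  -- the coefficients t
  set t : ℕ → ℝ := fun k => if Even k then u ((k-2)/2) else 0 with ht
  have ht2 : t 2 = 1 := by rw [ht]; simp [hu0]
  have htodd : ∀ a, ¬ Even a → t (a+2) = 0 := by
    intro a ha
    rw [ht]
    simp only
    rw [if_neg]
    simpa [Nat.even_add] using ha
  have hteven : ∀ p, t (2*p+2) = u p := by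
    intro p
    rw [ht]
    simp only
    rw [if_pos ⟨p+1, by ring⟩, show 2*p+2-2 = 2*p from by omega,
      Nat.mul_div_cancel_left p (by norm_num)]
  -- TS facts
  have hTeven : ∀ s, Even s → S4Aux.TS A n s u = 0 := by
    intro s hs
    refine Finset.sum_eq_zero fun p _ => Finset.sum_eq_zero fun q _ => ?_
    rw [hAeven _ (by obtain ⟨r, hr⟩ := hs; exact ⟨r+p+q, by omega⟩), mul_zero]
  have hThigh : ∀ s, n+1 < s → S4Aux.TS A n s u = 0 := by
    intro s hs
    refine Finset.sum_eq_zero fun p _ => Finset.sum_eq_zero fun q _ => ?_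
    rw [hAhigh _ (by omega), mul_zero]
  have hTtop : S4Aux.TS A n (n+1) u = κ := by
    unfold S4Aux.TS
    rw [Finset.sum_eq_single_of_mem 0 (Finset.mem_range.mpr (by omega))]
    · rw [Finset.sum_eq_single_of_mem 0 (Finset.mem_range.mpr (by omega))]
      · rw [show n+1+2*0+2*0 = n+1 from by omega, hAtopκ, hu0, one_mul, one_mul]
      · intro q _ hq
        rw [hAhigh _ (by omega), mul_zero]
    · intro p _ hp
      refine Finset.sum_eq_zero fun q _ => ?_
      rw [hAhigh _ (by omega), mul_zero]
  have hTmid : ∀ s, ¬ Even s → 5 ≤ s → s ≤ n-1 → S4Aux.TS A n s u = 0 := by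
    intro s hsodd h5 hs
    have hs2 : s % 2 = 1 := Nat.odd_iff.mp (Nat.not_even_iff_odd.mp hsodd)
    have hj : n+1-2*((n+1-s)/2) = s ∧ 1 ≤ (n+1-s)/2 ∧ (n+1-s)/2 ≤ m-2 := by omega
    rw [← hj.1]
    exact humid _ hj.2.1 hj.2.2
  -- the new basis elements
  set c : ℝ := -κ⁻¹ with hc
  set e1 : 𝔫 := Y 1 + c • Y 2 with he1
  set P : ℕ → 𝔫 := S4Aux.Pfun Y t n with hP
  set e2 : 𝔫 := P 2 with he2
  set en : 𝔫 := (-κ) • Y n with hen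
  set e : ℕ → 𝔫 := fun i => if i = 1 then e1 else if i = n then en else
    S4Aux.chainAux e1 e2 (i-2) with he
  -- chain formula
  have hchain : ∀ k, k ≤ n-3 → ∃ γ : ℝ, S4Aux.chainAux e1 e2 k = P (k+2) + γ • Y n := by
    intro k
    induction k with
    | zero => exact fun _ => ⟨0, by simp [S4Aux.chainAux, he2]⟩
    | succ k ih =>
      intro hk
      obtain ⟨γ, hγ⟩ := ih (by omega)
      have hstep : S4Aux.chainAux e1 e2 (k+1) = ⁅e1, S4Aux.chainAux e1 e2 k⁆ := rfl
      refine ⟨t (n-(k+2)+1) + c * ∑ a ∈ Finset.range (n-(k+2)), t (a+2) * K 2 (k+2+a), ?_⟩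
      rw [hstep, hγ, lie_add, lie_smul, hcen, smul_zero, add_zero, he1, hP,
        S4Aux.lie_e1_P Y t K n c hrel1 hrel2 (k+2) (by omega) (by omega) (by omega),
        show k+2+1 = k+1+2 from by omega]
  -- evaluation of e
  have hev1 : e 1 = e1 := by simp [he]
  have hevn : e n = en := by simp [he, show ¬ n = 1 from by omega]
  have hevm : ∀ i, 2 ≤ i → i ≤ n-1 → e i = S4Aux.chainAux e1 e2 (i-2) := by
    intro i h1 h2
    simp [he, show ¬ i = 1 from by omega, show ¬ i = n from by omega]
  have heP : ∀ i, ∃ γ : ℝ, 2 ≤ i → i ≤ n-1 → e i = P i + γ • Y n := by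
    intro i
    by_cases hi : 2 ≤ i ∧ i ≤ n-1
    · obtain ⟨γ, hγ⟩ := hchain (i-2) (by omega)
      refine ⟨γ, fun _ _ => ?_⟩
      rw [hevm i hi.1 hi.2, hγ, show i-2+2 = i from by omega]
    · exact ⟨0, fun h1 h2 => absurd ⟨h1, h2⟩ hi⟩
  choose Γ hΓ using heP
  -- scalar identity
  have hscal : ∀ i j, 2 ≤ i → i ≤ n-1 → 2 ≤ j → j ≤ n-1 →
      ∑ a ∈ Finset.range (n-i), ∑ b ∈ Finset.range (n-j), t (a+2) * t (b+2) * K (i+a) (j+b)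
      = (-1:ℝ)^i * S4Aux.TS A n (i+j) u := by
    intro i j hi hi' hj hj'
    have step1 : ∀ a ∈ Finset.range (n-i), ∑ b ∈ Finset.range (n-j),
        t (a+2) * t (b+2) * K (i+a) (j+b)
        = ∑ q ∈ Finset.range n, t (a+2) * t (2*q+2) * ((-1:ℝ)^(i+a) * A (i+j+a+2*q)) := by
      intro a ha
      have ha' : a < n-i := Finset.mem_range.mp ha
      have e1' : ∀ b ∈ Finset.range (n-j), t (a+2) * t (b+2) * K (i+a) (j+b)
          = t (a+2) * t (b+2) * ((-1:ℝ)^(i+a) * A (i+j+a+b)) := by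
        intro b hb
        have hb' : b < n-j := Finset.mem_range.mp hb
        rw [hK (i+a) (j+b) (by omega) (by omega) (by omega) (by omega),
          show (i+a)+(j+b) = i+j+a+b from by omega]
      rw [Finset.sum_congr rfl e1']
      exact S4Aux.sum_even_aux _ (n-j) n (by omega)
        (fun b hb => by rw [htodd b hb]; ring)
        (fun b hb => by rw [hAhigh (i+j+a+b) (by omega)]; ring)
    rw [Finset.sum_congr rfl step1]
    have step2 : ∑ a ∈ Finset.range (n-i), (∑ q ∈ Finset.range n,
        t (a+2) * t (2*q+2) * ((-1:ℝ)^(i+a) * A (i+j+a+2*q)))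
        = ∑ p ∈ Finset.range n, ∑ q ∈ Finset.range n,
          t (2*p+2) * t (2*q+2) * ((-1:ℝ)^(i+2*p) * A (i+j+2*p+2*q)) := by
      exact S4Aux.sum_even_aux _ (n-i) n (by omega)
        (fun a ha => Finset.sum_eq_zero fun q _ => by rw [htodd a ha]; ring)
        (fun a ha => Finset.sum_eq_zero fun q _ => by
          rw [hAhigh (i+j+a+2*q) (by omega)]; ring)
    rw [step2]
    unfold S4Aux.TS
    rw [Finset.mul_sum]
    refine Finset.sum_congr rfl fun p _ => ?_
    rw [Finset.mul_sum]
    refine Finset.sum_congr rfl fun q _ => ?_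
    have hpow : (-1:ℝ)^(i+2*p) = (-1:ℝ)^i := by
      rw [pow_add, pow_mul]
      norm_num
    rw [hteven, hteven, hpow]
    ring
  -- brackets of e's
  have hbr : ∀ i j, 2 ≤ i → i ≤ n-1 → 2 ≤ j → j ≤ n-1 →
      ⁅e i, e j⁆ = ((-1:ℝ)^i * S4Aux.TS A n (i+j) u) • Y n := by
    intro i j hi hi' hj hj'
    rw [hΓ i hi hi', hΓ j hj hj']
    have h1 : ⁅P i + Γ i • Y n, P j + Γ j • Y n⁆ = ⁅P i, P j⁆ := by
      simp [add_lie, lie_add, lie_smul, smul_lie, hcen, hcenl]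
    rw [h1, hP, S4Aux.lie_P_P Y t K n hrel2 i j hi hi' hj hj',
      hscal i j hi hi' hj hj']
  -- the chain relation
  have hrelA : ∀ i, 2 ≤ i → i ≤ n-2 → ⁅e 1, e i⁆ = e (i+1) := by
    intro i hi hi'
    rw [hev1, hevm i hi (by omega), hevm (i+1) (by omega) (by omega),
      show i+1-2 = (i-2)+1 from by omega]
    rfl
  -- [e1, e_{n-1}] = 0
  have hrelB : ⁅e 1, e (n-1)⁆ = 0 := by
    rw [hev1, hΓ (n-1) (by omega) (by omega), lie_add, lie_smul, hcen, smul_zero,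
      add_zero, he1, hP,
      S4Aux.lie_e1_P Y t K n c hrel1 hrel2 (n-1) (by omega) (by omega) (by omega)]
    have hP0 : S4Aux.Pfun Y t n (n-1+1) = 0 := by
      rw [S4Aux.Pfun, show n - (n-1+1) = 0 from by omega]
      simp
    have h9 : n - (n-1) = 1 := by omega
    rw [hP0, zero_add, h9, Finset.sum_range_one]
    rw [show (1:ℕ)+1 = 2 from rfl, ht2, show n-1+0 = n-1 from by omega, ← hκdef,
      one_mul, hc]
    rw [show (1:ℝ) + -κ⁻¹ * κ = 0 from by field_simp; norm_num]
    exact zero_smul ℝ _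
  have hbrn : ∀ x : 𝔫, ⁅x, e n⁆ = 0 := by
    intro x
    rw [hevn, hen, lie_smul, hcen, smul_zero]
  -- antidiagonal relation
  have hrelC : ∀ j, 2 ≤ j → j ≤ n-1 → ⁅e j, e (n-j+1)⁆ = ((-1:ℝ)^(j+1)) • e n := by
    intro j hj hj'
    rw [hbr j (n-j+1) hj hj' (by omega) (by omega), show j + (n-j+1) = n+1 from by omega,
      hTtop, hevn, hen, smul_smul]
    congr 1
    rw [pow_succ]
    ring
  -- vanishing relations
  have hrelD : ∀ i j, 1 ≤ i → i < j → j ≤ n → ¬(i = 1 ∧ j ≤ n - 2) →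
      ¬(i + j = n + 1 ∧ 2 ≤ i) → ⁅e i, e j⁆ = 0 := by
    intro i j h1 h2 h3 h4 h5
    rcases eq_or_ne j n with rfl | hjn
    · exact hbrn _
    · have hj' : j ≤ n-1 := by omega
      rcases eq_or_ne i 1 with rfl | hi1
      · have hj2 : j = n-1 := by omega
        rw [hj2]
        exact hrelB
      · have hi2 : 2 ≤ i := by omega
        have hij : i + j ≠ n+1 := fun hh => h5 ⟨hh, hi2⟩
        rw [hbr i j hi2 (by omega) (by omega) hj']
        have hT : S4Aux.TS A n (i+j) u = 0 := by
          by_cases hpar : Even (i+j)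
          · exact hTeven _ hpar
          · rcases lt_or_ge (n+1) (i+j) with hgt | hle
            · exact hThigh _ hgt
            · have hmod : (i+j) % 2 = 1 :=
                Nat.odd_iff.mp (Nat.not_even_iff_odd.mp hpar)
              have hnmod : n % 2 = 0 := by omega
              exact hTmid _ hpar (by omega) (by omega)
        rw [hT, mul_zero, zero_smul]
  -- the basis property
  have hbasis' : IsBasisSeq ℝ n e := by
    set coef : ℕ → ℕ → ℝ := fun k l =>
      if k = 0 then (if l = 0 then 1 else if l = 1 then c else 0)
      else if k = n-1 then (if l = n-1 then -κ else 0)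
      else ((if k ≤ l ∧ l < n-1 then t (l-k+2) else 0) +
        (if l = n-1 then Γ (k+1) else 0)) with hcoef
    have hecoef : ∀ k : Fin n, e ((k:ℕ)+1) = ∑ l : Fin n, coef (k:ℕ) (l:ℕ) • b l := by
      intro k
      have hrw : ∑ l : Fin n, coef (k:ℕ) (l:ℕ) • b l
          = ∑ l ∈ Finset.range n, coef (k:ℕ) l • Y (l+1) := by
        rw [← Fin.sum_univ_eq_sum_range (fun l => coef (k:ℕ) l • Y (l+1)) n]
        exact Finset.sum_congr rfl fun l _ => by rw [hb l]
      rw [hrw]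
      rcases eq_or_ne (k:ℕ) 0 with hk0 | hk0
      · rw [hk0, show (0:ℕ)+1 = 1 from rfl, hev1, he1]
        have hpt : ∀ l ∈ Finset.range n, coef 0 l • Y (l+1)
            = (if l = 0 then Y 1 else 0) + (if l = 1 then c • Y 2 else 0) := by
          intro l _
          simp only [hcoef]
          rcases eq_or_ne l 0 with rfl | h0
          · norm_num
          · rcases eq_or_ne l 1 with rfl | hl1
            · norm_num
            · simp [h0, hl1]
        rw [Finset.sum_congr rfl hpt, Finset.sum_add_distrib,
          Finset.sum_ite_eq' (Finset.range n) 0, Finset.sum_ite_eq' (Finset.range n) 1]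
        simp only [Finset.mem_range]
        rw [if_pos (by omega), if_pos (by omega)]
      · rcases eq_or_ne (k:ℕ) (n-1) with hk1 | hk1
        · rw [hk1, show n-1+1 = n from by omega, hevn, hen]
          have hpt : ∀ l ∈ Finset.range n, coef (n-1) l • Y (l+1)
              = (if l = n-1 then (-κ) • Y n else 0) := by
            intro l _
            simp only [hcoef]
            rcases eq_or_ne l (n-1) with rfl | h0
            · simp [show ¬ (n-1 = 0) from by omega, show n-1+1 = n from by omega]
            · simp [h0, show ¬ (n-1 = 0) from by omega]
          rw [Finset.sum_congr rfl hpt, Finset.sum_ite_eq' (Finset.range n) (n-1)]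
          rw [if_pos (Finset.mem_range.mpr (by omega))]
        · -- middle case
          have hk2 : 1 ≤ (k:ℕ) ∧ (k:ℕ) ≤ n-2 := by
            constructor
            · omega
            · have := k.2
              omega
          rw [hΓ ((k:ℕ)+1) (by omega) (by omega)]
          have hpt : ∀ l ∈ Finset.range n, coef (k:ℕ) l • Y (l+1)
              = (if (k:ℕ) ≤ l ∧ l < n-1 then t (l-(k:ℕ)+2) • Y (l+1) else 0)
                + (if l = n-1 then Γ ((k:ℕ)+1) • Y n else 0) := by
            intro l _
            simp only [hcoef]
            rw [if_neg hk0, if_neg hk1, add_smul]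
            congr 1
            · by_cases hc1 : (k:ℕ) ≤ l ∧ l < n-1
              · rw [if_pos hc1, if_pos hc1]
              · rw [if_neg hc1, if_neg hc1, zero_smul]
            · rcases eq_or_ne l (n-1) with rfl | h0
              · rw [if_pos rfl, if_pos rfl, show n-1+1 = n from by omega]
              · rw [if_neg h0, if_neg h0, zero_smul]
          rw [Finset.sum_congr rfl hpt, Finset.sum_add_distrib,
            Finset.sum_ite_eq' (Finset.range n) (n-1)]
          rw [if_pos (Finset.mem_range.mpr (by omega))]
          congr 1
          -- ∑ l ∈ range n, (if k ≤ l ∧ l < n-1 then t (l-k+2) • Y (l+1) else 0) = P (k+1)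
          have hsub : ∑ l ∈ Finset.range n,
              (if (k:ℕ) ≤ l ∧ l < n-1 then t (l-(k:ℕ)+2) • Y (l+1) else 0)
              = ∑ l ∈ Finset.range (n-1),
                (if (k:ℕ) ≤ l ∧ l < n-1 then t (l-(k:ℕ)+2) • Y (l+1) else 0) := by
            refine (Finset.sum_subset (Finset.range_subset_range.mpr (by omega)) ?_).symm
            intro l _ hl
            rw [if_neg]
            rintro ⟨_, hl2⟩
            simp only [Finset.mem_range] at hl
            omega
          rw [hsub]
          have hcongr : ∀ l ∈ Finset.range (n-1),
              (if (k:ℕ) ≤ l ∧ l < n-1 then t (l-(k:ℕ)+2) • Y (l+1) else 0)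
              = (if (k:ℕ) ≤ l then t (l-(k:ℕ)+2) • Y (l+1) else 0) := by
            intro l hl
            simp only [Finset.mem_range] at hl
            by_cases hc1 : (k:ℕ) ≤ l
            · rw [if_pos ⟨hc1, hl⟩, if_pos hc1]
            · rw [if_neg (fun hh => hc1 hh.1), if_neg hc1]
          rw [Finset.sum_congr rfl hcongr, ← Finset.sum_filter]
          have hfil : Finset.filter (fun l => (k:ℕ) ≤ l) (Finset.range (n-1))
              = Finset.Ico (k:ℕ) (n-1) := by
            ext x
            simp only [Finset.mem_filter, Finset.mem_range, Finset.mem_Ico]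
            omega
          rw [hfil, Finset.sum_Ico_eq_sum_range, hP, S4Aux.Pfun,
            show n-1-(k:ℕ) = n-((k:ℕ)+1) from by omega]
          refine Finset.sum_congr rfl fun a _ => ?_
          rw [show (k:ℕ)+a-(k:ℕ)+2 = a+2 from by omega,
            show (k:ℕ)+a+1 = (k:ℕ)+1+a from by omega]
    set f : 𝔫 →ₗ[ℝ] 𝔫 := b.constr ℝ (fun i : Fin n => e ((i:ℕ)+1)) with hf
    have hfb : ∀ i : Fin n, f (b i) = e ((i:ℕ)+1) := fun i => b.constr_basis ℝ _ i
    set NM : Matrix (Fin n) (Fin n) ℝ := LinearMap.toMatrix b b f with hNM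
    have hNe : ∀ l k : Fin n, NM l k = coef (k:ℕ) (l:ℕ) := by
      intro l k
      rw [hNM, LinearMap.toMatrix_apply, hfb k, hecoef k, Module.Basis.repr_sum_self]
    have htri : NM.BlockTriangular OrderDual.toDual := by
      intro l k h
      have hlt : (l:ℕ) < (k:ℕ) := OrderDual.toDual_lt_toDual.mp h
      rw [hNe]
      simp only [hcoef]
      rcases eq_or_ne (k:ℕ) 0 with hk0 | hk0
      · omega
      · rw [if_neg hk0]
        rcases eq_or_ne (k:ℕ) (n-1) with hk1 | hk1
        · rw [if_pos hk1, if_neg (by omega)]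
        · rw [if_neg hk1, if_neg (by omega), if_neg (by omega), add_zero]
    have hdiag : ∀ k : Fin n, NM k k ≠ 0 := by
      intro k
      rw [hNe]
      simp only [hcoef]
      rcases eq_or_ne (k:ℕ) 0 with hk0 | hk0
      · rw [if_pos hk0, if_pos hk0]
        norm_num
      · rw [if_neg hk0]
        rcases eq_or_ne (k:ℕ) (n-1) with hk1 | hk1
        · rw [if_pos hk1, if_pos hk1]
          simpa using hκ
        · have hkn : (k:ℕ) < n-1 := by
            have := k.2
            omega
          rw [if_neg hk1, if_pos ⟨le_rfl, hkn⟩, if_neg hk1, add_zero,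
            show (k:ℕ)-(k:ℕ)+2 = 2 from by omega, ht2]
          norm_num
    have hdet : IsUnit NM.det := by
      rw [Matrix.det_of_lowerTriangular NM htri]
      exact isUnit_iff_ne_zero.mpr (Finset.prod_ne_zero_iff.mpr fun k _ => hdiag k)
    refine ⟨b.map (LinearEquiv.ofIsUnitDet hdet), fun i => ?_⟩
    rw [Module.Basis.map_apply]
    have hco := DFunLike.congr_fun (LinearEquiv.coe_ofIsUnitDet hdet) (b i)
    exact (hco.trans (hfb i)).symm
  exact ⟨e, hbasis', hrelA, hrelC, hrelD⟩
end
end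

section
/- Let 𝔫 be a real Lie algebra of dimension n ≥ 3 whose complexification 𝔫 ⊗_ℝ ℂ is isomorphic, as a complex Lie algebra, to the complex Lie algebra L_n^ℂ. Then 𝔫 is isomorphic, as a real Lie algebra, to L_n. -/
noncomputable section

open scoped BigOperators RealInnerProductSpace

open scoped TensorProduct



open scoped TensorProduct

attribute [-instance] LieAlgebra.ExtendScalars.instBracketTensorProduct

namespace St5Aux

variable {𝔫 : Type} [LieRing 𝔫] [LieAlgebra ℝ 𝔫]

/-- The canonical map `𝔫 → ℂ ⊗[ℝ] 𝔫`. -/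
noncomputable def cxi (𝔫 : Type) [LieRing 𝔫] [LieAlgebra ℝ 𝔫] : 𝔫 →ₗ[ℝ] ℂ ⊗[ℝ] 𝔫 :=
  TensorProduct.mk ℝ ℂ 𝔫 1

noncomputable def reT (𝔫 : Type) [LieRing 𝔫] [LieAlgebra ℝ 𝔫] : ℂ ⊗[ℝ] 𝔫 →ₗ[ℝ] 𝔫 :=
  TensorProduct.lift ((LinearMap.lsmul ℝ 𝔫).comp Complex.reLm)

noncomputable def imT (𝔫 : Type) [LieRing 𝔫] [LieAlgebra ℝ 𝔫] : ℂ ⊗[ℝ] 𝔫 →ₗ[ℝ] 𝔫 :=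
  TensorProduct.lift ((LinearMap.lsmul ℝ 𝔫).comp Complex.imLm)

@[simp] lemma cxi_apply (x : 𝔫) : cxi 𝔫 x = (1 : ℂ) ⊗ₜ[ℝ] x := rfl

@[simp] lemma reT_tmul (z : ℂ) (x : 𝔫) : reT 𝔫 (z ⊗ₜ[ℝ] x) = z.re • x := rfl

@[simp] lemma imT_tmul (z : ℂ) (x : 𝔫) : imT 𝔫 (z ⊗ₜ[ℝ] x) = z.im • x := rfl

@[simp] lemma reT_cxi (x : 𝔫) : reT 𝔫 (cxi 𝔫 x) = x := by simp

@[simp] lemma imT_cxi (x : 𝔫) : imT 𝔫 (cxi 𝔫 x) = 0 := by simp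

lemma reT_I_smul (X : ℂ ⊗[ℝ] 𝔫) : reT 𝔫 (Complex.I • X) = - imT 𝔫 X := by
  induction X using TensorProduct.induction_on with
  | zero => simp
  | tmul z x =>
      rw [TensorProduct.smul_tmul']
      simp [Complex.I_mul, neg_smul]
  | add a b ha hb => rw [smul_add, map_add, map_add, ha, hb, neg_add]

lemma imT_I_smul (X : ℂ ⊗[ℝ] 𝔫) : imT 𝔫 (Complex.I • X) = reT 𝔫 X := by
  induction X using TensorProduct.induction_on with
  | zero => simp
  | tmul z x =>
      rw [TensorProduct.smul_tmul']
      simp [Complex.I_mul]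
  | add a b ha hb => rw [smul_add, map_add, map_add, ha, hb]

lemma bracket_eq (X Y : ℂ ⊗[ℝ] 𝔫) : ⁅X, Y⁆ =
    @Bracket.bracket _ _ (LieAlgebra.ExtendScalars.instBracketTensorProduct ℝ ℂ 𝔫 𝔫) X Y := rfl

lemma cxi_lie (x y : 𝔫) : cxi 𝔫 ⁅x, y⁆ = ⁅cxi 𝔫 x, cxi 𝔫 y⁆ := by
  simp only [cxi_apply]
  rw [bracket_eq, LieAlgebra.ExtendScalars.bracket_tmul, one_mul]

lemma coe_smul_eq (r : ℝ) (X : ℂ ⊗[ℝ] 𝔫) : (r : ℂ) • X = r • X := by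
  rw [← Complex.coe_algebraMap]
  exact algebraMap_smul ℂ r X

lemma cxi_decomp (X : ℂ ⊗[ℝ] 𝔫) :
    X = cxi 𝔫 (reT 𝔫 X) + Complex.I • cxi 𝔫 (imT 𝔫 X) := by
  induction X using TensorProduct.induction_on with
  | zero => simp
  | tmul z x =>
      simp only [reT_tmul, imT_tmul, cxi_apply, TensorProduct.tmul_smul]
      rw [← coe_smul_eq, ← coe_smul_eq, smul_smul, ← add_smul]
      rw [TensorProduct.smul_tmul']
      congr 1
      rw [smul_eq_mul, mul_one, mul_comm Complex.I, Complex.re_add_im]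
  | add a c ha hc =>
      rw [map_add, map_add, map_add, map_add, smul_add]
      conv_lhs => rw [ha, hc]
      abel

lemma cxi_uniq {s t : 𝔫} (h : cxi 𝔫 s + Complex.I • cxi 𝔫 t = 0) : s = 0 ∧ t = 0 := by
  constructor
  · have := congrArg (reT 𝔫) h
    rw [map_add, reT_I_smul] at this
    simpa using this
  · have := congrArg (imT 𝔫) h
    rw [map_add, imT_I_smul] at this
    simpa using this

lemma cxi_inj {s : 𝔫} (h : cxi 𝔫 s = 0) : s = 0 := by
  have := congrArg (reT 𝔫) h
  simpa using this

lemma smul_lie2 (t : ℂ) (x m : ℂ ⊗[ℝ] 𝔫) : ⁅t • x, m⁆ = t • ⁅x, m⁆ := smul_lie t x m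

lemma lie_smul2 (t : ℂ) (x m : ℂ ⊗[ℝ] 𝔫) : ⁅x, t • m⁆ = t • ⁅x, m⁆ := lie_smul t x m

noncomputable def yseq {𝔫 : Type} [LieRing 𝔫] (u v : 𝔫) : ℕ → 𝔫
  | 0 => u
  | 1 => v
  | (k + 2) => ⁅u, yseq u v (k + 1)⁆

@[simp] lemma yseq_zero {𝔫 : Type} [LieRing 𝔫] (u v : 𝔫) : yseq u v 0 = u := rfl
@[simp] lemma yseq_one {𝔫 : Type} [LieRing 𝔫] (u v : 𝔫) : yseq u v 1 = v := rfl
lemma yseq_succ {𝔫 : Type} [LieRing 𝔫] (u v : 𝔫) (k : ℕ) :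
    yseq u v (k + 2) = ⁅u, yseq u v (k + 1)⁆ := rfl

end St5Aux

attribute [local instance] LieRing.ofAssociativeRing

set_option maxHeartbeats 3200000 in
open St5Aux in
/-- **Lemma 2(2), `L_n` case.** Let `𝔫` be a real Lie algebra of dimension `n ≥ 3` whose
complexification `ℂ ⊗[ℝ] 𝔫` is isomorphic, as a complex Lie algebra, to `L_n^ℂ` (i.e. it
has a basis over `ℂ` realizing the `L_n` relations). Then `𝔫` is isomorphic, as a real Lie
algebra, to `L_n` (i.e. it has a basis over `ℝ` realizing the `L_n` relations). -/
theorem statement5 (n : ℕ) (hn : 3 ≤ n)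
    (𝔫 : Type) [LieRing 𝔫] [LieAlgebra ℝ 𝔫]
    (hdim : Module.finrank ℝ 𝔫 = n)
    (hC : ∃ e : ℕ → ℂ ⊗[ℝ] 𝔫, IsLnBasis ℂ n e) :
    ∃ e : ℕ → 𝔫, IsLnBasis ℝ n e := by
  classical
  haveI : NeZero n := ⟨by omega⟩
  haveI : Module.Finite ℝ 𝔫 := Module.finite_of_finrank_pos (by rw [hdim]; omega)
  haveI : Nonempty (Fin n) := ⟨⟨0, by omega⟩⟩
  obtain ⟨e, ⟨b, hb⟩, h1, h0⟩ := hC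
  have e1b : e 1 = b 0 := by simpa using hb 0
  have e2b : e 2 = b ⟨1, by omega⟩ := by simpa using hb ⟨1, by omega⟩
  have e3b : e 3 = b ⟨2, by omega⟩ := by simpa using hb ⟨2, by omega⟩
  -- brackets of non-first basis vectors vanish
  have hbb0 : ∀ i j : Fin n, i ≠ 0 → i < j → ⁅b i, b j⁆ = 0 := by
    intro i j hi hij
    have hi' : (i : ℕ) ≠ 0 := Fin.val_ne_zero_iff.mpr hi
    have hij' : (i : ℕ) < (j : ℕ) := Fin.lt_def.mp hij
    have hjn : (j : ℕ) < n := j.isLt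
    have c4 : ¬((i : ℕ) + 1 = 1 ∧ (j : ℕ) + 1 ≤ n - 1) := by omega
    have key := h0 ((i : ℕ) + 1) ((j : ℕ) + 1) (by omega) (by omega) (by omega) c4
    rw [hb i, hb j] at key
    exact key
  have hbb : ∀ i j : Fin n, i ≠ 0 → j ≠ 0 → ⁅b i, b j⁆ = 0 := by
    intro i j hi hj
    rcases lt_trichotomy i j with h | h | h
    · exact hbb0 i j hi h
    · rw [h]; exact lie_self _
    · rw [← lie_skew, hbb0 j i hj h, neg_zero]
  -- the operator D = ad (e 1)
  set D : Module.End ℂ (ℂ ⊗[ℝ] 𝔫) := LieAlgebra.ad ℂ (ℂ ⊗[ℝ] 𝔫) (e 1) with hDdef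
  have hD : ∀ X, D X = ⁅e 1, X⁆ := by
    intro X; rw [hDdef, LieAlgebra.ad_apply]
  have Db0 : D (b 0) = 0 := by rw [hD, ← e1b]; exact lie_self _
  have Db : ∀ j : Fin n, j ≠ 0 → D (b j) =
      if h : (j : ℕ) + 1 < n then b ⟨(j : ℕ) + 1, h⟩ else 0 := by
    intro j hj
    have hj' : (j : ℕ) ≠ 0 := Fin.val_ne_zero_iff.mpr hj
    have hjn : (j : ℕ) < n := j.isLt
    by_cases h : (j : ℕ) + 1 < n
    · rw [dif_pos h]
      have key := h1 ((j : ℕ) + 1) (by omega) (by omega)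
      have hb2 : e ((j : ℕ) + 1 + 1) = b ⟨(j : ℕ) + 1, h⟩ := hb ⟨(j : ℕ) + 1, h⟩
      rw [hb j, hb2] at key
      rw [hD]
      exact key
    · rw [dif_neg h]
      have c4 : ¬((1 : ℕ) = 1 ∧ (j : ℕ) + 1 ≤ n - 1) := by omega
      have key := h0 1 ((j : ℕ) + 1) (by omega) (by omega) (by omega) c4
      rw [hb j] at key
      rw [hD]
      exact key
  -- master identity
  have hM : ∀ X Y : ℂ ⊗[ℝ] 𝔫, ⁅X, Y⁆ =
      b.repr X 0 • ⁅e 1, Y⁆ - b.repr Y 0 • ⁅e 1, X⁆ := by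
    let Fm : (ℂ ⊗[ℝ] 𝔫) →ₗ[ℂ] (ℂ ⊗[ℝ] 𝔫) →ₗ[ℂ] (ℂ ⊗[ℝ] 𝔫) :=
      (b.coord 0).smulRight (D : (ℂ ⊗[ℝ] 𝔫) →ₗ[ℂ] (ℂ ⊗[ℝ] 𝔫))
    let Rm : (ℂ ⊗[ℝ] 𝔫) →ₗ[ℂ] (ℂ ⊗[ℝ] 𝔫) →ₗ[ℂ] (ℂ ⊗[ℝ] 𝔫) := Fm - Fm.flip
    have hRm : ∀ X Y : ℂ ⊗[ℝ] 𝔫, Rm X Y =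
        b.repr X 0 • ⁅e 1, Y⁆ - b.repr Y 0 • ⁅e 1, X⁆ := by
      intro X Y
      simp only [Rm, Fm, LinearMap.sub_apply, LinearMap.flip_apply,
        LinearMap.smulRight_apply, LinearMap.smul_apply, Module.Basis.coord_apply, hD]
    have hext : (LieAlgebra.ad ℂ (ℂ ⊗[ℝ] 𝔫)).toLinearMap = Rm := by
      apply LinearMap.ext_basis b b
      intro i j
      rw [LieHom.coe_toLinearMap, LieAlgebra.ad_apply, hRm, Module.Basis.repr_self_apply,
        Module.Basis.repr_self_apply]
      rcases eq_or_ne i 0 with rfl | hi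
      · rcases eq_or_ne j 0 with rfl | hj
        · simp
        · simp [hj, ← e1b]
      · rcases eq_or_ne j 0 with rfl | hj
        · have hskew : ⁅b i, b 0⁆ = -⁅e 1, b i⁆ := by rw [← e1b, ← lie_skew]
          simp [hskew, hi]
        · rw [hbb i j hi hj]
          simp [hi, hj]
    intro X Y
    have h' := DFunLike.congr_fun (DFunLike.congr_fun hext X) Y
    rw [LieHom.coe_toLinearMap, LieAlgebra.ad_apply, hRm] at h'
    exact h'
  -- coordinate lemmas for D
  have DcoordZero : ∀ X : ℂ ⊗[ℝ] 𝔫, b.repr (D X) 0 = 0 := by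
    have hcomp : (b.coord 0) ∘ₗ (D : (ℂ ⊗[ℝ] 𝔫) →ₗ[ℂ] (ℂ ⊗[ℝ] 𝔫)) = 0 := by
      apply b.ext
      intro j
      rw [LinearMap.comp_apply, LinearMap.zero_apply]
      rcases eq_or_ne j 0 with rfl | hj
      · rw [Db0, map_zero]
      · rw [Db j hj]
        split_ifs with h
        · rw [Module.Basis.coord_apply, Module.Basis.repr_self_apply,
            if_neg (by simp only [ne_eq, Fin.ext_iff, Fin.val_zero, Fin.val_mk]; omega)]
        · rw [map_zero]
    intro X
    have := DFunLike.congr_fun hcomp X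
    simpa [Module.Basis.coord_apply] using this
  have Dpow_basis : ∀ (k : ℕ) (j : Fin n), j ≠ 0 →
      (D ^ k) (b j) = if h : (j : ℕ) + k < n then b ⟨(j : ℕ) + k, h⟩ else 0 := by
    intro k
    induction k with
    | zero =>
        intro j hj
        rw [dif_pos (show (j : ℕ) + 0 < n by simpa using j.isLt)]
        rw [pow_zero, Module.End.one_apply]
        congr 1
    | succ k ih =>
        intro j hj
        have hj' : (j : ℕ) ≠ 0 := Fin.val_ne_zero_iff.mpr hj
        rw [pow_succ', Module.End.mul_apply, ih j hj]
        by_cases h : (j : ℕ) + k < n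
        · rw [dif_pos h]
          rw [Db ⟨(j : ℕ) + k, h⟩ (by simp only [ne_eq, Fin.ext_iff, Fin.val_zero, Fin.val_mk]; omega)]
          have hv : ((⟨(j : ℕ) + k, h⟩ : Fin n) : ℕ) = (j : ℕ) + k := rfl
          by_cases h2 : (j : ℕ) + k + 1 < n
          · rw [dif_pos h2, dif_pos (show (j : ℕ) + (k + 1) < n by omega)]
            congr 1
          · rw [dif_neg h2, dif_neg (show ¬((j : ℕ) + (k + 1) < n) by omega)]
        · rw [dif_neg h, map_zero, dif_neg (by omega)]
  have shiftCoord : ∀ (m : ℕ) (hm1 : 1 ≤ m) (hm2 : m + 1 < n) (X : ℂ ⊗[ℝ] 𝔫),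
      b.repr (D X) ⟨m + 1, hm2⟩ = b.repr X ⟨m, by omega⟩ := by
    intro m hm1 hm2
    have hcomp : (b.coord ⟨m + 1, hm2⟩) ∘ₗ (D : (ℂ ⊗[ℝ] 𝔫) →ₗ[ℂ] (ℂ ⊗[ℝ] 𝔫))
        = b.coord ⟨m, by omega⟩ := by
      apply b.ext
      intro j
      rw [LinearMap.comp_apply]
      rcases eq_or_ne j 0 with rfl | hj
      · rw [Db0, map_zero, Module.Basis.coord_apply, Module.Basis.repr_self_apply,
          if_neg (by simp [Fin.ext_iff]; omega)]
      · have hj' : (j : ℕ) ≠ 0 := Fin.val_ne_zero_iff.mpr hj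
        have hjn : (j : ℕ) < n := j.isLt
        rw [Db j hj]
        split_ifs with h
        · rw [Module.Basis.coord_apply, Module.Basis.repr_self_apply, Module.Basis.coord_apply,
            Module.Basis.repr_self_apply]
          by_cases hjm : (j : ℕ) = m
          · rw [if_pos (by apply Fin.ext; show (j : ℕ) + 1 = m + 1; omega),
              if_pos (by apply Fin.ext; show (j : ℕ) = m; omega)]
          · rw [if_neg (by simp [Fin.ext_iff]; omega),
              if_neg (by simp [Fin.ext_iff]; omega)]
        · rw [map_zero, Module.Basis.coord_apply, Module.Basis.repr_self_apply,
            if_neg (by simp [Fin.ext_iff]; omega)]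
    intro X
    have := DFunLike.congr_fun hcomp X
    simpa [Module.Basis.coord_apply] using this
  have chain : ∀ (k : ℕ) (h : k + 1 < n) (X : ℂ ⊗[ℝ] 𝔫),
      b.repr ((D ^ k) X) ⟨k + 1, h⟩ = b.repr X ⟨1, by omega⟩ := by
    intro k
    induction k with
    | zero =>
        intro h X
        rw [pow_zero, Module.End.one_apply]
    | succ k ih =>
        intro h X
        rw [pow_succ', Module.End.mul_apply]
        rw [shiftCoord (k + 1) (by omega) h ((D ^ k) X)]
        exact ih (by omega) X
  have c0Dpow : ∀ (k : ℕ) (X : ℂ ⊗[ℝ] 𝔫), b.repr X 0 = 0 →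
      b.repr ((D ^ k) X) 0 = 0 := by
    intro k
    induction k with
    | zero => intro X hX; rw [pow_zero, Module.End.one_apply]; exact hX
    | succ k _ =>
        intro X hX
        rw [pow_succ', Module.End.mul_apply]
        exact DcoordZero _
  have lowVanish : ∀ (k : ℕ) (m : Fin n), (m : ℕ) ≤ k → ∀ X : ℂ ⊗[ℝ] 𝔫,
      b.repr X 0 = 0 → b.repr ((D ^ k) X) m = 0 := by
    intro k m hmk X hX
    conv_lhs => rw [← b.sum_repr X]
    simp only [map_sum, map_smul, Finsupp.coe_finset_sum, Finset.sum_apply,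
      Finsupp.smul_apply, smul_eq_mul]
    apply Finset.sum_eq_zero
    intro j _
    rcases eq_or_ne j 0 with rfl | hj
    · rw [hX, zero_mul]
    · have hj' : (j : ℕ) ≠ 0 := Fin.val_ne_zero_iff.mpr hj
      rw [Dpow_basis k j hj]
      split_ifs with h
      · rw [Module.Basis.repr_self_apply, if_neg (by simp [Fin.ext_iff]; omega), mul_zero]
      · rw [map_zero, Finsupp.zero_apply, mul_zero]
  have Dtop : ∀ X : ℂ ⊗[ℝ] 𝔫, b.repr X 0 = 0 → (D ^ (n - 1)) X = 0 := by
    intro X hX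
    conv_lhs => rw [← b.sum_repr X]
    rw [map_sum]
    apply Finset.sum_eq_zero
    intro j _
    rw [map_smul]
    rcases eq_or_ne j 0 with rfl | hj
    · rw [hX, zero_smul]
    · have hj' : (j : ℕ) ≠ 0 := Fin.val_ne_zero_iff.mpr hj
      have hjn : (j : ℕ) < n := j.isLt
      rw [Dpow_basis _ j hj, dif_neg (by omega), smul_zero]
  -- existence of u with nonzero first coordinate
  obtain ⟨u, hu0⟩ : ∃ u : 𝔫, b.repr (cxi 𝔫 u) 0 ≠ 0 := by
    by_contra hcon
    push_neg at hcon
    have h2 : b.repr (e 1) 0 = (1 : ℂ) := by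
      rw [e1b, Module.Basis.repr_self_apply, if_pos rfl]
    rw [cxi_decomp (e 1)] at h2
    simp only [map_add, map_smul, Finsupp.add_apply, Finsupp.smul_apply,
      smul_eq_mul] at h2
    rw [hcon, hcon, mul_zero, add_zero] at h2
    exact one_ne_zero h2.symm
  have hc2z : b.repr (e 2) 0 = 0 := by
    rw [e2b, Module.Basis.repr_self_apply, if_neg (by simp [Fin.ext_iff])]
  have k23 : ⁅e 1, e 2⁆ = e 3 := h1 2 le_rfl (by omega)
  rcases Nat.lt_or_ge n 4 with hn4 | hn4
  · -- case n = 3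
    have hn3 : n = 3 := by omega
    subst hn3
    -- find v with ⁅u, v⁆ ≠ 0
    obtain ⟨v, hv⟩ : ∃ v : 𝔫, ⁅u, v⁆ ≠ 0 := by
      by_contra hcon
      push_neg at hcon
      have hb1 : ⁅cxi 𝔫 u, e 2⁆ = b.repr (cxi 𝔫 u) 0 • e 3 := by
        rw [hM (cxi 𝔫 u) (e 2), hc2z, zero_smul, sub_zero, k23]
      have hb2 : ⁅cxi 𝔫 u, e 2⁆ = 0 := by
        conv_lhs => rw [cxi_decomp (e 2)]
        rw [lie_add, lie_smul, ← cxi_lie, ← cxi_lie, hcon, hcon, map_zero,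
          smul_zero, add_zero]
      have : b.repr (cxi 𝔫 u) 0 • e 3 ≠ 0 :=
        smul_ne_zero hu0 (by rw [e3b]; exact b.ne_zero _)
      exact this (hb1.symm.trans hb2)
    -- the element w = ⁅u, v⁆ kills everything
    have hw0 : b.repr (cxi 𝔫 ⁅u, v⁆) 0 = 0 := by
      rw [cxi_lie, hM]
      simp only [map_sub, Finsupp.sub_apply, map_smul, Finsupp.smul_apply, smul_eq_mul]
      rw [show ⁅e 1, cxi 𝔫 v⁆ = D (cxi 𝔫 v) from (hD _).symm,
        show ⁅e 1, cxi 𝔫 u⁆ = D (cxi 𝔫 u) from (hD _).symm,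
        DcoordZero, DcoordZero, mul_zero, mul_zero, sub_zero]
    have hDD : ∀ X : ℂ ⊗[ℝ] 𝔫, D (D X) = 0 := by
      have hcomp : (D : (ℂ ⊗[ℝ] 𝔫) →ₗ[ℂ] (ℂ ⊗[ℝ] 𝔫)) ∘ₗ D = 0 := by
        apply b.ext
        intro j
        rw [LinearMap.comp_apply, LinearMap.zero_apply]
        rcases eq_or_ne j 0 with rfl | hj
        · rw [Db0, map_zero]
        · have hj' : (j : ℕ) ≠ 0 := Fin.val_ne_zero_iff.mpr hj
          rw [Db j hj]
          split_ifs with h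
          · rw [Db ⟨(j : ℕ) + 1, h⟩ (by simp only [ne_eq, Fin.ext_iff, Fin.val_zero, Fin.val_mk]; omega)]
            rw [dif_neg (show ¬((⟨(j : ℕ) + 1, h⟩ : Fin 3) : ℕ) + 1 < 3 by
              show ¬((j : ℕ) + 1 + 1 < 3); omega)]
          · rw [map_zero]
      intro X
      exact DFunLike.congr_fun hcomp X
    have hDw : D (cxi 𝔫 ⁅u, v⁆) = 0 := by
      rw [cxi_lie, hM, map_sub, map_smul, map_smul,
        show ⁅e 1, cxi 𝔫 v⁆ = D (cxi 𝔫 v) from (hD _).symm,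
        show ⁅e 1, cxi 𝔫 u⁆ = D (cxi 𝔫 u) from (hD _).symm,
        hDD, hDD, smul_zero, smul_zero, sub_zero]
    have hcentral : ∀ s : 𝔫, ⁅s, ⁅u, v⁆⁆ = 0 := by
      intro s
      apply cxi_inj (𝔫 := 𝔫)
      rw [cxi_lie, hM, hw0, zero_smul, sub_zero,
        show ⁅e 1, cxi 𝔫 ⁅u, v⁆⁆ = D (cxi 𝔫 ⁅u, v⁆) from (hD _).symm, hDw, smul_zero]
    have hy2 : yseq u v 2 = ⁅u, v⁆ := yseq_succ u v 0
    have li : LinearIndependent ℝ (fun j : Fin 3 => yseq u v (j : ℕ)) := by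
      rw [Fintype.linearIndependent_iff]
      intro r hr
      rw [Fin.sum_univ_three] at hr
      have hr' : r 0 • u + r 1 • v + r 2 • ⁅u, v⁆ = 0 := hr
      clear hr
      have hr := hr'
      have hwv : ⁅(⁅u, v⁆ : 𝔫), v⁆ = 0 := by
        rw [← lie_skew, hcentral v, neg_zero]
      have hr0 : r 0 = 0 := by
        have h3 := congrArg (fun t => ⁅t, v⁆) hr
        simp only [add_lie, smul_lie, lie_self, smul_zero, add_zero, zero_lie, hwv] at h3
        rcases smul_eq_zero.mp h3 with h | h
        · exact h
        · exact absurd h hv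
      have hr1 : r 1 = 0 := by
        have h3 := congrArg (fun t => ⁅(u : 𝔫), t⁆) hr
        simp only [lie_add, lie_smul, lie_self, smul_zero, zero_add, lie_zero,
          hcentral u, add_zero] at h3
        rcases smul_eq_zero.mp h3 with h | h
        · exact h
        · exact absurd h hv
      have hr2 : r 2 = 0 := by
        rw [hr0, hr1, zero_smul, zero_smul, zero_add, zero_add] at hr
        rcases smul_eq_zero.mp hr with h | h
        · exact h
        · exact absurd h hv
      intro i
      fin_cases i
      · exact hr0
      · exact hr1
      · exact hr2
    refine ⟨fun k => yseq u v (k - 1),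
      ⟨basisOfLinearIndependentOfCardEqFinrank li (by simp [hdim]), fun i => ?_⟩, ?_, ?_⟩
    · rw [coe_basisOfLinearIndependentOfCardEqFinrank]
      simp
    · intro i h2i hi1
      have : i = 2 := by omega
      subst this
      show ⁅yseq u v 0, yseq u v 1⁆ = yseq u v 2
      exact (yseq_succ u v 0).symm
    · intro i j hi hij hjn hnot
      have hcase : (i = 1 ∧ j = 3) ∨ (i = 2 ∧ j = 3) := by omega
      rcases hcase with ⟨rfl, rfl⟩ | ⟨rfl, rfl⟩
      · show ⁅yseq u v 0, yseq u v 2⁆ = 0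
        rw [hy2]
        exact hcentral u
      · show ⁅yseq u v 1, yseq u v 2⁆ = 0
        rw [hy2]
        exact hcentral v
  · -- case n ≥ 4
    have hEbr : ∀ X Y : ℂ ⊗[ℝ] 𝔫, b.repr ⁅X, Y⁆ 0 = 0 := by
      intro X Y
      rw [hM]
      simp only [map_sub, Finsupp.sub_apply, map_smul, Finsupp.smul_apply, smul_eq_mul]
      rw [show ⁅e 1, Y⁆ = D Y from (hD _).symm, show ⁅e 1, X⁆ = D X from (hD _).symm,
        DcoordZero, DcoordZero, mul_zero, mul_zero, sub_zero]
    have he2z : ∀ a c : 𝔫, ⁅e 2, ⁅cxi 𝔫 a, cxi 𝔫 c⁆⁆ = 0 := by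
      intro a c
      rw [hM, hc2z, hEbr, zero_smul, zero_smul, sub_zero]
    have hpq : ∀ a c : 𝔫, ⁅reT 𝔫 (e 2), ⁅a, c⁆⁆ = 0 ∧ ⁅imT 𝔫 (e 2), ⁅a, c⁆⁆ = 0 := by
      intro a c
      have h2 : ⁅cxi 𝔫 (reT 𝔫 (e 2)) + Complex.I • cxi 𝔫 (imT 𝔫 (e 2)),
          ⁅cxi 𝔫 a, cxi 𝔫 c⁆⁆ = 0 := by
        rw [← cxi_decomp (e 2)]
        exact he2z a c
      rw [← cxi_lie a c, add_lie, smul_lie2, ← cxi_lie, ← cxi_lie] at h2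
      exact cxi_uniq h2
    have hcent : ∀ s : 𝔫, (∀ a c : 𝔫, ⁅s, ⁅a, c⁆⁆ = 0) →
        ∀ X Y : ℂ ⊗[ℝ] 𝔫, ⁅cxi 𝔫 s, ⁅X, Y⁆⁆ = 0 := by
      intro s hs X Y
      have key : ∀ a c : 𝔫, ⁅cxi 𝔫 s, ⁅cxi 𝔫 a, cxi 𝔫 c⁆⁆ = 0 := by
        intro a c
        rw [← cxi_lie, ← cxi_lie, hs a c, map_zero]
      conv_lhs => rw [cxi_decomp X, cxi_decomp Y]
      simp only [lie_add, add_lie, lie_smul2, smul_lie2, key, smul_zero, zero_add,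
        add_zero]
    have hkill : ∀ s : 𝔫, (∀ a c : 𝔫, ⁅s, ⁅a, c⁆⁆ = 0) → b.repr (cxi 𝔫 s) 0 = 0 := by
      intro s hs
      have h3 : ⁅cxi 𝔫 s, e 3⁆ = 0 := by
        have := hcent s hs (e 1) (e 2)
        rw [k23] at this
        exact this
      rw [hM] at h3
      have hc3z : b.repr (e 3) 0 = 0 := by
        rw [e3b, Module.Basis.repr_self_apply, if_neg (by simp [Fin.ext_iff])]
      rw [hc3z, zero_smul, sub_zero] at h3
      have k34 : ⁅e 1, e 3⁆ = e 4 := h1 3 (by omega) (by omega)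
      rw [k34] at h3
      have he4 : e 4 = b ⟨3, by omega⟩ := hb ⟨3, by omega⟩
      rcases smul_eq_zero.mp h3 with h | h
      · exact h
      · exact absurd h (by rw [he4]; exact b.ne_zero _)
    obtain ⟨v, hv0, hv1⟩ : ∃ v : 𝔫, b.repr (cxi 𝔫 v) 0 = 0 ∧
        b.repr (cxi 𝔫 v) ⟨1, by omega⟩ ≠ 0 := by
      have hp0 : b.repr (cxi 𝔫 (reT 𝔫 (e 2))) 0 = 0 :=
        hkill _ (fun a c => (hpq a c).1)
      have hq0 : b.repr (cxi 𝔫 (imT 𝔫 (e 2))) 0 = 0 :=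
        hkill _ (fun a c => (hpq a c).2)
      have h21 : b.repr (e 2) ⟨1, by omega⟩ = 1 := by
        rw [e2b, Module.Basis.repr_self_apply, if_pos rfl]
      rw [cxi_decomp (e 2)] at h21
      simp only [map_add, map_smul, Finsupp.add_apply, Finsupp.smul_apply,
        smul_eq_mul] at h21
      by_cases hp1 : b.repr (cxi 𝔫 (reT 𝔫 (e 2))) ⟨1, by omega⟩ = 0
      · refine ⟨imT 𝔫 (e 2), hq0, ?_⟩
        intro hq1
        rw [hp1, hq1, mul_zero, add_zero] at h21
        exact one_ne_zero h21.symm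
      · exact ⟨reT 𝔫 (e 2), hp0, hp1⟩
    -- the image of the sequence
    have hy : ∀ k : ℕ, cxi 𝔫 (yseq u v (k + 1)) =
        (b.repr (cxi 𝔫 u) 0) ^ k • (D ^ k) (cxi 𝔫 v) := by
      intro k
      induction k with
      | zero => simp
      | succ k ih =>
          have hstep : yseq u v (k + 1 + 1) = ⁅u, yseq u v (k + 1)⁆ := yseq_succ u v k
          rw [hstep, cxi_lie, hM, ih]
          have hc0 : b.repr ((b.repr (cxi 𝔫 u) 0) ^ k • (D ^ k) (cxi 𝔫 v)) 0 = 0 := by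
            rw [map_smul, Finsupp.smul_apply, c0Dpow k _ hv0, smul_zero]
          rw [hc0, zero_smul, sub_zero]
          rw [show ⁅e 1, (b.repr (cxi 𝔫 u) 0) ^ k • (D ^ k) (cxi 𝔫 v)⁆
              = D ((b.repr (cxi 𝔫 u) 0) ^ k • (D ^ k) (cxi 𝔫 v)) from (hD _).symm]
          rw [map_smul, smul_smul, ← pow_succ']
          congr 1
          rw [pow_succ', Module.End.mul_apply]
    have hc0y : ∀ k : ℕ, b.repr (cxi 𝔫 (yseq u v (k + 1))) 0 = 0 := by
      intro k
      rw [hy k, map_smul, Finsupp.smul_apply, c0Dpow k _ hv0, smul_zero]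
    have hcomm : ∀ a c : ℕ, ⁅yseq u v (a + 1), yseq u v (c + 1)⁆ = 0 := by
      intro a c
      apply cxi_inj (𝔫 := 𝔫)
      rw [cxi_lie, hM, hc0y, hc0y, zero_smul, zero_smul, sub_zero]
    have hytop : yseq u v n = 0 := by
      obtain ⟨m, hm⟩ : ∃ m, n = m + 1 := ⟨n - 1, by omega⟩
      apply cxi_inj (𝔫 := 𝔫)
      have hDm : (D ^ m) (cxi 𝔫 v) = 0 := by
        rw [show m = n - 1 from by omega]
        exact Dtop _ hv0
      rw [hm, hy m, hDm, smul_zero]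
    have li : LinearIndependent ℝ (fun j : Fin n => yseq u v (j : ℕ)) := by
      rw [Fintype.linearIndependent_iff]
      intro r hr
      have H : ∑ j : Fin n, (r j : ℂ) • cxi 𝔫 (yseq u v (j : ℕ)) = 0 := by
        have h2 : cxi 𝔫 (∑ j : Fin n, r j • yseq u v (j : ℕ)) = 0 := by
          rw [hr, map_zero]
        rw [map_sum] at h2
        simp only [map_smul] at h2
        rw [← h2]
        exact Finset.sum_congr rfl fun j _ => coe_smul_eq _ _
      have key : ∀ N : ℕ, ∀ m : Fin n, (m : ℕ) = N → r m = 0 := by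
        intro N
        induction N using Nat.strongRecOn with
        | ind N ihN =>
          intro m hm
          have hc : ∑ j : Fin n, (r j : ℂ) * b.repr (cxi 𝔫 (yseq u v (j : ℕ))) m = 0 := by
            have := congrArg (fun X => b.repr X m) H
            simpa only [map_sum, map_smul, Finsupp.coe_finset_sum, Finset.sum_apply,
              Finsupp.smul_apply, smul_eq_mul, Finsupp.coe_zero, Pi.zero_apply,
              map_zero] using this
          rw [Finset.sum_eq_single m] at hc
          · have hne : b.repr (cxi 𝔫 (yseq u v (m : ℕ))) m ≠ 0 := by
              rcases Nat.eq_zero_or_pos (m : ℕ) with h0m | h0m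
              · have hm0 : m = 0 := Fin.ext (by simpa using h0m)
                rw [hm0]
                simpa using hu0
              · obtain ⟨k, hk⟩ : ∃ k, (m : ℕ) = k + 1 := ⟨(m : ℕ) - 1, by omega⟩
                have hkn : k + 1 < n := by rw [← hk]; exact m.isLt
                have hmk : m = ⟨k + 1, hkn⟩ := Fin.ext hk
                rw [hk, hy k, hmk, map_smul, Finsupp.smul_apply, smul_eq_mul,
                  chain k hkn]
                exact mul_ne_zero (pow_ne_zero _ hu0) hv1
            rcases mul_eq_zero.mp hc with h | h
            · exact Complex.ofReal_eq_zero.mp h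
            · exact absurd h hne
          · intro j _ hjm
            rcases lt_or_gt_of_ne hjm with h | h
            · have hjN : (j : ℕ) < N := by
                have := Fin.lt_def.mp h
                omega
              rw [ihN (j : ℕ) hjN j rfl, Complex.ofReal_zero, zero_mul]
            · have hmj : (m : ℕ) < (j : ℕ) := Fin.lt_def.mp h
              obtain ⟨k, hk⟩ : ∃ k, (j : ℕ) = k + 1 := ⟨(j : ℕ) - 1, by omega⟩
              rw [hk, hy k, map_smul, Finsupp.smul_apply, smul_eq_mul,
                lowVanish k m (by omega) _ hv0, mul_zero, mul_zero]
          · intro hmem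
            exact absurd (Finset.mem_univ m) hmem
      exact fun m => key (m : ℕ) m rfl
    refine ⟨fun k => yseq u v (k - 1),
      ⟨basisOfLinearIndependentOfCardEqFinrank li (by simp [hdim]), fun i => ?_⟩, ?_, ?_⟩
    · rw [coe_basisOfLinearIndependentOfCardEqFinrank]
      simp
    · intro i h2i hi1
      obtain ⟨k, rfl⟩ : ∃ k, i = k + 2 := ⟨i - 2, by omega⟩
      show ⁅yseq u v 0, yseq u v (k + 1)⁆ = yseq u v (k + 2)
      exact (yseq_succ u v k).symm
    · intro i j hi hij hjn hnot
      rcases Nat.lt_or_ge i 2 with h2 | h2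
      · have hi1 : i = 1 := by omega
        have hjn' : j = n := by omega
        subst hi1
        obtain ⟨m, hm⟩ : ∃ m, n = m + 2 := ⟨n - 2, by omega⟩
        rw [hjn', hm]
        show ⁅yseq u v 0, yseq u v (m + 1)⁆ = 0
        have h4 := hytop
        rw [hm] at h4
        rw [show (⁅yseq u v 0, yseq u v (m + 1)⁆ : 𝔫) = yseq u v (m + 2) from
          (yseq_succ u v m).symm, h4]
      · obtain ⟨a, rfl⟩ : ∃ a, i = a + 2 := ⟨i - 2, by omega⟩
        obtain ⟨c, rfl⟩ : ∃ c, j = c + 3 := ⟨j - 3, by omega⟩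
        show ⁅yseq u v (a + 1), yseq u v (c + 2)⁆ = 0
        exact hcomm a (c + 1)
end
end

section
/- Let n = 2m ≥ 6 be even and let D be a derivation of the real Lie algebra Q_n. Then D preserves each ideal i_k = span(X_k, ..., X_n) for 3 ≤ k ≤ n, and there exist real numbers a and d such that the characteristic polynomial of D equals (t − a) · ∏_{i=2}^{n−1} (t − (d + (i−2)a)) · (t − (2d + (n−3)a)); in particular the eigenvalues of D are a, d, a+d, 2a+d, ..., (n−3)a+d, and (n−3)a+2d. -/
noncomputable section

open scoped BigOperators RealInnerProductSpace

set_option maxHeartbeats 3200000 in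
open Polynomial in
/-- **Lemma 3.** Let `n = 2m ≥ 6` be even and let `D` be a derivation of the real Lie
algebra `Q_n` (given by a basis `e 1, …, e n` realizing the `Q_n` relations). Then `D`
preserves each ideal `i_k = span(X_k, …, X_n)`, `3 ≤ k ≤ n`, and there are reals `a, d`
with `charpoly D = (t − a) ⬝ ∏_{i=2}^{n−1} (t − (d + (i−2)a)) ⬝ (t − (2d + (n−3)a))`;
in particular the eigenvalues of `D` are `a, d, a+d, …, (n−3)a+d, (n−3)a+2d`. -/
theorem statement8 (m n : ℕ) (hm : 3 ≤ m) (hn : n = 2 * m)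
    (V : Type) [LieRing V] [LieAlgebra ℝ V] [FiniteDimensional ℝ V]
    (e : ℕ → V) (he : IsQnBasis ℝ n e)
    (D : V →ₗ[ℝ] V) (hD : ∀ x y : V, D ⁅x, y⁆ = ⁅D x, y⁆ + ⁅x, D y⁆) :
    (∀ k, 3 ≤ k → k ≤ n → ∀ x ∈ Submodule.span ℝ (e '' Set.Icc k n),
        D x ∈ Submodule.span ℝ (e '' Set.Icc k n)) ∧
    ∃ a d : ℝ, LinearMap.charpoly D =
      (X - C a) *
        (∏ i ∈ Finset.Icc 2 (n - 1), (X - C (d + ((i : ℝ) - 2) * a))) *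
        (X - C (2 * d + ((n : ℝ) - 3) * a)) := by
  obtain ⟨⟨b, hb⟩, hQ1, hQ2, hQ0⟩ := he
  have hn6 : 6 ≤ n := by omega
  have hbI : ∀ (i : ℕ) (h : i < n), e (i + 1) = b ⟨i, h⟩ := fun i h => hb ⟨i, h⟩
  have hb'' : ∀ s : Fin n, b s = e ((s : ℕ) + 1) := fun s => (hb s).symm
  have hen : e n = b ⟨n - 1, by omega⟩ := by
    have h := hbI (n - 1) (by omega)
    rwa [show n - 1 + 1 = n by omega] at h
  have reprb : ∀ (k : ℕ) (h : k < n) (j : Fin n),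
      b.repr (b ⟨k, h⟩) j = if k = (j : ℕ) then 1 else 0 := by
    intro k h j
    rw [b.repr_self, Finsupp.single_apply]
    by_cases hkj : (⟨k, h⟩ : Fin n) = j
    · rw [if_pos hkj, if_pos (by rw [← hkj])]
    · rw [if_neg hkj, if_neg (fun hc => hkj (Fin.ext hc))]
  -- zero brackets
  have brz : ∀ p q : ℕ, 1 ≤ p → p ≤ n → 1 ≤ q → q ≤ n →
      ¬(p = 1 ∧ 2 ≤ q ∧ q ≤ n - 2) → ¬(q = 1 ∧ 2 ≤ p ∧ p ≤ n - 2) →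
      ¬(p + q = n + 1 ∧ 2 ≤ p ∧ p ≤ n - 1) → ⁅e p, e q⁆ = 0 := by
    intro p q hp1 hpn hq1 hqn h1 h2 h3
    rcases lt_trichotomy p q with h | h | h
    · refine hQ0 p q hp1 h hqn ?_ ?_
      · rintro ⟨rfl, hq⟩; exact h1 ⟨rfl, by omega, hq⟩
      · rintro ⟨hs, hp2⟩; exact h3 ⟨hs, hp2, by omega⟩
    · rw [h]; exact lie_self _
    · have h0 : ⁅e q, e p⁆ = 0 := by
        refine hQ0 q p hq1 h hpn ?_ ?_
        · rintro ⟨rfl, hp⟩; exact h2 ⟨rfl, by omega, hp⟩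
        · rintro ⟨hs, hq2⟩; exact h3 ⟨by omega, by omega, by omega⟩
      rw [← lie_skew, h0, neg_zero]
  have br2 : ∀ i : ℕ, 2 ≤ i → i ≤ n - 1 → ⁅e (n + 1 - i), e i⁆ = ((-1 : ℝ) ^ i) • e n := by
    intro i h2 h1
    have hj := hQ2 (n + 1 - i) (by omega) (by omega)
    rw [show n - (n + 1 - i) + 1 = i by omega] at hj
    rw [hj]
    congr 1
    rcases Nat.even_or_odd i with hi | hi
    · rw [Even.neg_one_pow (by rw [Nat.even_iff] at hi ⊢; omega), hi.neg_one_pow]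
    · rw [Odd.neg_one_pow (by rw [Nat.odd_iff] at hi ⊢; omega), hi.neg_one_pow]
  -- bracket with general x on the left
  have hsum : ∀ (x y : V), ⁅x, y⁆ = ∑ t : Fin n, b.repr x t • ⁅b t, y⁆ := by
    intro x y
    calc ⁅x, y⁆ = -(LieAlgebra.ad ℝ V y (∑ t : Fin n, b.repr x t • b t)) := by
          rw [b.sum_repr, LieAlgebra.ad_apply, lie_skew]
      _ = ∑ t : Fin n, b.repr x t • ⁅b t, y⁆ := by
          rw [map_sum, ← Finset.sum_neg_distrib]
          exact Finset.sum_congr rfl fun t _ => by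
            rw [map_smul, LieAlgebra.ad_apply, ← smul_neg, lie_skew]
  have M1 : ∀ (x : V) (i : ℕ) (h2 : 2 ≤ i) (h1 : i ≤ n - 1),
      ⁅x, e i⁆ = (if i ≤ n - 2 then b.repr x ⟨0, by omega⟩ • e (i + 1) else 0)
        + ((-1 : ℝ) ^ i * b.repr x ⟨n - i, by omega⟩) • e n := by
    intro x i h2 h1
    have hzz : ∀ t : Fin n, t ∈ Finset.univ →
        t ∉ ({⟨0, by omega⟩, ⟨n - i, by omega⟩} : Finset (Fin n)) →
        b.repr x t • ⁅b t, e i⁆ = 0 := by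
      intro t _ htm
      simp only [Finset.mem_insert, Finset.mem_singleton] at htm
      push_neg at htm
      have ht0 : (t : ℕ) ≠ 0 := fun hc => htm.1 (Fin.ext hc)
      have htn : (t : ℕ) ≠ n - i := fun hc => htm.2 (Fin.ext hc)
      rw [hb'' t, brz ((t : ℕ) + 1) i (by omega) (by omega) (by omega) (by omega)
          (by omega) (by omega) (by omega), smul_zero]
    rw [hsum x (e i), ← Finset.sum_subset
      (Finset.subset_univ ({⟨0, by omega⟩, ⟨n - i, by omega⟩} : Finset (Fin n))) hzz,
      Finset.sum_pair (by intro hc; exact (by omega : ¬(0 = n - i)) (congrArg Fin.val hc))]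
    congr 1
    · have hb0 : (⁅b ⟨0, by omega⟩, e i⁆ : V) = ⁅e 1, e i⁆ := by
        rw [← hbI 0 (by omega)]
      rw [hb0]
      by_cases hc : i ≤ n - 2
      · rw [if_pos hc, hQ1 i h2 hc]
      · rw [if_neg hc, brz 1 i (by omega) (by omega) (by omega) (by omega) (by omega)
          (by omega) (by omega), smul_zero]
    · have hbn : (⁅b ⟨n - i, by omega⟩, e i⁆ : V) = ((-1 : ℝ) ^ i) • e n := by
        rw [← hbI (n - i) (by omega), show n - i + 1 = n + 1 - i by omega, br2 i h2 h1]
      rw [hbn, smul_smul, mul_comm]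
  -- bracket with e 1 on the left
  have M2 : ∀ x : V, ⁅e 1, x⁆ = ∑ s : Fin n, b.repr x s •
      (if h : 1 ≤ (s : ℕ) ∧ (s : ℕ) + 1 ≤ n - 2 then b ⟨(s : ℕ) + 1, by omega⟩ else 0) := by
    intro x
    calc ⁅e 1, x⁆ = LieAlgebra.ad ℝ V (e 1) (∑ t : Fin n, b.repr x t • b t) := by
          rw [b.sum_repr, LieAlgebra.ad_apply]
      _ = ∑ s : Fin n, b.repr x s • ⁅e 1, b s⁆ := by
          rw [map_sum]
          exact Finset.sum_congr rfl fun s _ => by rw [map_smul, LieAlgebra.ad_apply]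
      _ = _ := by
          refine Finset.sum_congr rfl fun s _ => ?_
          congr 1
          rw [hb'' s]
          by_cases hs : 1 ≤ (s : ℕ) ∧ (s : ℕ) + 1 ≤ n - 2
          · rw [dif_pos hs, hQ1 ((s : ℕ) + 1) (by omega) hs.2, hbI ((s : ℕ) + 1) (by omega)]
          · rw [dif_neg hs]
            rcases Nat.eq_zero_or_pos (s : ℕ) with h0 | h0
            · rw [h0]; exact lie_self (e 1)
            · have hs2 : ¬((s : ℕ) + 1 ≤ n - 2) := fun hc => hs ⟨h0, hc⟩
              exact brz 1 ((s : ℕ) + 1) (by omega) (by omega) (by omega) (by omega)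
                (by omega) (by omega) (by omega)
  have M2c : ∀ (x : V) (t : Fin n), b.repr ⁅e 1, x⁆ t =
      if ht : 2 ≤ (t : ℕ) ∧ (t : ℕ) ≤ n - 2 then b.repr x ⟨(t : ℕ) - 1, by omega⟩ else 0 := by
    intro x t
    rw [M2 x, map_sum, Finsupp.finset_sum_apply]
    have hterm : ∀ s : Fin n,
        b.repr (b.repr x s • (if h : 1 ≤ (s : ℕ) ∧ (s : ℕ) + 1 ≤ n - 2
          then b ⟨(s : ℕ) + 1, by omega⟩ else 0)) t
        = b.repr x s * (if h : 1 ≤ (s : ℕ) ∧ (s : ℕ) + 1 ≤ n - 2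
          then (if (s : ℕ) + 1 = (t : ℕ) then 1 else 0) else 0) := by
      intro s
      rw [map_smul, Finsupp.smul_apply, smul_eq_mul]
      congr 1
      by_cases hs : 1 ≤ (s : ℕ) ∧ (s : ℕ) + 1 ≤ n - 2
      · rw [dif_pos hs, dif_pos hs, reprb]
      · rw [dif_neg hs, dif_neg hs, map_zero, Finsupp.zero_apply]
    rw [Finset.sum_congr rfl (fun s _ => hterm s)]
    by_cases ht : 2 ≤ (t : ℕ) ∧ (t : ℕ) ≤ n - 2
    · rw [dif_pos ht]
      rw [Finset.sum_eq_single (⟨(t : ℕ) - 1, by omega⟩ : Fin n)]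
      · rw [dif_pos (show 1 ≤ (t : ℕ) - 1 ∧ ((t : ℕ) - 1) + 1 ≤ n - 2 from ⟨by omega, by omega⟩),
          if_pos (show (t : ℕ) - 1 + 1 = (t : ℕ) by omega), mul_one]
      · intro s _ hst
        by_cases hs : 1 ≤ (s : ℕ) ∧ (s : ℕ) + 1 ≤ n - 2
        · rw [dif_pos hs, if_neg (fun hc => hst (Fin.ext (show (s : ℕ) = (t : ℕ) - 1 by omega))),
            mul_zero]
        · rw [dif_neg hs, mul_zero]
      · intro hc; exact absurd (Finset.mem_univ _) hc
    · rw [dif_neg ht]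
      apply Finset.sum_eq_zero
      intro s _
      by_cases hs : 1 ≤ (s : ℕ) ∧ (s : ℕ) + 1 ≤ n - 2
      · rw [dif_pos hs, if_neg (fun hc => ht ⟨by omega, by omega⟩), mul_zero]
      · rw [dif_neg hs, mul_zero]
  -- the scalars a and d
  obtain ⟨a, ha⟩ : ∃ a : ℝ, b.repr (D (e 1)) ⟨0, by omega⟩ = a := ⟨_, rfl⟩
  obtain ⟨d, hd⟩ : ∃ d : ℝ, b.repr (D (e 2)) ⟨1, by omega⟩ = d := ⟨_, rfl⟩
  -- c_{1,2} = 0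
  have hc12 : b.repr (D (e 2)) ⟨0, by omega⟩ = 0 := by
    have h23 : ⁅e 2, e 3⁆ = 0 := brz 2 3 (by omega) (by omega) (by omega) (by omega)
      (by omega) (by omega) (by omega)
    have hD23 := hD (e 2) (e 3)
    rw [h23, map_zero] at hD23
    have hsk : ⁅e 2, D (e 3)⁆ = -⁅D (e 3), e 2⁆ := (lie_skew _ _).symm
    rw [M1 (D (e 2)) 3 (by omega) (by omega), hsk, M1 (D (e 3)) 2 (by omega) (by omega),
      if_pos (show 3 ≤ n - 2 by omega), if_pos (show 2 ≤ n - 2 by omega),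
      hbI 3 (by omega), hbI 2 (by omega), hen] at hD23
    have h4 := congrArg (fun v => b.repr v ⟨3, by omega⟩) hD23
    simp only [map_add, map_neg, map_smul, map_zero, Finsupp.add_apply, Finsupp.neg_apply,
      Finsupp.smul_apply, Finsupp.zero_apply, smul_eq_mul, reprb,
      show ¬(n - 1 = 3) by omega, show ((2:ℕ) = 3) = False from by simp,
      mul_one, mul_zero, add_zero, zero_add, neg_zero, if_true, if_false, reduceIte] at h4
    exact h4.symm
  -- main induction: columns 2 .. n-1
  have KEY : ∀ j, 2 ≤ j → ∀ _ : j ≤ n - 1,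
      (∀ t : Fin n, (t : ℕ) + 1 < j → b.repr (D (e j)) t = 0) ∧
      b.repr (D (e j)) ⟨j - 1, by omega⟩ = d + ((j : ℝ) - 2) * a := by
    intro j hj2
    induction j, hj2 using Nat.le_induction with
    | base =>
      intro _
      constructor
      · intro t ht
        have ht0 : t = ⟨0, by omega⟩ := Fin.ext (show (t : ℕ) = 0 by omega)
        rw [ht0]; exact hc12
      · have h2 : d + (((2 : ℕ) : ℝ) - 2) * a = d := by norm_num
        rw [h2]
        exact hd
    | succ j hj IH =>
      intro hj1
      have hjn : j ≤ n - 2 := by omega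
      have IH' := IH (by omega)
      have hstep := hD (e 1) (e j)
      rw [hQ1 j hj hjn] at hstep
      rw [M1 (D (e 1)) j hj (by omega), if_pos hjn] at hstep
      conv at hstep =>
        rhs
        rw [hbI j (by omega), hen, ha]
      have hco : ∀ t : Fin n, b.repr (D (e (j + 1))) t =
          a * (if j = (t : ℕ) then 1 else 0)
          + ((-1 : ℝ) ^ j * b.repr (D (e 1)) ⟨n - j, by omega⟩)
              * (if n - 1 = (t : ℕ) then 1 else 0)
          + (if ht : 2 ≤ (t : ℕ) ∧ (t : ℕ) ≤ n - 2
              then b.repr (D (e j)) ⟨(t : ℕ) - 1, by omega⟩ else 0) := by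
        intro t
        rw [hstep, map_add, Finsupp.add_apply, M2c (D (e j)) t, map_add, Finsupp.add_apply,
          map_smul, map_smul, Finsupp.smul_apply, Finsupp.smul_apply, smul_eq_mul, smul_eq_mul,
          reprb, reprb]
      constructor
      · intro t ht
        rw [hco t, if_neg (show ¬(j = (t : ℕ)) by omega),
          if_neg (show ¬(n - 1 = (t : ℕ)) by omega), mul_zero, mul_zero, add_zero, zero_add]
        by_cases h2t : 2 ≤ (t : ℕ) ∧ (t : ℕ) ≤ n - 2
        · rw [dif_pos h2t]
          exact IH'.1 ⟨(t : ℕ) - 1, by omega⟩ (show (t : ℕ) - 1 + 1 < j by omega)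
        · rw [dif_neg h2t]
      · have main : ∀ t : Fin n, (t : ℕ) = j →
            b.repr (D (e (j + 1))) t = d + (((j : ℕ) : ℝ) + 1 - 2) * a := by
          intro t htj
          rw [hco t, if_pos htj.symm, if_neg (show ¬(n - 1 = (t : ℕ)) by omega),
            dif_pos (show 2 ≤ (t : ℕ) ∧ (t : ℕ) ≤ n - 2 from ⟨by omega, by omega⟩),
            mul_one, mul_zero, add_zero]
          have hrepr : b.repr (D (e j)) ⟨(t : ℕ) - 1, by omega⟩ = d + (((j : ℕ) : ℝ) - 2) * a := by
            rw [show (⟨(t : ℕ) - 1, by omega⟩ : Fin n) = ⟨j - 1, by omega⟩ from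
              Fin.ext (show (t : ℕ) - 1 = j - 1 by omega)]
            exact IH'.2
          rw [hrepr]
          ring
        have hcast : (((j + 1 : ℕ) : ℝ)) = ((j : ℕ) : ℝ) + 1 := by push_cast; ring
        rw [hcast]
        exact main ⟨j + 1 - 1, by omega⟩ (show j + 1 - 1 = j by omega)
  -- column n
  have hbrN : ⁅e 2, e (n - 1)⁆ = -e n := by
    have h := br2 (n - 1) (by omega) (le_refl _)
    rw [show n + 1 - (n - 1) = 2 by omega] at h
    rw [h, Odd.neg_one_pow (by rw [Nat.odd_iff]; omega), neg_smul, one_smul]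
  have hcoln : D (e n) = (2 * d + ((n : ℝ) - 3) * a) • e n := by
    have hDn := hD (e 2) (e (n - 1))
    rw [hbrN, map_neg] at hDn
    have hsk : ⁅e 2, D (e (n - 1))⁆ = -⁅D (e (n - 1)), e 2⁆ := (lie_skew _ _).symm
    rw [M1 (D (e 2)) (n - 1) (by omega) (le_refl _), if_neg (show ¬(n - 1 ≤ n - 2) by omega),
      hsk, M1 (D (e (n - 1))) 2 (by omega) (by omega), if_pos (show 2 ≤ n - 2 by omega)] at hDn
    have hre1 : b.repr (D (e 2)) ⟨n - (n - 1), by omega⟩ = d := by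
      rw [show (⟨n - (n - 1), by omega⟩ : Fin n) = ⟨1, by omega⟩ from
        Fin.ext (show n - (n - 1) = 1 by omega)]
      exact hd
    have hre0 : b.repr (D (e (n - 1))) ⟨0, by omega⟩ = 0 :=
      (KEY (n - 1) (by omega) (le_refl _)).1 ⟨0, by omega⟩ (show 0 + 1 < n - 1 by omega)
    have hre2 : b.repr (D (e (n - 1))) ⟨n - 2, by omega⟩ = d + ((n : ℝ) - 3) * a := by
      have h := (KEY (n - 1) (by omega) (le_refl _)).2
      rw [show (⟨n - 1 - 1, by omega⟩ : Fin n) = ⟨n - 2, by omega⟩ from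
        Fin.ext (show n - 1 - 1 = n - 2 by omega)] at h
      rw [h, show (((n - 1 : ℕ) : ℝ)) = (n : ℝ) - 1 by push_cast [Nat.cast_sub (by omega : 1 ≤ n)]; ring]
      ring
    rw [hre1, hre0, hre2, Odd.neg_one_pow (show Odd (n - 1) by rw [Nat.odd_iff]; omega),
      zero_smul, zero_add] at hDn
    have hgoal : D (e n) = -((-1 * d) • e n + -(0 + ((-1 : ℝ) ^ 2 * (d + ((n : ℝ) - 3) * a)) • e n)) := by
      rw [← hDn, neg_neg]
    rw [hgoal]
    norm_num
    module
  -- triangularity and diagonal of the matrix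
  have tri : ∀ r s : Fin n, r < s → b.repr (D (b s)) r = 0 := by
    intro r s hrs
    have hv : (r : ℕ) < (s : ℕ) := hrs
    rw [hb'' s]
    by_cases hN : (s : ℕ) = n - 1
    · rw [show (s : ℕ) + 1 = n by omega, hcoln, map_smul, Finsupp.smul_apply, smul_eq_mul,
        hen, reprb, if_neg (by omega), mul_zero]
    · exact (KEY ((s : ℕ) + 1) (by omega) (by omega)).1 r (by omega)
  have hdiag : ∀ j : Fin n, b.repr (D (b j)) j =
      (if (j : ℕ) = 0 then a else if (j : ℕ) = n - 1 then 2 * d + ((n : ℝ) - 3) * a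
        else d + (((j : ℕ) : ℝ) - 1) * a) := by
    intro j
    by_cases h0 : (j : ℕ) = 0
    · rw [if_pos h0]
      have hj : j = ⟨0, by omega⟩ := Fin.ext h0
      rw [hj, ← hbI 0 (by omega)]
      exact ha
    · rw [if_neg h0]
      by_cases hN : (j : ℕ) = n - 1
      · rw [if_pos hN]
        have hj : j = ⟨n - 1, by omega⟩ := Fin.ext hN
        rw [hj, ← hen, hcoln, map_smul, Finsupp.smul_apply, smul_eq_mul, hen, reprb,
          if_pos rfl, mul_one]
      · rw [if_neg hN, hb'' j]
        calc b.repr (D (e ((j : ℕ) + 1))) j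
            = d + ((((j : ℕ) + 1 : ℕ) : ℝ) - 2) * a :=
              (KEY ((j : ℕ) + 1) (by omega) (by omega)).2
          _ = d + (((j : ℕ) : ℝ) - 1) * a := by push_cast; ring
  -- characteristic polynomial
  have hcp : LinearMap.charpoly D = ∏ i : Fin n,
      (X - C (if (i : ℕ) = 0 then a else if (i : ℕ) = n - 1 then 2 * d + ((n : ℝ) - 3) * a
        else d + (((i : ℕ) : ℝ) - 1) * a)) := by
    rw [← LinearMap.charpoly_toMatrix D b, Matrix.charpoly,
      Matrix.det_of_lowerTriangular (Matrix.charmatrix (LinearMap.toMatrix b b D))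
        (by
          intro i j hij
          have h' : i < j := hij
          rw [Matrix.charmatrix_apply_ne _ _ _ (ne_of_lt h'), LinearMap.toMatrix_apply,
            tri i j h', map_zero, neg_zero])]
    refine Finset.prod_congr rfl fun i _ => ?_
    rw [Matrix.charmatrix_apply_eq, LinearMap.toMatrix_apply, hdiag i]
  refine ⟨?_, a, d, ?_⟩
  · -- preservation of the ideals
    intro k hk3 hkn x hx
    have himg : e '' Set.Icc k n = b '' {s : Fin n | k - 1 ≤ (s : ℕ)} := by
      ext v
      simp only [Set.mem_image, Set.mem_Icc, Set.mem_setOf_eq]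
      constructor
      · rintro ⟨r, ⟨hr1, hr2⟩, rfl⟩
        refine ⟨⟨r - 1, by omega⟩, show k - 1 ≤ r - 1 by omega, ?_⟩
        rw [← hbI (r - 1) (by omega), show r - 1 + 1 = r by omega]
      · rintro ⟨s, hs, rfl⟩
        exact ⟨(s : ℕ) + 1, ⟨by omega, by omega⟩, hbI (s : ℕ) s.isLt⟩
    rw [himg, Module.Basis.mem_span_image] at hx ⊢
    intro t ht
    simp only [Set.mem_setOf_eq]
    by_contra hlt
    push_neg at hlt
    have hz : b.repr (D x) t = 0 := by
      have hxs : D x = ∑ s : Fin n, b.repr x s • D (b s) := by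
        conv_lhs => rw [← b.sum_repr x, map_sum]
        exact Finset.sum_congr rfl fun s _ => map_smul D _ _
      rw [hxs, map_sum, Finsupp.finset_sum_apply]
      apply Finset.sum_eq_zero
      intro s _
      rw [map_smul, Finsupp.smul_apply, smul_eq_mul]
      by_cases hs : k - 1 ≤ (s : ℕ)
      · rw [tri t s (show (t : ℕ) < (s : ℕ) by omega), mul_zero]
      · have hns : s ∉ (b.repr x).support := fun hc => hs (hx hc)
        rw [Finsupp.notMem_support_iff.mp hns, zero_mul]
    exact (Finsupp.mem_support_iff.mp ht) hz
  · -- the characteristic polynomial formula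
    have hsplit : ∀ (A B : ℝ[X]) (g : ℕ → ℝ[X]),
        (∏ k ∈ Finset.range n, (if k = 0 then A else if k = n - 1 then B else g k))
          = A * (∏ k ∈ Finset.range (n - 2), g (k + 1)) * B := by
      intro A B g
      rw [show Finset.range n = Finset.range ((n - 2) + 1 + 1) by
          rw [show n - 2 + 1 + 1 = n by omega],
        Finset.prod_range_succ, Finset.prod_range_succ']
      rw [Finset.prod_congr rfl (fun i hi => by
        rw [if_neg (show ¬(i + 1 = 0) by omega),
          if_neg (show ¬(i + 1 = n - 1) from by have := Finset.mem_range.mp hi; omega)])]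
      rw [if_pos rfl, show n - 2 + 1 = n - 1 by omega,
        if_neg (show ¬(n - 1 = 0) by omega), if_pos rfl]
      ring
    have hrange : (∏ i : Fin n,
        (X - C (if (i : ℕ) = 0 then a else if (i : ℕ) = n - 1 then 2 * d + ((n : ℝ) - 3) * a
          else d + (((i : ℕ) : ℝ) - 1) * a)))
        = ∏ k ∈ Finset.range n,
          (X - C (if k = 0 then a else if k = n - 1 then 2 * d + ((n : ℝ) - 3) * a
            else d + ((k : ℝ) - 1) * a)) :=
      Fin.prod_univ_eq_prod_range
        (fun k => X - C (if k = 0 then a else if k = n - 1 then 2 * d + ((n : ℝ) - 3) * a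
          else d + ((k : ℝ) - 1) * a)) n
    rw [hcp, hrange]
    calc (∏ k ∈ Finset.range n,
          (X - C (if k = 0 then a else if k = n - 1 then 2 * d + ((n : ℝ) - 3) * a
            else d + ((k : ℝ) - 1) * a)))
        = ∏ k ∈ Finset.range n, (if k = 0 then X - C a
            else if k = n - 1 then X - C (2 * d + ((n : ℝ) - 3) * a)
            else X - C (d + ((k : ℝ) - 1) * a)) :=
          Finset.prod_congr rfl fun k _ => by split_ifs <;> rfl
      _ = (X - C a) * (∏ k ∈ Finset.range (n - 2), (X - C (d + (((k + 1 : ℕ) : ℝ) - 1) * a)))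
            * (X - C (2 * d + ((n : ℝ) - 3) * a)) :=
          hsplit (X - C a) (X - C (2 * d + ((n : ℝ) - 3) * a))
            (fun k => X - C (d + ((k : ℝ) - 1) * a))
      _ = (X - C a) * (∏ i ∈ Finset.Icc 2 (n - 1), (X - C (d + ((i : ℝ) - 2) * a)))
            * (X - C (2 * d + ((n : ℝ) - 3) * a)) := by
          congr 1
          congr 1
          rw [show Finset.Icc 2 (n - 1) = Finset.Ico 2 n from by
              rw [← Finset.Ico_add_one_right_eq_Icc, show n - 1 + 1 = n by omega],
            Finset.prod_Ico_eq_prod_range]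
          refine Finset.prod_congr rfl fun k _ => ?_
          rw [show d + (((k + 1 : ℕ) : ℝ) - 1) * a = d + (((2 + k : ℕ) : ℝ) - 2) * a from by
            push_cast; ring]
end
end

section
/- Let n ≥ 5 and let 𝔫 be a real Lie algebra with basis Y_1, ..., Y_n satisfying [Y_1, Y_i] = Y_{i+1} for 2 ≤ i ≤ n−1, [Y_i, Y_j] = K_{ij} Y_n for 2 ≤ i, j ≤ n−1 with K skew-symmetric, and [Y_i, Y_n] = 0 for all i. Then the Jacobi identity forces K_{i,j+1} + K_{i+1,j} = 0 for 2 ≤ i, j ≤ n−2 and K_{i+1,n−1} = 0 for 2 ≤ i ≤ n−2; consequently K_{ij} = 0 whenever i + j > n + 1 or i + j is even, and for every odd k ≤ n+1 one has K_{2,k−2} = −K_{3,k−3} = K_{4,k−4} = ⋯ = −K_{k−2,2}. -/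
noncomputable section

open scoped BigOperators RealInnerProductSpace

/-- The computation with the Jacobi identity in the proof of **Lemma 2(1)**: for a real Lie
algebra with basis `Y 1, …, Y n` (`n ≥ 5`) satisfying `[Y_1, Y_i] = Y_{i+1}` for
`2 ≤ i ≤ n−1`, `[Y_i, Y_j] = K_{ij} Y_n` for `2 ≤ i, j ≤ n−1` (`K` skew-symmetric) and
`[Y_i, Y_n] = 0`, one has `K_{i,j+1} + K_{i+1,j} = 0` for `2 ≤ i, j ≤ n−2` and
`K_{i+1,n−1} = 0` for `2 ≤ i ≤ n−2`; consequently `K_{ij} = 0` whenever `i + j > n + 1` or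
`i + j` is even, and `K_{2,k−2} = −K_{3,k−3} = K_{4,k−4} = ⋯ = −K_{k−2,2}` for every odd
`k ≤ n + 1`. -/
theorem statement9 (n : ℕ) (hn : 5 ≤ n)
    (𝔫 : Type) [LieRing 𝔫] [LieAlgebra ℝ 𝔫]
    (Y : ℕ → 𝔫) (hbasis : IsBasisSeq ℝ n Y)
    (K : ℕ → ℕ → ℝ)
    (hskew : ∀ i j, 2 ≤ i → i ≤ n - 1 → 2 ≤ j → j ≤ n - 1 → K i j = - K j i)
    (hrel1 : ∀ i, 2 ≤ i → i ≤ n - 1 → ⁅Y 1, Y i⁆ = Y (i + 1))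
    (hrel2 : ∀ i j, 2 ≤ i → i ≤ n - 1 → 2 ≤ j → j ≤ n - 1 → ⁅Y i, Y j⁆ = K i j • Y n)
    (hrel3 : ∀ i, 1 ≤ i → i ≤ n → ⁅Y i, Y n⁆ = 0) :
    (∀ i j, 2 ≤ i → i ≤ n - 2 → 2 ≤ j → j ≤ n - 2 → K i (j + 1) + K (i + 1) j = 0) ∧
    (∀ i, 2 ≤ i → i ≤ n - 2 → K (i + 1) (n - 1) = 0) ∧
    (∀ i j, 2 ≤ i → i ≤ n - 1 → 2 ≤ j → j ≤ n - 1 → (n + 1 < i + j ∨ Even (i + j)) →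
      K i j = 0) ∧
    (∀ k, Odd k → k ≤ n + 1 → ∀ i, 2 ≤ i → i ≤ k - 2 →
      K i (k - i) = (-1 : ℝ) ^ i * K 2 (k - 2)) := by

  obtain ⟨b, hb⟩ := hbasis
  have hz : ∀ r : ℝ, r • Y n = 0 → r = 0 := by
    intro r hr
    by_contra h
    have hYn : Y n = b ⟨n - 1, by omega⟩ := by
      have := hb ⟨n - 1, by omega⟩
      simpa [Nat.sub_add_cancel (by omega : 1 ≤ n)] using this
    apply b.ne_zero ⟨n - 1, by omega⟩
    rw [← hYn]
    have := congrArg (fun x => r⁻¹ • x) hr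
    simpa [smul_smul, inv_mul_cancel₀ h] using this
  have key1 : ∀ i j, 2 ≤ i → i ≤ n - 2 → 2 ≤ j → j ≤ n - 2 →
      K i (j + 1) + K (i + 1) j = 0 := by
    intro i j hi hi' hj hj'
    have jac := leibniz_lie (Y 1) (Y i) (Y j)
    rw [hrel2 i j hi (by omega) hj (by omega), lie_smul, hrel3 1 le_rfl (by omega),
      smul_zero, hrel1 i hi (by omega), hrel1 j hj (by omega),
      hrel2 (i + 1) j (by omega) (by omega) hj (by omega),
      hrel2 i (j + 1) hi (by omega) (by omega) (by omega)] at jac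
    have := hz (K (i + 1) j + K i (j + 1)) (by rw [add_smul]; exact jac.symm)
    linarith
  have key2 : ∀ i, 2 ≤ i → i ≤ n - 2 → K (i + 1) (n - 1) = 0 := by
    intro i hi hi'
    have jac := leibniz_lie (Y 1) (Y i) (Y (n - 1))
    rw [hrel2 i (n - 1) hi (by omega) (by omega) le_rfl, lie_smul,
      hrel3 1 le_rfl (by omega), smul_zero, hrel1 i hi (by omega),
      hrel1 (n - 1) (by omega) le_rfl, show n - 1 + 1 = n from by omega,
      hrel3 i (by omega) (by omega), add_zero,
      hrel2 (i + 1) (n - 1) (by omega) (by omega) (by omega) le_rfl] at jac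
    exact hz _ jac.symm
  have P : ∀ i, 2 ≤ i → ∀ j, 2 ≤ j → i ≤ n - 1 → j ≤ n - 1 → i + j ≤ n + 1 →
      K i j = (-1 : ℝ) ^ i * K 2 (i + j - 2) := by
    intro i hi
    induction i, hi using Nat.le_induction with
    | base =>
      intro j hj _ _ _
      rw [show 2 + j - 2 = j from by omega]
      norm_num
    | succ i hi ih =>
      intro j hj hii hjj hs
      have h1 := key1 i j hi (by omega) hj (by omega)
      have h2 := ih (j + 1) (by omega) (by omega) (by omega) (by omega)
      rw [show i + (j + 1) - 2 = i + 1 + j - 2 from by omega] at h2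
      linear_combination h1 - h2
  have Q : ∀ d i j, 2 ≤ i → 2 ≤ j → i ≤ n - 1 → j ≤ n - 1 → n + 2 ≤ i + j →
      n - 1 - j = d → K i j = 0 := by
    intro d
    induction d with
    | zero =>
      intro i j hi hj hii hjj hs hd
      have hj' : j = n - 1 := by omega
      have := key2 (i - 1) (by omega) (by omega)
      rw [show i - 1 + 1 = i from by omega] at this
      rw [hj']
      exact this
    | succ d ih =>
      intro i j hi hj hii hjj hs hd
      have h1 := key1 (i - 1) j (by omega) (by omega) hj (by omega)
      have h2 := ih (i - 1) (j + 1) (by omega) (by omega) (by omega) (by omega)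
        (by omega) (by omega)
      rw [show i - 1 + 1 = i from by omega] at h1
      linarith
  refine ⟨key1, key2, ?_, ?_⟩
  · intro i j hi hii hj hjj h
    by_cases hgt : n + 1 < i + j
    · exact Q (n - 1 - j) i j hi hj hii hjj (by omega) rfl
    · have hev : Even (i + j) := by tauto
      have p1 := P i hi j hj hii hjj (by omega)
      have p2 := P j hj i hi hjj hii (by omega)
      rw [show j + i - 2 = i + j - 2 from by omega] at p2
      have hsk := hskew i j hi hii hj hjj
      have hab : (-1 : ℝ) ^ i * (-1 : ℝ) ^ j = 1 := by
        rw [← pow_add]; exact Even.neg_one_pow hev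
      have ha2 : (-1 : ℝ) ^ i * (-1 : ℝ) ^ i = 1 := by
        rw [← pow_add]; exact Even.neg_one_pow ⟨i, rfl⟩
      have hsum : (-1 : ℝ) ^ i * K 2 (i + j - 2) + (-1 : ℝ) ^ j * K 2 (i + j - 2) = 0 := by
        rw [← p1, ← p2]; linarith
      have hC : K 2 (i + j - 2) = 0 := by
        linear_combination ((-1 : ℝ) ^ i / 2) * hsum - (K 2 (i + j - 2) / 2) * ha2
          - (K 2 (i + j - 2) / 2) * hab
      rw [p1, hC, mul_zero]
  · intro k hk hkn i hi hik
    have := P i hi (k - i) (by omega) (by omega) (by omega) (by omega)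
    rw [show i + (k - i) - 2 = k - 2 from by omega] at this
    exact this
end
end

section
/- Let n = 2m ≥ 6 be even, equip Q_n with an inner product, and let e_1, ..., e_n be an orthonormal basis of Q_n such that span(e_k, ..., e_n) = span(X_k, ..., X_n) for every k = 1, ..., n. Then: (i) e_n is a nonzero multiple of X_n and spans the centre of Q_n; (ii) for 2 ≤ i ≤ n−2, [e_1, e_i] = c_i e_{i+1} + e' with c_i ≠ 0 and e' ∈ span(e_{i+2}, ..., e_n); (iii) for 2 ≤ i, j ≤ n−1, [e_i, e_j] is a scalar multiple of e_n, and [e_i, e_j] = 0 whenever i + j > n + 1. -/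
noncomputable section

open scoped BigOperators RealInnerProductSpace

lemma lie_mem_span_of {V : Type*} [LieRing V] [LieAlgebra ℝ V] {s t : Set V} {p : Submodule ℝ V}
    (h : ∀ x ∈ s, ∀ y ∈ t, ⁅x, y⁆ ∈ p) :
    ∀ x ∈ Submodule.span ℝ s, ∀ y ∈ Submodule.span ℝ t, ⁅x, y⁆ ∈ p := by
  intro x hx
  induction hx using Submodule.span_induction with
  | mem x hxs =>
    intro y hy
    induction hy using Submodule.span_induction with
    | mem y hyt => exact h x hxs y hyt
    | zero => simp
    | add a b _ _ ha hb => rw [lie_add]; exact p.add_mem ha hb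
    | smul c a _ ha => rw [lie_smul]; exact p.smul_mem c ha
  | zero => intro y hy; simp
  | add a b _ _ ha hb => intro y hy; rw [add_lie]; exact p.add_mem (ha y hy) (hb y hy)
  | smul c a _ ha => intro y hy; rw [smul_lie]; exact p.smul_mem c (ha y hy)

/-- **Lemma 4 (parts 1–3).** Equip `Q_n` (`n = 2m ≥ 6`, with basis `X 1, …, X n` realizing
the `Q_n` relations) with an inner product `ip`, and let `e 1, …, e n` be an orthonormal
basis with `span(e_k, …, e_n) = span(X_k, …, X_n)` for all `k`. Then: (i) `e_n` is a nonzero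
multiple of `X_n` and spans the centre of `Q_n`; (ii) for `2 ≤ i ≤ n−2`,
`[e_1, e_i] = c_i e_{i+1} + e'` with `c_i ≠ 0` and `e' ∈ span(e_{i+2}, …, e_n)`; (iii) for
`2 ≤ i, j ≤ n−1`, `[e_i, e_j]` is a multiple of `e_n`, and `[e_i, e_j] = 0` whenever
`i + j > n + 1`. -/
theorem statement10 (m n : ℕ) (hm : 3 ≤ m) (hn : n = 2 * m)
    (V : Type) [LieRing V] [LieAlgebra ℝ V]
    (X : ℕ → V) (hX : IsQnBasis ℝ n X)
    (ip : V →ₗ[ℝ] V →ₗ[ℝ] ℝ)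
    (hsymm : ∀ x y, ip x y = ip y x) (hpos : ∀ x, x ≠ 0 → 0 < ip x x)
    (e : ℕ → V)
    (horth : ∀ i j, 1 ≤ i → i ≤ n → 1 ≤ j → j ≤ n →
      ip (e i) (e j) = if i = j then (1 : ℝ) else 0)
    (hspan : ∀ k, 1 ≤ k → k ≤ n →
      Submodule.span ℝ (e '' Set.Icc k n) = Submodule.span ℝ (X '' Set.Icc k n)) :
    (∃ c : ℝ, c ≠ 0 ∧ e n = c • X n) ∧
    (LieSubmodule.toSubmodule (LieAlgebra.center ℝ V) = Submodule.span ℝ {e n}) ∧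
    (∀ i, 2 ≤ i → i ≤ n - 2 → ∃ c : ℝ, c ≠ 0 ∧
      ⁅e 1, e i⁆ - c • e (i + 1) ∈ Submodule.span ℝ (e '' Set.Icc (i + 2) n)) ∧
    (∀ i j, 2 ≤ i → i ≤ n - 1 → 2 ≤ j → j ≤ n - 1 → ∃ c : ℝ, ⁅e i, e j⁆ = c • e n) ∧
    (∀ i j, 2 ≤ i → i ≤ n - 1 → 2 ≤ j → j ≤ n - 1 → n + 1 < i + j → ⁅e i, e j⁆ = 0) := by
  obtain ⟨⟨bX, hbX⟩, hQ1, hQ2, hQ3⟩ := hX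
  have hn6 : 6 ≤ n := by omega
  set F : ℕ → Submodule ℝ V := fun k => Submodule.span ℝ (X '' Set.Icc k n) with hFdef
  have hXmem : ∀ i k, k ≤ i → i ≤ n → X i ∈ F k := fun i k h1 h2 =>
    Submodule.subset_span ⟨i, ⟨h1, h2⟩, rfl⟩
  have hFmono : ∀ k l, k ≤ l → F l ≤ F k := fun k l h =>
    Submodule.span_mono (Set.image_mono (Set.Icc_subset_Icc_left h))
  have hFtop : F 1 = ⊤ := by
    rw [eq_top_iff, ← bX.span_eq]
    apply Submodule.span_le.mpr
    rintro _ ⟨i, rfl⟩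
    exact (hbX i) ▸ hXmem ((i : ℕ) + 1) 1 (by omega) (by have := i.isLt; omega)
  have hFbot : F (n + 1) = ⊥ := by
    simp only [hFdef]
    rw [Set.Icc_eq_empty (by omega)]
    simp
  have hXeq : ∀ k (hk : 1 ≤ k) (hk' : k ≤ n), X k = bX ⟨k - 1, by omega⟩ := by
    intro k hk hk'
    rw [← hbX ⟨k - 1, by omega⟩]
    congr 1
    simp
    omega
  have hXne : ∀ k, 1 ≤ k → k ≤ n → X k ≠ 0 := by
    intro k h1 h2
    rw [hXeq k h1 h2]
    exact bX.ne_zero _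
  have hXnotin : ∀ k, 1 ≤ k → k ≤ n → X k ∉ F (k + 1) := by
    intro k h1 h2 hmem
    have himg : X '' Set.Icc (k + 1) n ⊆ bX '' {i : Fin n | k ≤ (i : ℕ)} := by
      rintro _ ⟨j, ⟨hj1, hj2⟩, rfl⟩
      refine ⟨⟨j - 1, by omega⟩, by simp; omega, ?_⟩
      rw [← hbX ⟨j - 1, by omega⟩]
      congr 1
      simp
      omega
    have hnotin : bX ⟨k - 1, by omega⟩ ∉ Submodule.span ℝ (bX '' {i : Fin n | k ≤ (i : ℕ)}) :=
      bX.linearIndependent.notMem_span_image (by simp only [Set.mem_setOf_eq]; omega)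
    exact hnotin (Submodule.span_mono himg ((hXeq k h1 h2) ▸ hmem))
  -- bracket relations on the X basis
  have hL1 : ∀ i, 2 ≤ i → i ≤ n → ⁅X 1, X i⁆ ∈ F (i + 1) := by
    intro i h2 hn'
    by_cases h : i ≤ n - 2
    · rw [hQ1 i h2 h]; exact hXmem _ _ le_rfl (by omega)
    · rw [hQ3 1 i le_rfl (by omega) hn' (by rintro ⟨_, h'⟩; omega) (by rintro ⟨_, h'⟩; omega)]
      exact zero_mem _
  have hL2zero : ∀ a b, 2 ≤ a → 2 ≤ b → a ≤ n → b ≤ n → a + b ≠ n + 1 → ⁅X a, X b⁆ = 0 := by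
    intro a b ha hb han hbn hab
    rcases lt_trichotomy a b with h | h | h
    · exact hQ3 a b (by omega) h hbn (by rintro ⟨h', _⟩; omega) (by rintro ⟨h', _⟩; omega)
    · rw [h]; exact lie_self _
    · rw [← lie_skew,
        hQ3 b a (by omega) h han (by rintro ⟨h', _⟩; omega) (by rintro ⟨h', _⟩; omega), neg_zero]
  have hL2 : ∀ a b, 2 ≤ a → 2 ≤ b → a ≤ n → b ≤ n →
      ⁅X a, X b⁆ ∈ Submodule.span ℝ {X n} := by
    intro a b ha hb han hbn
    by_cases hab : a + b = n + 1
    · have hb' : b = n - a + 1 := by omega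
      rw [hb', hQ2 a ha (by omega)]
      exact Submodule.smul_mem _ _ (Submodule.mem_span_singleton_self _)
    · rw [hL2zero a b ha hb han hbn hab]; exact zero_mem _
  have hL3 : ∀ i, 1 ≤ i → i ≤ n → ⁅X i, X n⁆ = 0 := by
    intro i h1 h2
    rcases eq_or_lt_of_le h2 with h | h
    · rw [h]; exact lie_self _
    · exact hQ3 i n h1 h le_rfl (by rintro ⟨_, h'⟩; omega) (by rintro ⟨h', h''⟩; omega)
  -- span-level bracket lemmas
  have hM1 : ∀ k, 2 ≤ k → ∀ y ∈ F k, ⁅X 1, y⁆ ∈ F (k + 1) := by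
    intro k hk y hy
    refine lie_mem_span_of (s := {X 1}) (t := X '' Set.Icc k n) ?_ (X 1)
      (Submodule.mem_span_singleton_self _) y hy
    rintro x hx _ ⟨j, ⟨hj1, hj2⟩, rfl⟩
    rw [Set.mem_singleton_iff] at hx
    subst hx
    exact hFmono (k + 1) (j + 1) (by omega) (hL1 j (by omega) hj2)
  have hM2 : ∀ a b, 2 ≤ a → 2 ≤ b → ∀ x ∈ F a, ∀ y ∈ F b,
      ⁅x, y⁆ ∈ Submodule.span ℝ {X n} := by
    intro a b ha hb
    refine lie_mem_span_of ?_
    rintro _ ⟨i, ⟨hi1, hi2⟩, rfl⟩ _ ⟨j, ⟨hj1, hj2⟩, rfl⟩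
    exact hL2 i j (by omega) (by omega) hi2 hj2
  have hM2zero : ∀ a b, 2 ≤ a → 2 ≤ b → n + 1 < a + b → ∀ x ∈ F a, ∀ y ∈ F b,
      ⁅x, y⁆ = 0 := by
    intro a b ha hb hab x hx y hy
    have : ⁅x, y⁆ ∈ (⊥ : Submodule ℝ V) := by
      refine lie_mem_span_of ?_ x hx y hy
      rintro _ ⟨i, ⟨hi1, hi2⟩, rfl⟩ _ ⟨j, ⟨hj1, hj2⟩, rfl⟩
      rw [Submodule.mem_bot]
      exact hL2zero i j (by omega) (by omega) hi2 hj2 (by omega)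
    exact (Submodule.mem_bot ℝ).mp this
  have hspanXn : ∀ k, k ≤ n → Submodule.span ℝ {X n} ≤ F k := by
    intro k hk
    rw [Submodule.span_le, Set.singleton_subset_iff]
    exact hXmem n k hk le_rfl
  -- e-side facts
  have hE : ∀ k, 1 ≤ k → k ≤ n + 1 → Submodule.span ℝ (e '' Set.Icc k n) = F k := by
    intro k h1 h2
    rcases Nat.lt_or_ge k (n + 1) with h | h
    · exact hspan k h1 (by omega)
    · have hempty : Set.Icc k n = (∅ : Set ℕ) := Set.Icc_eq_empty (by omega)
      have hk' : k = n + 1 := by omega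
      rw [hempty, hk', hFbot]
      simp
  have hFsplit : ∀ k, k ≤ n → F k = Submodule.span ℝ {X k} ⊔ F (k + 1) := by
    intro k hk
    simp only [hFdef]
    rw [show Set.Icc k n = insert k (Set.Icc (k + 1) n) by
      ext x; simp only [Set.mem_Icc, Set.mem_insert_iff]; omega]
    rw [Set.image_insert_eq, Submodule.span_insert]
  have hemem : ∀ k, 1 ≤ k → k ≤ n → e k ∈ F k := by
    intro k h1 h2
    rw [← hE k h1 (by omega)]
    exact Submodule.subset_span ⟨k, ⟨le_rfl, h2⟩, rfl⟩
  have hdec : ∀ k, 1 ≤ k → k ≤ n → ∃ c : ℝ, c ≠ 0 ∧ ∃ w ∈ F (k + 1), e k = c • X k + w := by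
    intro k h1 h2
    have hek : e k ∈ Submodule.span ℝ {X k} ⊔ F (k + 1) := (hFsplit k h2) ▸ hemem k h1 h2
    obtain ⟨u, hu, w, hw, heq⟩ := Submodule.mem_sup.mp hek
    obtain ⟨c, hc⟩ := Submodule.mem_span_singleton.mp hu
    refine ⟨c, ?_, w, hw, by rw [← heq, ← hc]⟩
    intro hc0
    have hek1 : e k ∈ F (k + 1) := by
      rw [← heq, ← hc, hc0, zero_smul, zero_add]; exact hw
    have hsub : Submodule.span ℝ (e '' Set.Icc k n) ≤ F (k + 1) := by
      apply Submodule.span_le.mpr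
      rintro _ ⟨j, ⟨hj1, hj2⟩, rfl⟩
      rcases Nat.eq_or_lt_of_le hj1 with h | h
      · rw [← h]; exact hek1
      · rw [← hE (k + 1) (by omega) (by omega)]
        exact Submodule.subset_span ⟨j, ⟨h, hj2⟩, rfl⟩
    exact hXnotin k h1 h2 (hsub (by rw [hE k h1 (by omega)]; exact hXmem k k le_rfl h2))
  -- part (i): e n = c • X n
  obtain ⟨cn, hcn, wn, hwn, hen⟩ := hdec n (by omega) le_rfl
  have hwn0 : wn = 0 := by rw [hFbot] at hwn; exact (Submodule.mem_bot ℝ).mp hwn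
  have hen' : e n = cn • X n := by rw [hen, hwn0, add_zero]
  have hspan_en : Submodule.span ℝ {e n} = Submodule.span ℝ {X n} := by
    rw [hen']
    exact Submodule.span_singleton_smul_eq (isUnit_iff_ne_zero.mpr hcn) _
  -- X n is central
  have hXncen : ∀ y : V, ⁅y, X n⁆ = 0 := by
    intro y
    have hy : y ∈ F 1 := hFtop ▸ Submodule.mem_top
    have : ⁅y, X n⁆ ∈ (⊥ : Submodule ℝ V) := by
      refine lie_mem_span_of (t := {X n}) ?_ y hy (X n) (Submodule.mem_span_singleton_self _)
      rintro _ ⟨i, ⟨hi1, hi2⟩, rfl⟩ z hz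
      rw [Set.mem_singleton_iff] at hz
      subst hz
      rw [Submodule.mem_bot]
      exact hL3 i hi1 hi2
    exact (Submodule.mem_bot ℝ).mp this
  -- centre computation
  have hFn : F n = Submodule.span ℝ {X n} := by
    simp only [hFdef]
    rw [Set.Icc_self, Set.image_singleton]
  have hcenter : LieSubmodule.toSubmodule (LieAlgebra.center ℝ V) = Submodule.span ℝ {e n} := by
    rw [hspan_en]
    apply le_antisymm
    · intro z hz
      have hz' : ∀ y : V, ⁅y, z⁆ = 0 := (LieModule.mem_maxTrivSubmodule ℝ V V z).mp hz
      have key : ∀ j : ℕ, j + 1 ≤ n → z ∈ F (j + 1) := by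
        intro j
        induction j with
        | zero => intro _; rw [hFtop]; exact Submodule.mem_top
        | succ j ih =>
          intro hj
          have hzj : z ∈ Submodule.span ℝ {X (j + 1)} ⊔ F (j + 2) :=
            (hFsplit (j + 1) (by omega)) ▸ ih (by omega)
          obtain ⟨u, hu, w, hw, heq⟩ := Submodule.mem_sup.mp hzj
          obtain ⟨c, hc⟩ := Submodule.mem_span_singleton.mp hu
          have hzeq : z = c • X (j + 1) + w := by rw [← heq, ← hc]
          suffices hc0 : c = 0 by
            rw [hzeq, hc0, zero_smul, zero_add]; exact hw
          by_cases hk1 : j = 0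
          · subst hk1
            have h0 : ⁅X 2, z⁆ = 0 := hz' _
            rw [hzeq, lie_add, lie_smul] at h0
            have h21 : ⁅X 2, X 1⁆ = -X 3 := by
              rw [← lie_skew, hQ1 2 le_rfl (by omega)]
            rw [h21, smul_neg, add_comm, ← sub_eq_add_neg] at h0
            have hc3 : ⁅X 2, w⁆ = c • X 3 := sub_eq_zero.mp h0
            have hmem4 : c • X 3 ∈ F 4 := by
              rw [← hc3]
              exact hspanXn 4 (by omega)
                (hM2 2 2 le_rfl le_rfl (X 2) (hXmem 2 2 le_rfl (by omega)) w
                  (hFmono 2 2 le_rfl hw))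
            by_contra hc0
            have : X 3 ∈ F 4 := by
              have h' := Submodule.smul_mem (F 4) c⁻¹ hmem4
              rwa [smul_smul, inv_mul_cancel₀ hc0, one_smul] at h'
            exact hXnotin 3 (by omega) (by omega) this
          · set k := j + 1 with hkdef
            have hk2 : 2 ≤ k := by omega
            have hkn : k ≤ n - 1 := by omega
            set j' := n + 1 - k with hj'def
            have h0 : ⁅X j', z⁆ = 0 := hz' _
            rw [hzeq, lie_add, lie_smul] at h0
            have hjk : ⁅X j', X k⁆ = ((-1 : ℝ) ^ (j' + 1)) • X n := by
              have h := hQ2 j' (by omega) (by omega)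
              rwa [show n - j' + 1 = k by omega] at h
            have hw0 : ⁅X j', w⁆ = 0 :=
              hM2zero j' (k + 1) (by omega) (by omega) (by omega) (X j')
                (hXmem j' j' le_rfl (by omega)) w hw
            rw [hjk, hw0, add_zero, smul_smul] at h0
            rcases smul_eq_zero.mp h0 with h' | h'
            · rcases mul_eq_zero.mp h' with h'' | h''
              · exact h''
              · exact absurd h'' (pow_ne_zero _ (by norm_num))
            · exact absurd h' (hXne n (by omega) le_rfl)
      have hzn : z ∈ F n := by
        have h := key (n - 1) (by omega)
        rwa [show n - 1 + 1 = n by omega] at h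
      rwa [hFn] at hzn
    · rw [Submodule.span_le, Set.singleton_subset_iff]
      exact (LieModule.mem_maxTrivSubmodule ℝ V V (X n)).mpr hXncen
  refine ⟨⟨cn, hcn, hen'⟩, hcenter, ?_, ?_, ?_⟩
  -- part (ii)
  · intro i h2 hin2
    obtain ⟨a, ha, u, hu, heu⟩ := hdec 1 le_rfl (by omega)
    obtain ⟨b, hb, w, hw, hew⟩ := hdec i (by omega) (by omega)
    obtain ⟨b', hb', w', hw', hew'⟩ := hdec (i + 1) (by omega) (by omega)
    refine ⟨a * b / b', div_ne_zero (mul_ne_zero ha hb) hb', ?_⟩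
    rw [hE (i + 2) (by omega) (by omega), heu, hew, hew']
    have h1 : ⁅X 1, X i⁆ = X (i + 1) := hQ1 i h2 hin2
    have expand : ⁅a • X 1 + u, b • X i + w⁆ - (a * b / b') • (b' • X (i + 1) + w') =
        (a * b) • ⁅X 1, X i⁆ - ((a * b / b') * b') • X (i + 1) +
          (a • ⁅X 1, w⁆ + (b • ⁅u, X i⁆ + (⁅u, w⁆ - (a * b / b') • w'))) := by
      rw [add_lie, smul_lie, lie_add, lie_add, lie_smul, lie_smul]
      module
    rw [expand, h1, div_mul_cancel₀ _ hb', sub_self, zero_add]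
    have t1 : a • ⁅X 1, w⁆ ∈ F (i + 2) :=
      Submodule.smul_mem _ _ (hM1 (i + 1) (by omega) w hw)
    have t2 : b • ⁅u, X i⁆ ∈ F (i + 2) :=
      Submodule.smul_mem _ _ (hspanXn (i + 2) (by omega)
        (hM2 2 i le_rfl (by omega) u hu (X i) (hXmem i i le_rfl (by omega))))
    have t3 : ⁅u, w⁆ ∈ F (i + 2) :=
      hspanXn (i + 2) (by omega)
        (hM2 2 (i + 1) le_rfl (by omega) u hu w hw)
    have t4 : (a * b / b') • w' ∈ F (i + 2) := Submodule.smul_mem _ _ hw'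
    exact add_mem t1 (add_mem t2 (sub_mem t3 t4))
  -- part (iii) first half
  · intro i j hi hin hj hjn
    have h : ⁅e i, e j⁆ ∈ Submodule.span ℝ {X n} :=
      hM2 i j hi hj (e i) (hemem i (by omega) (by omega)) (e j) (hemem j (by omega) (by omega))
    rw [← hspan_en] at h
    obtain ⟨c, hc⟩ := Submodule.mem_span_singleton.mp h
    exact ⟨c, hc.symm⟩
  -- part (iii) second half
  · intro i j hi hin hj hjn hij
    exact hM2zero i j hi hj hij (e i) (hemem i (by omega) (by omega))
      (e j) (hemem j (by omega) (by omega))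
end
end

section
/- Let v_1, ..., v_q be vectors in the Euclidean space ℝ^N with inner product (·,·). Then the set { Σ_{α=1}^q e^{(v_α, x)} v_α : x ∈ ℝ^N } is equal to the set { Σ_{α=1}^q μ_α v_α : μ_1, ..., μ_q > 0 } (the relative interior of the cone over the convex hull of v_1, ..., v_q). -/
noncomputable section

open scoped BigOperators RealInnerProductSpace

open Filter

lemma exp_lower (M t : ℝ) (hM : 0 < M) : M * max t 0 - M * M ≤ Real.exp t := by
  rcases le_or_gt t 0 with h | h
  · rw [max_eq_right h]; nlinarith [Real.exp_pos t]
  · rw [max_eq_left h.le]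
    have h1 : Real.log M ≤ M - 1 := Real.log_le_sub_one_of_pos hM
    have h2 : (t - Real.log M) + 1 ≤ Real.exp (t - Real.log M) := Real.add_one_le_exp _
    have h3 : Real.exp (t - Real.log M) * M = Real.exp t := by
      rw [Real.exp_sub, Real.exp_log hM]; field_simp
    nlinarith [Real.exp_pos (t - Real.log M)]

lemma key_top {F : Type*} [NormedAddCommGroup F] [InnerProductSpace ℝ F]
    [FiniteDimensional ℝ F] {q : ℕ} (v : Fin q → F) (μ : Fin q → ℝ)
    (hμ : ∀ α, 0 < μ α) (hspan : Submodule.span ℝ (Set.range v) = ⊤) :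
    ∃ x : F, ∑ α, μ α • v α = ∑ α, Real.exp ⟪v α, x⟫ • v α := by
  rcases subsingleton_or_nontrivial F with hF | hF
  · exact ⟨0, Subsingleton.elim _ _⟩
  set y : F := ∑ α, μ α • v α with hy
  set M : ℝ := 1 + ∑ α, μ α with hMdef
  have hμsum : (0:ℝ) ≤ ∑ α, μ α :=
    Finset.sum_nonneg fun α _ => (hμ α).le
  have hM : 0 < M := by positivity
  have hMα : ∀ α, μ α + 1 ≤ M := by
    intro α
    have := Finset.single_le_sum (f := μ) (fun β _ => (hμ β).le) (Finset.mem_univ α)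
    simp only [hMdef]; linarith
  set ψ : F → ℝ := fun u => ∑ α, (M * max ⟪v α, u⟫ 0 - μ α * ⟪v α, u⟫) with hψdef
  -- each term nonneg
  have hterm : ∀ (α) (u : F), 0 ≤ M * max ⟪v α, u⟫ 0 - μ α * ⟪v α, u⟫ := by
    intro α u
    rcases le_or_gt 0 ⟪v α, u⟫ with h | h
    · rw [max_eq_left h]; nlinarith [hMα α]
    · rw [max_eq_right h.le]; nlinarith [hμ α]
  have hψpos : ∀ u : F, u ≠ 0 → 0 < ψ u := by
    intro u hu
    by_cases hz : ∀ α, ⟪v α, u⟫ = 0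
    · exfalso
      have hmem : u ∈ Submodule.span ℝ (Set.range v) := by rw [hspan]; trivial
      obtain ⟨c, hc⟩ := (Submodule.mem_span_range_iff_exists_fun ℝ).mp hmem
      have h2 : ⟪(∑ i, c i • v i : F), u⟫ = 0 := by
        rw [sum_inner]
        exact Finset.sum_eq_zero fun α _ => by rw [real_inner_smul_left, hz α, mul_zero]
      rw [hc] at h2
      exact hu (inner_self_eq_zero.mp h2)
    · push_neg at hz
      obtain ⟨α₀, hα₀⟩ := hz
      refine Finset.sum_pos' (fun α _ => hterm α u) ⟨α₀, Finset.mem_univ _, ?_⟩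
      rcases lt_or_gt_of_ne hα₀ with h | h
      · rw [max_eq_right h.le]; nlinarith [hμ α₀]
      · rw [max_eq_left h.le]; nlinarith [hMα α₀]
  have hinner : ∀ α, Continuous fun u : F => ⟪v α, u⟫ :=
    fun α => continuous_const.inner continuous_id
  have hψc : Continuous ψ := by
    apply continuous_finset_sum
    intro α _
    exact (continuous_const.mul ((hinner α).max continuous_const)).sub
      (continuous_const.mul (hinner α))
  -- min on sphere
  obtain ⟨u₁, hu₁⟩ := exists_norm_eq F (zero_le_one' ℝ)
  have hsph : (Metric.sphere (0:F) 1).Nonempty := ⟨u₁, by simpa using hu₁⟩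
  obtain ⟨u₀, hu₀s, hu₀min⟩ :=
    (isCompact_sphere (0:F) 1).exists_isMinOn hsph hψc.continuousOn
  set c : ℝ := ψ u₀ with hcdef
  have hu₀norm : ‖u₀‖ = 1 := by simpa using hu₀s
  have hc : 0 < c := hψpos u₀ (by intro h; rw [h] at hu₀norm; simp at hu₀norm)
  -- homogeneity lower bound: c * ‖x‖ ≤ ψ x
  have hlow : ∀ x : F, c * ‖x‖ ≤ ψ x := by
    intro x
    rcases eq_or_ne x 0 with rfl | hx
    · simp [hψdef]
    · have hnx : (0:ℝ) < ‖x‖ := norm_pos_iff.mpr hx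
      have hus : ‖x‖⁻¹ • x ∈ Metric.sphere (0:F) 1 := by
        simp [norm_smul, abs_of_pos (inv_pos.mpr hnx), inv_mul_cancel₀ hnx.ne']
      have h1 : c ≤ ψ (‖x‖⁻¹ • x) := hu₀min hus
      have h2 : ψ (‖x‖⁻¹ • x) = ‖x‖⁻¹ * ψ x := by
        simp only [hψdef, real_inner_smul_right, Finset.mul_sum]
        refine Finset.sum_congr rfl fun α _ => ?_
        rcases le_or_gt 0 ⟪v α, x⟫ with h | h
        · rw [max_eq_left (mul_nonneg (inv_pos.mpr hnx).le h), max_eq_left h]; ring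
        · rw [max_eq_right (by nlinarith [inv_pos.mpr hnx]), max_eq_right h.le]; ring
      rw [h2] at h1
      calc c * ‖x‖ ≤ (‖x‖⁻¹ * ψ x) * ‖x‖ := by nlinarith
        _ = ψ x := by field_simp
  set G : F → ℝ := fun x => (∑ α, Real.exp ⟪v α, x⟫) - ⟪y, x⟫ with hGdef
  have hGlow : ∀ x : F, c * ‖x‖ - q * (M * M) ≤ G x := by
    intro x
    have h1 : ⟪y, x⟫ = ∑ α, μ α * ⟪v α, x⟫ := by
      rw [hy, sum_inner]
      exact Finset.sum_congr rfl fun α _ => real_inner_smul_left _ _ _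
    have h2 : ψ x - ∑ _α : Fin q, (M * M) ≤ G x := by
      rw [hGdef]
      simp only [h1, hψdef, ← Finset.sum_sub_distrib]
      refine Finset.sum_le_sum fun α _ => ?_
      have := exp_lower M ⟪v α, x⟫ hM
      linarith
    have h3 : ∑ α : Fin q, (M * M) = q * (M * M) := by
      simp [Finset.sum_const, Finset.card_univ]
    rw [h3] at h2
    linarith [hlow x]
  have hGc : Continuous G := by
    refine Continuous.sub (continuous_finset_sum _ fun α _ => (Real.continuous_exp.comp (hinner α))) ?_
    exact continuous_const.inner continuous_id
  have hGlim : Tendsto G (cocompact F) atTop := by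
    refine tendsto_atTop_mono hGlow ?_
    have h1 : Tendsto (fun x : F => c * ‖x‖) (cocompact F) atTop :=
      (tendsto_norm_cocompact_atTop).const_mul_atTop hc
    exact tendsto_atTop_add_const_right _ _ h1
  obtain ⟨x₀, hx₀⟩ := hGc.exists_forall_le hGlim
  refine ⟨x₀, ?_⟩
  -- derivative condition
  have hkey : ∀ z : F, ⟪(∑ α, Real.exp ⟪v α, x₀⟫ • v α) - y, z⟫ = 0 := by
    intro z
    set h : ℝ → ℝ := fun t => G (x₀ + t • z) with hhdef
    have hmin : IsLocalMin h 0 := by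
      refine Filter.Eventually.of_forall fun t => ?_
      simp only [hhdef, zero_smul, add_zero]
      exact hx₀ _
    have hD : HasDerivAt h ((∑ α, Real.exp ⟪v α, x₀⟫ * ⟪v α, z⟫) - ⟪y, z⟫) 0 := by
      have heq : h = fun t => (∑ α, Real.exp (⟪v α, x₀⟫ + t * ⟪v α, z⟫)) - (⟪y, x₀⟫ + t * ⟪y, z⟫) := by
        funext t
        simp only [hhdef, hGdef, inner_add_right, real_inner_smul_right]
      rw [heq]
      have hsum : HasDerivAt (fun t : ℝ => ∑ α, Real.exp (⟪v α, x₀⟫ + t * ⟪v α, z⟫))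
          (∑ α, Real.exp ⟪v α, x₀⟫ * ⟪v α, z⟫) 0 := by
        have := HasDerivAt.fun_sum (x := (0:ℝ)) (u := Finset.univ)
          (A := fun α t => Real.exp (⟪v α, x₀⟫ + t * ⟪v α, z⟫))
          (A' := fun α => Real.exp ⟪v α, x₀⟫ * ⟪v α, z⟫) ?_
        · exact this
        · intro α _
          have h1 : HasDerivAt (fun t : ℝ => ⟪v α, x₀⟫ + t * ⟪v α, z⟫) ⟪v α, z⟫ 0 := by
            simpa using ((hasDerivAt_id (0:ℝ)).mul_const ⟪v α, z⟫).const_add ⟪v α, x₀⟫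
          have := h1.exp
          simpa using this
      have hlin : HasDerivAt (fun t : ℝ => ⟪y, x₀⟫ + t * ⟪y, z⟫) ⟪y, z⟫ 0 := by
        simpa using ((hasDerivAt_id (0:ℝ)).mul_const ⟪y, z⟫).const_add ⟪y, x₀⟫
      exact hsum.sub hlin
    have := hmin.hasDerivAt_eq_zero hD
    rw [inner_sub_left, sum_inner]
    simp only [real_inner_smul_left]
    linarith
  have := hkey ((∑ α, Real.exp ⟪v α, x₀⟫ • v α) - y)
  rw [inner_self_eq_zero, sub_eq_zero] at this
  exact this.symm

lemma key {F : Type*} [NormedAddCommGroup F] [InnerProductSpace ℝ F]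
    [FiniteDimensional ℝ F] {q : ℕ} (v : Fin q → F) (μ : Fin q → ℝ)
    (hμ : ∀ α, 0 < μ α) :
    ∃ x : F, ∑ α, μ α • v α = ∑ α, Real.exp ⟪v α, x⟫ • v α := by
  set V := Submodule.span ℝ (Set.range v) with hV
  have hvV : ∀ α, v α ∈ V := fun α => Submodule.subset_span ⟨α, rfl⟩
  set w : Fin q → V := fun α => ⟨v α, hvV α⟩ with hw
  have hcomp : V.subtype ∘ w = v := rfl
  have hspan : Submodule.span ℝ (Set.range w) = ⊤ := by
    apply Submodule.map_injective_of_injective V.injective_subtype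
    rw [Submodule.map_span, Submodule.map_subtype_top, ← Set.range_comp, hcomp, hV]
  obtain ⟨x, hx⟩ := key_top w μ hμ hspan
  refine ⟨(x : F), ?_⟩
  have h2 := congrArg (Subtype.val) hx
  push_cast at h2
  simpa [hw, Submodule.coe_inner] using h2


/-- **Lemma 5.** For vectors `v_1, …, v_q` in Euclidean space `ℝ^N`, the image of the
gradient map `x ↦ Σ_α e^{(v_α,x)} v_α` of `f(x) = Σ_α e^{(v_α,x)}` is exactly the relative
interior of the cone over the convex hull of `v_1, …, v_q`, i.e. the set of all linear
combinations `Σ_α μ_α v_α` with all `μ_α > 0`. -/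
theorem statement11 (N q : ℕ) (v : Fin q → EuclideanSpace ℝ (Fin N)) :
    {y : EuclideanSpace ℝ (Fin N) |
        ∃ x : EuclideanSpace ℝ (Fin N), y = ∑ α, Real.exp ⟪v α, x⟫ • v α} =
      {y : EuclideanSpace ℝ (Fin N) |
        ∃ μ : Fin q → ℝ, (∀ α, 0 < μ α) ∧ y = ∑ α, μ α • v α} := by
  ext y
  simp only [Set.mem_setOf_eq]
  constructor
  · rintro ⟨x, rfl⟩
    exact ⟨fun α => Real.exp ⟪v α, x⟫, fun α => Real.exp_pos _, rfl⟩
  · rintro ⟨μ, hμ, rfl⟩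
    obtain ⟨x, hx⟩ := key v μ hμ
    exact ⟨x, hx⟩
end
end

section
/- Let n = 2m ≥ 6 be even, let a, d ∈ ℝ, and set ι_k = (1/2)((n−3)n − (k−3)(k−2)) a + (n−k+2) d for 3 ≤ k ≤ n. If ι_k > 0 for all k = m+1, ..., n, then ι_k > 0 for all k = 3, ..., n. -/
noncomputable section

/-- Let `n = 2m ≥ 6` be even, `a, d ∈ ℝ`, and
`ι_k = ½((n−3)n − (k−3)(k−2)) a + (n−k+2) d`. If `ι_k > 0` for all `k = m+1, …, n`, then
`ι_k > 0` for all `k = 3, …, n`. -/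
theorem statement15 (m n : ℕ) (hm : 3 ≤ m) (hn : n = 2 * m) (a d : ℝ)
    (ι : ℕ → ℝ)
    (hι : ∀ k : ℕ, ι k = (1 / 2) * (((n : ℝ) - 3) * n - ((k : ℝ) - 3) * ((k : ℝ) - 2)) * a
      + ((n : ℝ) - k + 2) * d)
    (hpos : ∀ k, m + 1 ≤ k → k ≤ n → 0 < ι k) :
    ∀ k, 3 ≤ k → k ≤ n → 0 < ι k := by
  intro k hk3 hkn
  by_cases hk : m + 1 ≤ k
  · exact hpos k hk hkn
  push_neg at hk
  have hkm : k ≤ m := by omega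
  have h1 := hpos (m + 1) le_rfl (by omega)
  have h2 := hpos n (by omega) le_rfl
  have hK3 : (3 : ℝ) ≤ (k : ℝ) := by exact_mod_cast hk3
  have hKm : (k : ℝ) ≤ (m : ℝ) := by exact_mod_cast hkm
  have hM : (3 : ℝ) ≤ (m : ℝ) := by exact_mod_cast hm
  have hm1 : (0 : ℝ) < ((m : ℝ) - 1) ^ 2 := by nlinarith
  set M : ℝ := (m : ℝ)
  set K : ℝ := (k : ℝ)
  set α : ℝ := (K - 2) * (2 * M - K) / ((M - 1) ^ 2) with hα_def
  set β : ℝ := ((2 * M + 2 - K) * (M - 1) ^ 2 - (K - 2) * (2 * M - K) * (M + 1)) /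
    (2 * (M - 1) ^ 2) with hβ_def
  have key : ι k = α * ι (m + 1) + β * ι n := by
    rw [hι k, hι (m + 1), hι n, hα_def, hβ_def]
    have hnr : (n : ℝ) = 2 * M := by rw [hn]; push_cast; ring
    push_cast [hnr]
    have hne : M - 1 ≠ 0 := by intro h; rw [h] at hm1; norm_num at hm1
    simp only [M, K] at hne ⊢
    field_simp
    ring
  have hα : 0 ≤ α := by
    apply div_nonneg _ (le_of_lt hm1)
    nlinarith
  have hβ : 0 < β := by
    apply div_pos _ (by nlinarith)
    nlinarith [sq_nonneg (M - K), sq_nonneg (K - 3), mul_nonneg (sub_nonneg.2 hKm) (sub_nonneg.2 hK3)]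
  rw [key]
  have := mul_nonneg hα (le_of_lt h1)
  nlinarith [mul_pos hβ h2]
end
end

section
/- Let n = 2m ≥ 6 be even. In ℝ^n with standard orthonormal basis E_1, ..., E_n, define F_i = −E_1 − E_{i+1} + E_{i+2} for 1 ≤ i ≤ n−3, F_{n−2} = −E_2 − E_{n−1} + E_n, and F_{n−2+j} = −E_{j+2} − E_{n−1−j} + E_n for 1 ≤ j ≤ m−2; define V_1 = E_1 + Σ_{i=3}^{n−1} (i−2) E_i + (n−3) E_n and V_2 = Σ_{i=2}^{n−1} E_i + 2 E_n. Then V_1 and V_2 are orthogonal to F_α for every α = 1, ..., n+m−4. -/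
noncomputable section

open scoped BigOperators RealInnerProductSpace

set_option maxHeartbeats 1600000 in
/-- In `ℝ^n` (`n = 2m ≥ 6`) with standard orthonormal basis `E_1, …, E_n`, the vectors
`F_i = −E_1 − E_{i+1} + E_{i+2}` (`1 ≤ i ≤ n−3`), `F_{n−2} = −E_2 − E_{n−1} + E_n`,
`F_{n−2+j} = −E_{j+2} − E_{n−1−j} + E_n` (`1 ≤ j ≤ m−2`) are all orthogonal to
`V_1 = E_1 + Σ_{i=3}^{n−1} (i−2) E_i + (n−3) E_n` and `V_2 = Σ_{i=2}^{n−1} E_i + 2 E_n`. -/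
theorem statement16 (m n : ℕ) (hm : 3 ≤ m) (hn : n = 2 * m)
    (E : ℕ → EuclideanSpace ℝ (Fin n))
    (hE : ∀ i : Fin n, E ((i : ℕ) + 1) = EuclideanSpace.single i 1)
    (F : ℕ → EuclideanSpace ℝ (Fin n))
    (hF1 : ∀ i, 1 ≤ i → i ≤ n - 3 → F i = -E 1 - E (i + 1) + E (i + 2))
    (hF2 : F (n - 2) = -E 2 - E (n - 1) + E n)
    (hF3 : ∀ j, 1 ≤ j → j ≤ m - 2 → F (n - 2 + j) = -E (j + 2) - E (n - 1 - j) + E n)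
    (V₁ V₂ : EuclideanSpace ℝ (Fin n))
    (hV₁ : V₁ = E 1 + (∑ i ∈ Finset.Icc 3 (n - 1), ((i : ℝ) - 2) • E i)
      + ((n : ℝ) - 3) • E n)
    (hV₂ : V₂ = (∑ i ∈ Finset.Icc 2 (n - 1), E i) + (2 : ℝ) • E n) :
    ∀ α, 1 ≤ α → α ≤ n + m - 4 → ⟪V₁, F α⟫ = 0 ∧ ⟪V₂, F α⟫ = 0 := by
  have hn6 : 6 ≤ n := by omega
  have hEE : ∀ i j : ℕ, 1 ≤ i → i ≤ n → 1 ≤ j → j ≤ n →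
      ⟪E i, E j⟫ = if i = j then (1:ℝ) else 0 := by
    intro i j hi1 hin hj1 hjn
    have hi : E i = EuclideanSpace.single (⟨i-1, by omega⟩ : Fin n) 1 := by
      have := hE ⟨i-1, by omega⟩
      simpa [Nat.sub_add_cancel hi1] using this
    have hj : E j = EuclideanSpace.single (⟨j-1, by omega⟩ : Fin n) 1 := by
      have := hE ⟨j-1, by omega⟩
      simpa [Nat.sub_add_cancel hj1] using this
    rw [hi, hj, EuclideanSpace.inner_single_left]
    by_cases h : i = j
    · simp [h, EuclideanSpace.single_apply]
    · simp only [EuclideanSpace.single_apply, Fin.ext_iff, mul_ite, mul_one, mul_zero, map_one]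
      rw [if_neg (by omega), if_neg (by omega : ¬ i = j)]
  have hV1E : ∀ k, 1 ≤ k → k ≤ n → ⟪V₁, E k⟫ =
      (if 1 = k then (1:ℝ) else 0)
      + (if k ∈ Finset.Icc 3 (n-1) then (k:ℝ)-2 else 0)
      + (if n = k then (n:ℝ)-3 else 0) := by
    intro k hk1 hkn
    rw [hV₁, inner_add_left, inner_add_left, sum_inner, real_inner_smul_left]
    congr 2
    · exact hEE 1 k (by omega) (by omega) hk1 hkn
    · rw [Finset.sum_congr rfl (fun i hi => by
        rw [real_inner_smul_left, hEE i k (by simp [Finset.mem_Icc] at hi; omega)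
          (by simp [Finset.mem_Icc] at hi; omega) hk1 hkn, mul_ite, mul_one, mul_zero])]
      exact Finset.sum_ite_eq' _ k _
    · rw [hEE n k (by omega) le_rfl hk1 hkn, mul_ite, mul_one, mul_zero]
  have hV2E : ∀ k, 1 ≤ k → k ≤ n → ⟪V₂, E k⟫ =
      (if k ∈ Finset.Icc 2 (n-1) then (1:ℝ) else 0)
      + (if n = k then (2:ℝ) else 0) := by
    intro k hk1 hkn
    rw [hV₂, inner_add_left, sum_inner, real_inner_smul_left]
    congr 1
    · rw [Finset.sum_congr rfl (fun i hi => hEE i k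
        (by simp [Finset.mem_Icc] at hi; omega)
        (by simp [Finset.mem_Icc] at hi; omega) hk1 hkn)]
      exact Finset.sum_ite_eq' _ k _
    · rw [hEE n k (by omega) le_rfl hk1 hkn, mul_ite, mul_one, mul_zero]
  intro α hα1 hα2
  by_cases h1 : α ≤ n - 3
  · -- first family
    rw [hF1 α hα1 h1]
    have hα2' : 2 ≤ α ∨ α = 1 := by omega
    have key : ∀ V : EuclideanSpace ℝ (Fin n),
        ⟪V, -E 1 - E (α+1) + E (α+2)⟫ = -⟪V, E 1⟫ - ⟪V, E (α+1)⟫ + ⟪V, E (α+2)⟫ := by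
      intro V
      rw [inner_add_right, inner_sub_right, inner_neg_right]
    constructor
    · rw [key, hV1E 1 (by omega) (by omega), hV1E (α+1) (by omega) (by omega),
        hV1E (α+2) (by omega) (by omega)]
      simp only [Finset.mem_Icc]
      rcases hα2' with h | h
      · split_ifs <;> first | (exfalso; omega) | (push_cast; ring)
      · subst h; split_ifs <;> first | (exfalso; omega) | (push_cast; ring)
    · rw [key, hV2E 1 (by omega) (by omega), hV2E (α+1) (by omega) (by omega),
        hV2E (α+2) (by omega) (by omega)]
      simp only [Finset.mem_Icc]
      rcases hα2' with h | h
      · split_ifs <;> first | (exfalso; omega) | (push_cast; ring)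
      · subst h; split_ifs <;> first | (exfalso; omega) | (push_cast; ring)
  · by_cases h2 : α = n - 2
    · subst h2
      rw [hF2]
      have key : ∀ V : EuclideanSpace ℝ (Fin n),
          ⟪V, -E 2 - E (n-1) + E n⟫ = -⟪V, E 2⟫ - ⟪V, E (n-1)⟫ + ⟪V, E n⟫ := by
        intro V
        rw [inner_add_right, inner_sub_right, inner_neg_right]
      have hc : ((n - 1 : ℕ) : ℝ) = (n : ℝ) - 1 := by
        rw [Nat.cast_sub (by omega)]; norm_num
      constructor
      · rw [key, hV1E 2 (by omega) (by omega), hV1E (n-1) (by omega) (by omega),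
          hV1E n (by omega) (by omega)]
        simp only [Finset.mem_Icc]
        split_ifs <;> first | (exfalso; omega) | (rw [hc]; ring)
      · rw [key, hV2E 2 (by omega) (by omega), hV2E (n-1) (by omega) (by omega),
          hV2E n (by omega) (by omega)]
        simp only [Finset.mem_Icc]
        split_ifs <;> first | (exfalso; omega) | ring
    · -- third family
      set j := α - (n - 2) with hj
      have hj1 : 1 ≤ j := by omega
      have hj2 : j ≤ m - 2 := by omega
      have hαe : α = n - 2 + j := by omega
      rw [hαe, hF3 j hj1 hj2]
      have key : ∀ V : EuclideanSpace ℝ (Fin n),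
          ⟪V, -E (j+2) - E (n-1-j) + E n⟫ = -⟪V, E (j+2)⟫ - ⟪V, E (n-1-j)⟫ + ⟪V, E n⟫ := by
        intro V
        rw [inner_add_right, inner_sub_right, inner_neg_right]
      have hc : ((n - 1 - j : ℕ) : ℝ) = (n : ℝ) - 1 - (j : ℝ) := by
        rw [Nat.cast_sub (by omega), Nat.cast_sub (by omega)]; norm_num
      constructor
      · rw [key, hV1E (j+2) (by omega) (by omega), hV1E (n-1-j) (by omega) (by omega),
          hV1E n (by omega) (by omega)]
        simp only [Finset.mem_Icc]
        split_ifs <;> first | (exfalso; omega) | (rw [hc]; push_cast; ring) | (push_cast; ring)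
      · rw [key, hV2E (j+2) (by omega) (by omega), hV2E (n-1-j) (by omega) (by omega),
          hV2E n (by omega) (by omega)]
        simp only [Finset.mem_Icc]
        split_ifs <;> first | (exfalso; omega) | ring
end
end

section
/- Let n = 2m ≥ 6 be even and a, d ∈ ℝ with ι_k := (1/2)((n−3)n − (k−3)(k−2)) a + (n−k+2) d > 0 for all k = m+1, ..., n. In ℝ^n with standard basis E_1, ..., E_n, define F_i = −E_1 − E_{i+1} + E_{i+2} for 1 ≤ i ≤ n−3, F_{n−2} = −E_2 − E_{n−1} + E_n, F_{n−2+j} = −E_{j+2} − E_{n−1−j} + E_n for 1 ≤ j ≤ m−2, V_1 = E_1 + Σ_{i=3}^{n−1} (i−2) E_i + (n−3) E_n, and V_2 = Σ_{i=2}^{n−1} E_i + 2 E_n. Then there exist positive reals w_1, ..., w_{n−2}, y_1, ..., y_{m−2}, z_1, z_2 such that a V_1 + d V_2 = Σ_{i=1}^{n−2} w_i F_i + Σ_{j=1}^{m−2} y_j F_{n−2+j} + z_1 E_1 + z_2 E_2; moreover necessarily z_2 = (m+1) ι_n. -/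
noncomputable section

open scoped BigOperators RealInnerProductSpace

set_option maxHeartbeats 1600000 in
/-- The linear-programming step in the proof of **Proposition 1**: if `n = 2m ≥ 6` and the
reals `a, d` satisfy `ι_k > 0` for `k = m+1, …, n`, then `a V₁ + d V₂` can be written as
`Σ_{i=1}^{n−2} w_i F_i + Σ_{j=1}^{m−2} y_j F_{n−2+j} + z₁ E_1 + z₂ E_2` with all
coefficients `w_i, y_j, z₁, z₂` positive; moreover necessarily `z₂ = (m+1) ι_n`. -/
theorem statement17 (m n : ℕ) (hm : 3 ≤ m) (hn : n = 2 * m) (a d : ℝ)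
    (ι : ℕ → ℝ)
    (hι : ∀ k : ℕ, ι k = (1 / 2) * (((n : ℝ) - 3) * n - ((k : ℝ) - 3) * ((k : ℝ) - 2)) * a
      + ((n : ℝ) - k + 2) * d)
    (hpos : ∀ k, m + 1 ≤ k → k ≤ n → 0 < ι k)
    (E : ℕ → EuclideanSpace ℝ (Fin n))
    (hE : ∀ i : Fin n, E ((i : ℕ) + 1) = EuclideanSpace.single i 1)
    (F : ℕ → EuclideanSpace ℝ (Fin n))
    (hF1 : ∀ i, 1 ≤ i → i ≤ n - 3 → F i = -E 1 - E (i + 1) + E (i + 2))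
    (hF2 : F (n - 2) = -E 2 - E (n - 1) + E n)
    (hF3 : ∀ j, 1 ≤ j → j ≤ m - 2 → F (n - 2 + j) = -E (j + 2) - E (n - 1 - j) + E n)
    (V₁ V₂ : EuclideanSpace ℝ (Fin n))
    (hV₁ : V₁ = E 1 + (∑ i ∈ Finset.Icc 3 (n - 1), ((i : ℝ) - 2) • E i)
      + ((n : ℝ) - 3) • E n)
    (hV₂ : V₂ = (∑ i ∈ Finset.Icc 2 (n - 1), E i) + (2 : ℝ) • E n) :
    (∃ (w y : ℕ → ℝ) (z₁ z₂ : ℝ),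
      (∀ i, 1 ≤ i → i ≤ n - 2 → 0 < w i) ∧ (∀ j, 1 ≤ j → j ≤ m - 2 → 0 < y j) ∧
      0 < z₁ ∧ 0 < z₂ ∧ z₂ = ((m : ℝ) + 1) * ι n ∧
      a • V₁ + d • V₂ = (∑ i ∈ Finset.Icc 1 (n - 2), w i • F i)
        + (∑ j ∈ Finset.Icc 1 (m - 2), y j • F (n - 2 + j)) + z₁ • E 1 + z₂ • E 2) ∧
    (∀ (w y : ℕ → ℝ) (z₁ z₂ : ℝ),
      (∀ i, 1 ≤ i → i ≤ n - 2 → 0 < w i) → (∀ j, 1 ≤ j → j ≤ m - 2 → 0 < y j) →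
      0 < z₁ → 0 < z₂ →
      a • V₁ + d • V₂ = (∑ i ∈ Finset.Icc 1 (n - 2), w i • F i)
        + (∑ j ∈ Finset.Icc 1 (m - 2), y j • F (n - 2 + j)) + z₁ • E 1 + z₂ • E 2 →
      z₂ = ((m : ℝ) + 1) * ι n) := by
  have hn6 : 6 ≤ n := by omega
  have hnR : (n : ℝ) = 2 * (m : ℝ) := by exact_mod_cast congrArg (Nat.cast : ℕ → ℝ) hn
  have hEv : ∀ k : ℕ, 1 ≤ k → k ≤ n → ∀ j : Fin n, E k j = if (j : ℕ) + 1 = k then 1 else 0 := by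
    intro k hk1 hk2 j
    obtain ⟨k', rfl⟩ : ∃ k', k = k' + 1 := ⟨k - 1, by omega⟩
    have hlt : k' < n := by omega
    have h : E (k' + 1) = EuclideanSpace.single (⟨k', hlt⟩ : Fin n) 1 := hE ⟨k', hlt⟩
    rw [h, EuclideanSpace.single_apply]
    exact if_congr (by simp [Fin.ext_iff]) rfl rfl
  have hdiff : ∀ k : ℕ, ι k - ι (k + 1) = ((k : ℝ) - 2) * a + d := by
    intro k; rw [hι k, hι (k + 1)]; push_cast; ring
  have hiota_n : ι n = ((n : ℝ) - 3) * a + 2 * d := by rw [hι n]; ring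
  -- G
  have hne : (Finset.Icc (m + 1) n).Nonempty := ⟨m + 1, by simp [Finset.mem_Icc]; omega⟩
  obtain ⟨G, hGdef⟩ : ∃ G : ℝ, G = (Finset.Icc (m + 1) n).inf' hne ι := ⟨_, rfl⟩
  have hGle : ∀ k, m + 1 ≤ k → k ≤ n → G ≤ ι k := by
    intro k h1 h2; rw [hGdef]
    exact Finset.inf'_le ι (by simp [Finset.mem_Icc]; omega)
  have hGpos : 0 < G := by
    rw [hGdef, Finset.lt_inf'_iff]
    intro k hk; rw [Finset.mem_Icc] at hk; exact hpos k hk.1 hk.2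
  -- KEY
  have key : ∀ p q : ℕ, 3 ≤ p → p ≤ m → m + 1 ≤ q → q ≤ n → 2 * m + 2 ≤ p + q →
      G ≤ ι p + ι q := by
    intro p q hp3 hpm hq1 hq2 hpq
    rcases le_or_gt a 0 with ha | ha
    · have htr : ((p + q - (m + 1) : ℕ) : ℝ) = (p : ℝ) + q - m - 1 := by
        have h : m + 1 ≤ p + q := by omega
        rw [Nat.cast_sub h]; push_cast; ring
      have h1 : G ≤ ι (m + 1) := hGle _ le_rfl (by omega)
      have h2 : G ≤ ι (p + q - (m + 1)) := hGle _ (by omega) (by omega)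
      have hid : ι p + ι q
          = ι (m + 1) + ι (p + q - (m + 1)) + (-a) * ((m : ℝ) + 1 - p) * ((q : ℝ) - m - 1) := by
        rw [hι p, hι q, hι (m + 1), hι (p + q - (m + 1)), htr]; push_cast; ring
      have hx1 : (p : ℝ) ≤ (m : ℝ) + 1 := by
        have : (p : ℝ) ≤ (m : ℝ) := by exact_mod_cast hpm
        linarith
      have hx2 : (m : ℝ) + 1 ≤ (q : ℝ) := by exact_mod_cast hq1
      have hnn : 0 ≤ (-a) * ((m : ℝ) + 1 - p) * ((q : ℝ) - m - 1) := by
        apply mul_nonneg (mul_nonneg (by linarith) (by linarith)) (by linarith)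
      linarith
    · have h1 : G ≤ ι n := hGle _ (by omega) le_rfl
      have hid : ι p + ι q = ((2 * (n : ℝ) + 4 - p - q) / 2) * ι n
          + ((((p : ℝ) - 2) * ((n : ℝ) - p) + ((q : ℝ) - 2) * ((n : ℝ) - q)) / 2) * a := by
        rw [hι p, hι q, hι n]; ring
      have hpR : (p : ℝ) ≤ (m : ℝ) := by exact_mod_cast hpm
      have hp2 : (2 : ℝ) ≤ (p : ℝ) := by exact_mod_cast (by omega : 2 ≤ p)
      have hq2R : (q : ℝ) ≤ (n : ℝ) := by exact_mod_cast hq2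
      have hq2' : (2 : ℝ) ≤ (q : ℝ) := by exact_mod_cast (by omega : 2 ≤ q)
      have hpn : (p : ℝ) ≤ (n : ℝ) := by exact_mod_cast (by omega : p ≤ n)
      have hα : (1 : ℝ) ≤ (2 * (n : ℝ) + 4 - p - q) / 2 := by
        rw [le_div_iff₀ (by norm_num : (0:ℝ) < 2)]
        linarith [hnR]
      have hγ : 0 ≤ ((((p : ℝ) - 2) * ((n : ℝ) - p) + ((q : ℝ) - 2) * ((n : ℝ) - q)) / 2) := by
        apply div_nonneg _ (by norm_num)
        have := mul_nonneg (by linarith : (0:ℝ) ≤ (p : ℝ) - 2) (by linarith : (0:ℝ) ≤ (n : ℝ) - p)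
        have := mul_nonneg (by linarith : (0:ℝ) ≤ (q : ℝ) - 2) (by linarith : (0:ℝ) ≤ (n : ℝ) - q)
        linarith
      nlinarith [mul_nonneg hγ ha.le, mul_nonneg (sub_nonneg.2 hα) hGpos.le,
        mul_le_mul_of_nonneg_left h1 (by linarith : (0:ℝ) ≤ (2 * (n : ℝ) + 4 - p - q) / 2)]
  obtain ⟨ε, hεdef⟩ : ∃ e : ℝ, e = G / (2 * m) := ⟨_, rfl⟩
  have hmR : (1 : ℝ) ≤ (m : ℝ) := by exact_mod_cast (by omega : 1 ≤ m)
  have h2m : (0 : ℝ) < 2 * (m : ℝ) := by linarith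
  have hεpos : 0 < ε := by rw [hεdef]; exact div_pos hGpos h2m
  have hεG2 : ε * (2 * (m : ℝ)) = G := by rw [hεdef]; field_simp
  have hεG : ((m : ℝ) - 1) * ε < G := by nlinarith [mul_pos hεpos (show (0:ℝ) < (m:ℝ) + 1 by linarith)]
  obtain ⟨S, hSdef⟩ : ∃ S : ℕ → ℝ, S = fun r =>
      Nat.rec (motive := fun _ => ℝ) 0 (fun r' acc => max acc (max 0 (-ι (m - r'))) + ε) r :=
    ⟨_, rfl⟩
  have hS0 : S 0 = 0 := by rw [hSdef]; rfl
  have hSsucc : ∀ r, S (r + 1) = max (S r) (max 0 (-ι (m - r))) + ε := by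
    intro r; rw [hSdef]
  have hSle : ∀ r, S r + ε ≤ S (r + 1) := by
    intro r; rw [hSsucc]
    have := le_max_left (S r) (max 0 (-ι (m - r))); linarith
  have hS_lb : ∀ r, max 0 (-ι (m - r)) + ε ≤ S (r + 1) := by
    intro r; rw [hSsucc]
    have := le_max_right (S r) (max 0 (-ι (m - r))); linarith
  have claim : ∀ r, r ≤ m - 2 → ∀ q, m + 1 + r ≤ q → q ≤ n →
      S r + ((m : ℝ) - 1 - r) * ε ≤ ι q := by
    intro r
    induction r with
    | zero =>
      intro _ q hq1 hq2
      have h1 : G ≤ ι q := hGle q (by omega) hq2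
      rw [hS0]
      push_cast
      linarith [hεG]
    | succ r ih =>
      intro hr q hq1 hq2
      have hrm : r ≤ m - 2 := by omega
      have hrR : (0 : ℝ) ≤ (r : ℝ) := by positivity
      have hc : ((m : ℝ) - 1 - r) * ε ≤ ((m : ℝ) - 1) * ε := by nlinarith [hεpos]
      rw [hSsucc]
      have hb : max (S r) (max 0 (-ι (m - r))) ≤ ι q - ((m : ℝ) - 1 - r) * ε := by
        apply max_le
        · have := ih hrm q (by omega) hq2; linarith
        · apply max_le
          · have h1 : G ≤ ι q := hGle q (by omega) hq2
            linarith [hεG]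
          · have hk := key (m - r) q (by omega) (by omega) (by omega) hq2 (by omega)
            linarith [hεG]
      push_cast
      linarith [hb]
  have hSlt : ∀ r, 1 ≤ r → r ≤ m - 2 → ∀ q, m + 1 + r ≤ q → q ≤ n → S r < ι q := by
    intro r h1 h2 q hq1 hq2
    have h := claim r h2 q hq1 hq2
    have hrm : (r : ℝ) ≤ (m : ℝ) - 2 := by
      have h3 : ((r : ℕ) : ℝ) ≤ ((m - 2 : ℕ) : ℝ) := by exact_mod_cast h2
      have h4 : ((m - 2 : ℕ) : ℝ) = (m : ℝ) - 2 := by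
        rw [Nat.cast_sub (by omega)]; norm_num
      linarith [h3, h4.le, h4.ge]
    nlinarith [hεpos, mul_nonneg (by linarith : (0:ℝ) ≤ (m:ℝ) - 2 - r) hεpos.le]
  -- w, y
  obtain ⟨y, hydef⟩ : ∃ y : ℕ → ℝ, y = fun t => S (m - 1 - t) - S (m - 2 - t) := ⟨_, rfl⟩
  obtain ⟨w, hwdef⟩ : ∃ w : ℕ → ℝ, w = fun k =>
      if k ≤ m - 1 then ι (k + 2) + S (m - 1 - k)
      else if k = n - 2 then ι n - S (m - 2)
      else ι (k + 2) - S (k - m + 1) := ⟨_, rfl⟩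
  have hylow : ∀ t, y t = S (m - 1 - t) - S (m - 2 - t) := by intro t; rw [hydef]
  have hwlow : ∀ k, k ≤ m - 1 → w k = ι (k + 2) + S (m - 1 - k) := by
    intro k hk; rw [hwdef]; simp only; rw [if_pos hk]
  have hwmid : ∀ k, m ≤ k → k ≤ n - 3 → w k = ι (k + 2) - S (k - m + 1) := by
    intro k h1 h2; rw [hwdef]; simp only; rw [if_neg (by omega), if_neg (by omega)]
  have hwtop : w (n - 2) = ι n - S (m - 2) := by
    rw [hwdef]; simp only; rw [if_neg (by omega), if_pos trivial]
  have hwpos : ∀ k, 1 ≤ k → k ≤ n - 2 → 0 < w k := by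
    intro k h1 h2
    rcases lt_trichotomy k (m - 1) with hk | hk | hk
    · rw [hwlow k (by omega)]
      have e1 : m - 1 - k = (m - 2 - k) + 1 := by omega
      have hlb := hS_lb (m - 2 - k)
      rw [show m - (m - 2 - k) = k + 2 by omega] at hlb
      rw [e1]
      have h3 := le_max_right (0 : ℝ) (-ι (k + 2))
      have h4 := le_max_left (0 : ℝ) (-ι (k + 2))
      linarith
    · rw [hwlow k (le_of_eq hk), show m - 1 - k = 0 by omega, hS0,
        show k + 2 = m + 1 by omega]
      linarith [hpos (m + 1) le_rfl (by omega)]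
    · by_cases hk2 : k = n - 2
      · rw [hk2, hwtop]
        have := hSlt (m - 2) (by omega) le_rfl n (by omega) le_rfl
        linarith
      · rw [hwmid k (by omega) (by omega)]
        have := hSlt (k - m + 1) (by omega) (by omega) (k + 2) (by omega) (by omega)
        linarith
  have hypos : ∀ t, 1 ≤ t → t ≤ m - 2 → 0 < y t := by
    intro t h1 h2
    rw [hylow, show m - 1 - t = (m - 2 - t) + 1 by omega]
    have := hSle (m - 2 - t)
    linarith
  have hYsum : ∑ t ∈ Finset.Icc 1 (m - 2), y t = S (m - 2) := by
    rw [← Finset.Ico_add_one_right_eq_Icc, Finset.sum_Ico_eq_sum_range,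
      show m - 2 + 1 - 1 = m - 2 by omega]
    have h1 : ∀ i ∈ Finset.range (m - 2),
        y (1 + i) = (fun t => S (t + 1) - S t) (m - 2 - 1 - i) := by
      intro i hi; rw [Finset.mem_range] at hi
      rw [hylow]; simp only
      congr 2 <;> omega
    rw [Finset.sum_congr rfl h1,
      Finset.sum_range_reflect (fun t => S (t + 1) - S t) (m - 2),
      Finset.sum_range_sub S (m - 2), hS0, sub_zero]
  have hW3 : ∑ i ∈ Finset.Icc 1 (n - 3), w i
      = (∑ i ∈ Finset.range (m - 2), (ι (i + 3) + ι (n - 1 - i))) + ι (m + 1) := by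
    have e0 : Finset.Icc 1 (n - 3) = Finset.Ioc 0 (n - 3) := by
      ext x; simp [Finset.mem_Icc, Finset.mem_Ioc]; omega
    rw [e0, ← Finset.sum_Ioc_consecutive w (show 0 ≤ m - 1 by omega) (show m - 1 ≤ n - 3 by omega)]
    have elow : ∑ i ∈ Finset.Ioc 0 (m - 1), w i
        = (∑ i ∈ Finset.range (m - 2), (ι (i + 3) + S (m - 2 - i))) + ι (m + 1) := by
      have e1 : Finset.Ioc 0 (m - 1) = Finset.Ico 1 m := by
        ext x; simp [Finset.mem_Ioc, Finset.mem_Ico]; omega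
      rw [e1, Finset.sum_Ico_eq_sum_range, show m - 1 = (m - 2) + 1 by omega,
        Finset.sum_range_succ]
      congr 1
      · apply Finset.sum_congr rfl
        intro i hi; rw [Finset.mem_range] at hi
        rw [hwlow (1 + i) (by omega)]
        congr 2 <;> omega
      · rw [hwlow (1 + (m - 2)) (by omega), show 1 + (m - 2) + 2 = m + 1 by omega,
          show m - 1 - (1 + (m - 2)) = 0 by omega, hS0, add_zero]
    have emid : ∑ i ∈ Finset.Ioc (m - 1) (n - 3), w i
        = ∑ i ∈ Finset.range (m - 2), (ι (m + 2 + i) - S (i + 1)) := by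
      have e1 : Finset.Ioc (m - 1) (n - 3) = Finset.Ico m (n - 2) := by
        ext x; simp [Finset.mem_Ioc, Finset.mem_Ico]; omega
      rw [e1, Finset.sum_Ico_eq_sum_range, show n - 2 - m = m - 2 by omega]
      apply Finset.sum_congr rfl
      intro i hi; rw [Finset.mem_range] at hi
      rw [hwmid (m + i) (by omega) (by omega)]
      congr 2 <;> omega
    have erefl1 : ∑ i ∈ Finset.range (m - 2), ι (m + 2 + i)
        = ∑ i ∈ Finset.range (m - 2), ι (n - 1 - i) := by
      rw [← Finset.sum_range_reflect (fun i => ι (n - 1 - i)) (m - 2)]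
      apply Finset.sum_congr rfl
      intro i hi; rw [Finset.mem_range] at hi
      congr 1; omega
    have erefl2 : ∑ i ∈ Finset.range (m - 2), S (m - 2 - i)
        = ∑ i ∈ Finset.range (m - 2), S (i + 1) := by
      rw [← Finset.sum_range_reflect (fun i => S (i + 1)) (m - 2)]
      apply Finset.sum_congr rfl
      intro i hi; rw [Finset.mem_range] at hi
      congr 1; omega
    rw [elow, emid, Finset.sum_add_distrib, Finset.sum_sub_distrib, erefl2, erefl1,
      Finset.sum_add_distrib]
    ring
  -- z₁ positivity
  have hz1pos : 0 < a + ∑ i ∈ Finset.Icc 1 (n - 3), w i := by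
    rw [hW3]
    have hIm1 : 0 < ι (m + 1) := hpos (m + 1) le_rfl (by omega)
    have hcast : ∀ i, i < m - 2 → ((n - 1 - i : ℕ) : ℝ) = (n : ℝ) - 1 - i := by
      intro i hi
      rw [show n - 1 - i = n - (1 + i) by omega, Nat.cast_sub (by omega)]
      push_cast; ring
    rcases le_or_gt a 0 with ha | ha
    · have hterm : ∀ i ∈ Finset.range (m - 2), 2 * ι (m + 1) - a ≤ ι (i + 3) + ι (n - 1 - i) := by
        intro i hi; rw [Finset.mem_range] at hi
        have hid : ι (i + 3) + ι (n - 1 - i) = 2 * ι (m + 1) + (-a) * ((m : ℝ) - 2 - i) ^ 2 := by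
          rw [hι (i + 3), hι (n - 1 - i), hι (m + 1), hcast i hi, hnR]; push_cast; ring
        have h1 : (1 : ℝ) ≤ ((m : ℝ) - 2 - i) := by
          have : (i : ℝ) ≤ (m : ℝ) - 3 := by
            have h3 : ((i : ℕ) : ℝ) ≤ ((m - 3 : ℕ) : ℝ) := by exact_mod_cast (by omega : i ≤ m - 3)
            rw [Nat.cast_sub (by omega)] at h3; push_cast at h3; linarith
          linarith
        have hx : (0:ℝ) ≤ ((m:ℝ) - 2 - (i:ℝ)) ^ 2 - 1 := by nlinarith [h1]
        have := mul_nonneg (neg_nonneg.2 ha) hx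
        nlinarith [hid, this]
      have hsum := Finset.sum_le_sum hterm
      rw [Finset.sum_const, Finset.card_range, nsmul_eq_mul] at hsum
      have hm2 : (1 : ℝ) ≤ ((m - 2 : ℕ) : ℝ) := by exact_mod_cast (by omega : 1 ≤ m - 2)
      nlinarith [mul_nonneg (neg_nonneg.mpr ha) (by linarith : (0:ℝ) ≤ ((m - 2 : ℕ) : ℝ) - 1)]
    · have hterm : ∀ i ∈ Finset.range (m - 2), 0 < ι (i + 3) + ι (n - 1 - i) := by
        intro i hi; rw [Finset.mem_range] at hi
        have hid : ι (i + 3) + ι (n - 1 - i)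
            = ((m : ℝ) + 1) * ι n + (((i : ℝ) + 1) * ((n : ℝ) - 3 - i)) * a := by
          rw [hι (i + 3), hι (n - 1 - i), hι n, hcast i hi, hnR]; push_cast; ring
        have hIn : 0 < ι n := hpos n (by omega) le_rfl
        have h1 : (0 : ℝ) < (n : ℝ) - 3 - i := by
          have : (i : ℝ) ≤ (m : ℝ) - 3 := by
            have h3 : ((i : ℕ) : ℝ) ≤ ((m - 3 : ℕ) : ℝ) := by exact_mod_cast (by omega : i ≤ m - 3)
            rw [Nat.cast_sub (by omega)] at h3; push_cast at h3; linarith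
          have hm1 : (3 : ℝ) ≤ (m : ℝ) := by exact_mod_cast hm
          rw [hnR]; linarith
        have h2 : (0:ℝ) < (i : ℝ) + 1 := by positivity
        have h3m : (3:ℝ) ≤ (m:ℝ) := by exact_mod_cast hm
        have hmp : (0:ℝ) < (m : ℝ) + 1 := by linarith
        nlinarith [mul_pos (mul_pos h2 h1) ha, mul_pos hmp hIn]
      have hsum : 0 ≤ ∑ i ∈ Finset.range (m - 2), (ι (i + 3) + ι (n - 1 - i)) :=
        Finset.sum_nonneg fun i hi => (hterm i hi).le
      linarith
  -- z₂
  have hz2eq : d + ι 3 + ι n = ((m : ℝ) + 1) * ι n := by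
    rw [hι 3, hι n, hnR]; push_cast; ring
  have hz2pos : 0 < ((m : ℝ) + 1) * ι n := by
    have hIn : 0 < ι n := hpos n (by omega) le_rfl
    have h3 : (3:ℝ) ≤ (m:ℝ) := by exact_mod_cast hm
    exact mul_pos (by linarith) hIn
  obtain ⟨z₁, hz1def⟩ : ∃ z : ℝ, z = a + ∑ i ∈ Finset.Icc 1 (n - 3), w i := ⟨_, rfl⟩
  obtain ⟨z₂, hz2def⟩ : ∃ z : ℝ, z = ((m : ℝ) + 1) * ι n := ⟨_, rfl⟩
  have heq : a • V₁ + d • V₂ = (∑ i ∈ Finset.Icc 1 (n - 2), w i • F i)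
      + (∑ j ∈ Finset.Icc 1 (m - 2), y j • F (n - 2 + j)) + z₁ • E 1 + z₂ • E 2 := by
    rw [hV₁, hV₂]
    ext j
    have hJ : (j : ℕ) < n := j.isLt
    have happly : ∀ (s : Finset ℕ) (f : ℕ → EuclideanSpace ℝ (Fin n)),
        (∑ i ∈ s, f i) j = ∑ i ∈ s, f i j := fun s f => by rw [WithLp.ofLp_sum, Finset.sum_apply]
    simp only [PiLp.add_apply, PiLp.smul_apply, smul_eq_mul, happly]
    -- V₁ sum
    have hV1sum : ∑ i ∈ Finset.Icc 3 (n - 1), ((i : ℝ) - 2) * E i j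
        = if (j : ℕ) + 1 ∈ Finset.Icc 3 (n - 1) then ((j : ℕ) : ℝ) - 1 else 0 := by
      have h1 : ∀ i ∈ Finset.Icc 3 (n - 1), ((i : ℝ) - 2) * E i j
          = if i = (j : ℕ) + 1 then ((i : ℝ) - 2) else 0 := by
        intro i hi; rw [Finset.mem_Icc] at hi
        rw [hEv i (by omega) (by omega) j, mul_ite, mul_one, mul_zero]
        exact if_congr eq_comm rfl rfl
      rw [Finset.sum_congr rfl h1,
        Finset.sum_ite_eq' (Finset.Icc 3 (n - 1)) ((j : ℕ) + 1) (fun i => ((i : ℝ) - 2))]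
      split_ifs with h
      · push_cast; ring
      · rfl
    -- V₂ sum
    have hV2sum : ∑ i ∈ Finset.Icc 2 (n - 1), E i j
        = if (j : ℕ) + 1 ∈ Finset.Icc 2 (n - 1) then (1 : ℝ) else 0 := by
      have h1 : ∀ i ∈ Finset.Icc 2 (n - 1), E i j = if i = (j : ℕ) + 1 then (1 : ℝ) else 0 := by
        intro i hi; rw [Finset.mem_Icc] at hi
        rw [hEv i (by omega) (by omega) j]
        exact if_congr eq_comm rfl rfl
      rw [Finset.sum_congr rfl h1,
        Finset.sum_ite_eq' (Finset.Icc 2 (n - 1)) ((j : ℕ) + 1) (fun _ => (1 : ℝ))]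
    -- split off n-2
    have hsplit : Finset.Icc 1 (n - 2) = insert (n - 2) (Finset.Icc 1 (n - 3)) := by
      ext x; simp only [Finset.mem_Icc, Finset.mem_insert]; omega
    -- F(n-2) coordinate
    have hFtop : w (n - 2) * F (n - 2) j
        = w (n - 2) * ((if (j : ℕ) + 1 = 2 then (-1 : ℝ) else 0)
          + (if (j : ℕ) + 1 = n - 1 then (-1 : ℝ) else 0)
          + (if (j : ℕ) + 1 = n then (1 : ℝ) else 0)) := by
      rw [hF2]
      simp only [PiLp.add_apply, PiLp.sub_apply, PiLp.neg_apply]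
      rw [hEv 2 (by omega) (by omega) j, hEv (n - 1) (by omega) (by omega) j,
        hEv n (by omega) le_rfl j]
      split_ifs <;> ring
    -- main F sum
    have hsum1 : ∑ i ∈ Finset.Icc 1 (n - 3), w i * F i j
        = (if (j : ℕ) = 0 then -(∑ i ∈ Finset.Icc 1 (n - 3), w i) else 0)
          + (if (j : ℕ) ∈ Finset.Icc 1 (n - 3) then -(w (j : ℕ)) else 0)
          + (if (j : ℕ) - 1 ∈ Finset.Icc 1 (n - 3) then w ((j : ℕ) - 1) else 0) := by
      have h1 : ∀ i ∈ Finset.Icc 1 (n - 3), w i * F i j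
          = (if (j : ℕ) = 0 then -(w i) else 0) + (if i = (j : ℕ) then -(w i) else 0)
            + (if i = (j : ℕ) - 1 then w i else 0) := by
        intro i hi; rw [Finset.mem_Icc] at hi
        rw [hF1 i hi.1 hi.2]
        simp only [PiLp.add_apply, PiLp.sub_apply, PiLp.neg_apply]
        rw [hEv 1 (by omega) (by omega) j, hEv (i + 1) (by omega) (by omega) j,
          hEv (i + 2) (by omega) (by omega) j]
        split_ifs <;> first | ring1 | (exfalso; omega)
      rw [Finset.sum_congr rfl h1, Finset.sum_add_distrib, Finset.sum_add_distrib,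
        Finset.sum_ite_eq' (Finset.Icc 1 (n - 3)) ((j : ℕ)) (fun i => -(w i)),
        Finset.sum_ite_eq' (Finset.Icc 1 (n - 3)) ((j : ℕ) - 1) w]
      congr 2
      split_ifs with h
      · rw [← Finset.sum_neg_distrib]
      · exact Finset.sum_const_zero
    -- second F sum
    have hsum2 : ∑ t ∈ Finset.Icc 1 (m - 2), y t * F (n - 2 + t) j
        = (if (j : ℕ) - 1 ∈ Finset.Icc 1 (m - 2) then -(y ((j : ℕ) - 1)) else 0)
          + (if n - 2 - (j : ℕ) ∈ Finset.Icc 1 (m - 2) then -(y (n - 2 - (j : ℕ))) else 0)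
          + (if (j : ℕ) + 1 = n then ∑ t ∈ Finset.Icc 1 (m - 2), y t else 0) := by
      have h2 : ∀ t ∈ Finset.Icc 1 (m - 2), y t * F (n - 2 + t) j
          = (if t = (j : ℕ) - 1 then -(y t) else 0) + (if t = n - 2 - (j : ℕ) then -(y t) else 0)
            + (if (j : ℕ) + 1 = n then y t else 0) := by
        intro t ht; rw [Finset.mem_Icc] at ht
        rw [hF3 t ht.1 ht.2]
        simp only [PiLp.add_apply, PiLp.sub_apply, PiLp.neg_apply]
        rw [hEv (t + 2) (by omega) (by omega) j, hEv (n - 1 - t) (by omega) (by omega) j,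
          hEv n (by omega) le_rfl j]
        split_ifs <;> first | ring1 | (exfalso; omega)
      rw [Finset.sum_congr rfl h2, Finset.sum_add_distrib, Finset.sum_add_distrib,
        Finset.sum_ite_eq' (Finset.Icc 1 (m - 2)) ((j : ℕ) - 1) (fun t => -(y t)),
        Finset.sum_ite_eq' (Finset.Icc 1 (m - 2)) (n - 2 - (j : ℕ)) (fun t => -(y t))]
      congr 1
      split_ifs with h
      · rfl
      · exact Finset.sum_const_zero
    rw [hsplit, Finset.sum_insert (by simp only [Finset.mem_Icc]; omega)]
    rw [hFtop, hsum1, hsum2,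
      hV1sum, hV2sum, hEv 1 (by omega) (by omega) j, hEv 2 (by omega) (by omega) j,
      hEv n (by omega) le_rfl j]
    simp only [Finset.mem_Icc]
    -- case analysis on the coordinate
    by_cases h0 : (j : ℕ) = 0
    · simp only [eq_false (show ¬((j:ℕ) + 1 = 2) by omega), eq_false (show ¬((j:ℕ) + 1 = n - 1) by omega),
        eq_false (show ¬((j:ℕ) + 1 = n) by omega), eq_true (show (j:ℕ) = 0 by omega),
        eq_false (show ¬(3 ≤ (j:ℕ) + 1 ∧ (j:ℕ) + 1 ≤ n - 1) by omega),
        eq_false (show ¬(2 ≤ (j:ℕ) + 1 ∧ (j:ℕ) + 1 ≤ n - 1) by omega),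
        eq_true (show (j:ℕ) + 1 = 1 by omega),
        eq_false (show ¬(1 ≤ (j:ℕ) ∧ (j:ℕ) ≤ n - 3) by omega),
        eq_false (show ¬(1 ≤ (j:ℕ) - 1 ∧ (j:ℕ) - 1 ≤ n - 3) by omega),
        eq_false (show ¬(1 ≤ (j:ℕ) - 1 ∧ (j:ℕ) - 1 ≤ m - 2) by omega),
        eq_false (show ¬(1 ≤ n - 2 - (j:ℕ) ∧ n - 2 - (j:ℕ) ≤ m - 2) by omega),
        if_true, if_false]
      linear_combination -hz1def
    · by_cases h1 : (j : ℕ) = 1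
      · simp only [eq_true (show (j:ℕ) + 1 = 2 by omega), eq_false (show ¬((j:ℕ) + 1 = n - 1) by omega),
          eq_false (show ¬((j:ℕ) + 1 = n) by omega), eq_false (show ¬((j:ℕ) = 0) by omega),
          eq_false (show ¬(3 ≤ (j:ℕ) + 1 ∧ (j:ℕ) + 1 ≤ n - 1) by omega),
          eq_true (show (2 ≤ (j:ℕ) + 1 ∧ (j:ℕ) + 1 ≤ n - 1) by omega),
          eq_false (show ¬((j:ℕ) + 1 = 1) by omega),
          eq_true (show (1 ≤ (j:ℕ) ∧ (j:ℕ) ≤ n - 3) by omega),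
          eq_false (show ¬(1 ≤ (j:ℕ) - 1 ∧ (j:ℕ) - 1 ≤ n - 3) by omega),
          eq_false (show ¬(1 ≤ (j:ℕ) - 1 ∧ (j:ℕ) - 1 ≤ m - 2) by omega),
          eq_false (show ¬(1 ≤ n - 2 - (j:ℕ) ∧ n - 2 - (j:ℕ) ≤ m - 2) by omega),
          if_true, if_false]
        rw [h1, hwlow 1 (by omega), hwtop, show m - 1 - 1 = m - 2 by omega, hz2def]
        linear_combination hz2eq
      · by_cases h2 : (j : ℕ) ≤ m - 1
        · -- 2 ≤ j ≤ m-1, K = j+1 ∈ [3, m]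
          simp only [eq_false (show ¬((j:ℕ) + 1 = 2) by omega),
            eq_false (show ¬((j:ℕ) + 1 = n - 1) by omega),
            eq_false (show ¬((j:ℕ) + 1 = n) by omega), eq_false (show ¬((j:ℕ) = 0) by omega),
            eq_true (show (3 ≤ (j:ℕ) + 1 ∧ (j:ℕ) + 1 ≤ n - 1) by omega),
            eq_true (show (2 ≤ (j:ℕ) + 1 ∧ (j:ℕ) + 1 ≤ n - 1) by omega),
            eq_false (show ¬((j:ℕ) + 1 = 1) by omega),
            eq_true (show (1 ≤ (j:ℕ) ∧ (j:ℕ) ≤ n - 3) by omega),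
            eq_true (show (1 ≤ (j:ℕ) - 1 ∧ (j:ℕ) - 1 ≤ n - 3) by omega),
            eq_true (show (1 ≤ (j:ℕ) - 1 ∧ (j:ℕ) - 1 ≤ m - 2) by omega),
            eq_false (show ¬(1 ≤ n - 2 - (j:ℕ) ∧ n - 2 - (j:ℕ) ≤ m - 2) by omega),
            if_true, if_false]
          rw [hwlow ((j:ℕ)) (by omega), hwlow ((j:ℕ) - 1) (by omega), hylow ((j:ℕ) - 1),
            show (j:ℕ) - 1 + 2 = (j:ℕ) + 1 by omega,
            show m - 1 - ((j:ℕ) - 1) = m - (j:ℕ) by omega,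
            show m - 2 - ((j:ℕ) - 1) = m - 1 - (j:ℕ) by omega]
          have hd := hdiff ((j:ℕ) + 1)
          rw [show (j:ℕ) + 1 + 1 = (j:ℕ) + 2 by omega] at hd
          push_cast at hd
          linear_combination -hd
        · by_cases h3 : (j : ℕ) ≤ n - 3
          · -- m ≤ j ≤ n-3, K ∈ [m+1, n-2]
            simp only [eq_false (show ¬((j:ℕ) + 1 = 2) by omega),
              eq_false (show ¬((j:ℕ) + 1 = n - 1) by omega),
              eq_false (show ¬((j:ℕ) + 1 = n) by omega), eq_false (show ¬((j:ℕ) = 0) by omega),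
              eq_true (show (3 ≤ (j:ℕ) + 1 ∧ (j:ℕ) + 1 ≤ n - 1) by omega),
              eq_true (show (2 ≤ (j:ℕ) + 1 ∧ (j:ℕ) + 1 ≤ n - 1) by omega),
              eq_false (show ¬((j:ℕ) + 1 = 1) by omega),
              eq_true (show (1 ≤ (j:ℕ) ∧ (j:ℕ) ≤ n - 3) by omega),
              eq_true (show (1 ≤ (j:ℕ) - 1 ∧ (j:ℕ) - 1 ≤ n - 3) by omega),
              eq_false (show ¬(1 ≤ (j:ℕ) - 1 ∧ (j:ℕ) - 1 ≤ m - 2) by omega),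
              eq_true (show (1 ≤ n - 2 - (j:ℕ) ∧ n - 2 - (j:ℕ) ≤ m - 2) by omega),
              if_true, if_false]
            have hd := hdiff ((j:ℕ) + 1)
            rw [show (j:ℕ) + 1 + 1 = (j:ℕ) + 2 by omega] at hd
            push_cast at hd
            rw [hwmid ((j:ℕ)) (by omega) (by omega), hylow (n - 2 - (j:ℕ)),
              show m - 1 - (n - 2 - (j:ℕ)) = (j:ℕ) - m + 1 by omega,
              show m - 2 - (n - 2 - (j:ℕ)) = (j:ℕ) - m by omega]
            by_cases hjm : (j : ℕ) = m
            · rw [hwlow ((j:ℕ) - 1) (by omega),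
                show (j:ℕ) - 1 + 2 = (j:ℕ) + 1 by omega,
                show m - 1 - ((j:ℕ) - 1) = 0 by omega,
                show (j:ℕ) - m = 0 by omega, hS0]
              linear_combination -hd
            · rw [hwmid ((j:ℕ) - 1) (by omega) (by omega),
                show (j:ℕ) - 1 + 2 = (j:ℕ) + 1 by omega,
                show (j:ℕ) - 1 - m + 1 = (j:ℕ) - m by omega]
              linear_combination -hd
          · by_cases h4 : (j : ℕ) = n - 2
            · -- K = n-1
              simp only [eq_false (show ¬((j:ℕ) + 1 = 2) by omega),
                eq_true (show ((j:ℕ) + 1 = n - 1) by omega),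
                eq_false (show ¬((j:ℕ) + 1 = n) by omega), eq_false (show ¬((j:ℕ) = 0) by omega),
                eq_true (show (3 ≤ (j:ℕ) + 1 ∧ (j:ℕ) + 1 ≤ n - 1) by omega),
                eq_true (show (2 ≤ (j:ℕ) + 1 ∧ (j:ℕ) + 1 ≤ n - 1) by omega),
                eq_false (show ¬((j:ℕ) + 1 = 1) by omega),
                eq_false (show ¬(1 ≤ (j:ℕ) ∧ (j:ℕ) ≤ n - 3) by omega),
                eq_true (show (1 ≤ (j:ℕ) - 1 ∧ (j:ℕ) - 1 ≤ n - 3) by omega),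
                eq_false (show ¬(1 ≤ (j:ℕ) - 1 ∧ (j:ℕ) - 1 ≤ m - 2) by omega),
                eq_false (show ¬(1 ≤ n - 2 - (j:ℕ) ∧ n - 2 - (j:ℕ) ≤ m - 2) by omega),
                if_true, if_false]
              rw [h4, hwtop, hwmid (n - 2 - 1) (by omega) (by omega),
                show n - 2 - 1 + 2 = n - 1 by omega,
                show n - 2 - 1 - m + 1 = m - 2 by omega]
              have hd := hdiff (n - 1)
              rw [show n - 1 + 1 = n by omega] at hd
              have hc : ((n - 1 : ℕ) : ℝ) = (n : ℝ) - 1 := by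
                rw [Nat.cast_sub (by omega)]; norm_num
              rw [hc] at hd
              have hc2 : ((n - 2 : ℕ) : ℝ) = (n : ℝ) - 2 := by
                rw [Nat.cast_sub (by omega)]; norm_num
              rw [hc2]
              linear_combination -hd
            · -- j = n-1, K = n
              have h5 : (j : ℕ) = n - 1 := by omega
              simp only [eq_false (show ¬((j:ℕ) + 1 = 2) by omega),
                eq_false (show ¬((j:ℕ) + 1 = n - 1) by omega),
                eq_true (show ((j:ℕ) + 1 = n) by omega), eq_false (show ¬((j:ℕ) = 0) by omega),
                eq_false (show ¬(3 ≤ (j:ℕ) + 1 ∧ (j:ℕ) + 1 ≤ n - 1) by omega),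
                eq_false (show ¬(2 ≤ (j:ℕ) + 1 ∧ (j:ℕ) + 1 ≤ n - 1) by omega),
                eq_false (show ¬((j:ℕ) + 1 = 1) by omega),
                eq_false (show ¬(1 ≤ (j:ℕ) ∧ (j:ℕ) ≤ n - 3) by omega),
                eq_false (show ¬(1 ≤ (j:ℕ) - 1 ∧ (j:ℕ) - 1 ≤ n - 3) by omega),
                eq_false (show ¬(1 ≤ (j:ℕ) - 1 ∧ (j:ℕ) - 1 ≤ m - 2) by omega),
                eq_false (show ¬(1 ≤ n - 2 - (j:ℕ) ∧ n - 2 - (j:ℕ) ≤ m - 2) by omega),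
                if_true, if_false]
              rw [hwtop, hYsum]
              linear_combination -hiota_n
  refine ⟨⟨w, y, z₁, z₂, hwpos, hypos, ?_, ?_, hz2def, heq⟩, ?_⟩
  · rw [hz1def]; exact hz1pos
  · rw [hz2def]; exact hz2pos
  intro w y z₁ z₂ _ _ _ _ heq'
  obtain ⟨c, hcdef⟩ : ∃ c : ℕ → ℝ, c = fun k => if k = 1 then 0 else if k = n then 2 else 1 :=
    ⟨_, rfl⟩
  obtain ⟨L, hLdef⟩ : ∃ L : EuclideanSpace ℝ (Fin n) → ℝ,
      L = fun x => ∑ j : Fin n, c ((j : ℕ) + 1) * x j := ⟨_, rfl⟩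
  have hc1 : c 1 = 0 := by rw [hcdef]; norm_num
  have hcn : c n = 2 := by rw [hcdef]; simp [show n ≠ 1 by omega]
  have hcmid : ∀ k, 2 ≤ k → k ≤ n - 1 → c k = 1 := by
    intro k h1 h2; rw [hcdef]; simp only; rw [if_neg (by omega), if_neg (by omega)]
  have hLadd : ∀ x y : EuclideanSpace ℝ (Fin n), L (x + y) = L x + L y := by
    intro x y; rw [hLdef]; simp only [PiLp.add_apply, mul_add, Finset.sum_add_distrib]
  have hLsmul : ∀ (r : ℝ) (x : EuclideanSpace ℝ (Fin n)), L (r • x) = r * L x := by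
    intro r x; rw [hLdef]; simp only [PiLp.smul_apply, smul_eq_mul, Finset.mul_sum]
    exact Finset.sum_congr rfl fun _ _ => by ring
  have hLneg : ∀ x : EuclideanSpace ℝ (Fin n), L (-x) = -(L x) := by
    intro x; rw [hLdef]; simp only [PiLp.neg_apply, mul_neg, Finset.sum_neg_distrib]
  have hLsub : ∀ x y : EuclideanSpace ℝ (Fin n), L (x - y) = L x - L y := by
    intro x y; rw [hLdef]; simp only [PiLp.sub_apply, mul_sub, Finset.sum_sub_distrib]
  have hLsum : ∀ (s : Finset ℕ) (f : ℕ → EuclideanSpace ℝ (Fin n)),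
      L (∑ i ∈ s, f i) = ∑ i ∈ s, L (f i) := by
    intro s f; rw [hLdef]; simp only
    have h1 : ∀ j : Fin n, c ((j : ℕ) + 1) * (∑ i ∈ s, f i) j
        = ∑ i ∈ s, c ((j : ℕ) + 1) * f i j := by
      intro j; rw [WithLp.ofLp_sum, Finset.sum_apply, Finset.mul_sum]
    rw [Finset.sum_congr rfl fun j _ => h1 j]
    exact Finset.sum_comm
  have hLE : ∀ k, 1 ≤ k → k ≤ n → L (E k) = c k := by
    intro k h1 h2
    rw [hLdef]; simp only
    have h3 : ∀ j : Fin n, c ((j : ℕ) + 1) * E k j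
        = if j = (⟨k - 1, by omega⟩ : Fin n) then c ((j : ℕ) + 1) else 0 := by
      intro j
      rw [hEv k h1 h2 j, mul_ite, mul_one, mul_zero]
      exact if_congr (by simp [Fin.ext_iff]; omega) rfl rfl
    rw [Finset.sum_congr rfl fun j _ => h3 j,
      Finset.sum_ite_eq' Finset.univ (⟨k - 1, by omega⟩ : Fin n) (fun j => c ((j : ℕ) + 1)),
      if_pos (Finset.mem_univ _)]
    congr 1
    simp only
    omega
  -- L V₁
  have hgauss : ∀ M : ℕ, ∑ i ∈ Finset.range M, ((i : ℝ) + 1) = (M : ℝ) * ((M : ℝ) + 1) / 2 := by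
    intro M
    induction M with
    | zero => simp
    | succ M ih => rw [Finset.sum_range_succ, ih]; push_cast; ring
  have hLV₁ : L V₁ = ((n : ℝ) - 3) * ((n : ℝ) - 2) / 2 + ((n : ℝ) - 3) * 2 := by
    rw [hV₁, hLadd, hLadd, hLsmul, hLsum, hLE 1 (by omega) (by omega), hc1,
      hLE n (by omega) le_rfl, hcn]
    have h1 : ∀ i ∈ Finset.Icc 3 (n - 1), L (((i : ℝ) - 2) • E i) = ((i : ℝ) - 2) := by
      intro i hi; rw [Finset.mem_Icc] at hi
      rw [hLsmul, hLE i (by omega) (by omega), hcmid i (by omega) (by omega), mul_one]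
    rw [Finset.sum_congr rfl h1, ← Finset.Ico_add_one_right_eq_Icc, Finset.sum_Ico_eq_sum_range,
      show n - 1 + 1 - 3 = n - 3 by omega]
    have h2 : ∀ i ∈ Finset.range (n - 3), (((3 + i : ℕ) : ℝ) - 2) = ((i : ℝ) + 1) := by
      intro i _; push_cast; ring
    rw [Finset.sum_congr rfl h2, hgauss (n - 3), Nat.cast_sub (by omega)]
    push_cast; ring
  have hLV₂ : L V₂ = ((n : ℝ) - 2) + 4 := by
    rw [hV₂, hLadd, hLsmul, hLsum, hLE n (by omega) le_rfl, hcn]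
    have h1 : ∀ i ∈ Finset.Icc 2 (n - 1), L (E i) = 1 := by
      intro i hi; rw [Finset.mem_Icc] at hi
      rw [hLE i (by omega) (by omega), hcmid i (by omega) (by omega)]
    rw [Finset.sum_congr rfl h1, Finset.sum_const, Nat.card_Icc,
      show n - 1 + 1 - 2 = n - 2 by omega, nsmul_eq_mul, mul_one, Nat.cast_sub (by omega)]
    push_cast; ring
  have hLF : ∀ i ∈ Finset.Icc 1 (n - 2), L (F i) = 0 := by
    intro i hi; rw [Finset.mem_Icc] at hi
    by_cases h2 : i = n - 2
    · rw [h2, hF2, hLadd, hLsub, hLneg, hLE 2 (by omega) (by omega),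
        hLE (n - 1) (by omega) (by omega), hLE n (by omega) le_rfl,
        hcmid 2 (by omega) (by omega), hcmid (n - 1) (by omega) (by omega), hcn]
      ring
    · rw [hF1 i hi.1 (by omega), hLadd, hLsub, hLneg, hLE 1 (by omega) (by omega),
        hLE (i + 1) (by omega) (by omega), hLE (i + 2) (by omega) (by omega), hc1,
        hcmid (i + 1) (by omega) (by omega), hcmid (i + 2) (by omega) (by omega)]
      ring
  have hLF2 : ∀ t ∈ Finset.Icc 1 (m - 2), L (F (n - 2 + t)) = 0 := by
    intro t ht; rw [Finset.mem_Icc] at ht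
    rw [hF3 t ht.1 ht.2, hLadd, hLsub, hLneg, hLE (t + 2) (by omega) (by omega),
      hLE (n - 1 - t) (by omega) (by omega), hLE n (by omega) le_rfl,
      hcmid (t + 2) (by omega) (by omega), hcmid (n - 1 - t) (by omega) (by omega), hcn]
    ring
  have hs1 : ∑ i ∈ Finset.Icc 1 (n - 2), L (w i • F i) = 0 :=
    Finset.sum_eq_zero fun i hi => by rw [hLsmul, hLF i hi, mul_zero]
  have hs2 : ∑ t ∈ Finset.Icc 1 (m - 2), L (y t • F (n - 2 + t)) = 0 :=
    Finset.sum_eq_zero fun t ht => by rw [hLsmul, hLF2 t ht, mul_zero]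
  have h := congrArg L heq'
  rw [hLadd, hLadd, hLadd, hLadd, hLsmul, hLsmul, hLsmul, hLsmul, hLsum, hLsum,
    hLE 1 (by omega) (by omega), hLE 2 (by omega) (by omega), hc1,
    hcmid 2 (by omega) (by omega), hs1, hs2, hLV₁, hLV₂] at h
  rw [hι n, hnR]
  rw [hnR] at h
  linear_combination -h
end
end
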